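/- arXiv:1608.08937 — 17 statements merged into one kernel-verified Lean document; each statement's English description precedes it below -/
import Mathlib

section
/- For all real numbers x < y and every function f : ℝ → ℝ that is convex and continuous on [x, y], one has f((x+y)/2) ≤ (1/(y-x)²) · ∫_x^y ∫_x^y f((s+t)/2) ds dt. -/
theorem hermite_hadamard_double_left (x y : ℝ) (hxy : x < y) (f : ℝ → ℝ)
    (hconv : ConvexOn ℝ (Set.Icc x y) f)
    (hcont : ContinuousOn f (Set.Icc x y)) :
    f ((x + y) / 2) ≤ (1 / (y - x) ^ 2) * ∫ s in x..y, ∫ t in x..y, f ((s + t) / 2) := by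
  have hle : x ≤ y := hxy.le
  set c : ℝ := x + y with hc
  -- continuous extension of f
  set f₀ : ℝ → ℝ := Set.IccExtend hle (Set.restrict (Set.Icc x y) f) with hf₀
  have hf₀c : Continuous f₀ := (hcont.restrict).Icc_extend'
  have hf₀eq : ∀ u ∈ Set.Icc x y, f₀ u = f u := by
    intro u hu
    exact Set.IccExtend_of_mem hle _ hu
  have hmid : ∀ s ∈ Set.Icc x y, ∀ t ∈ Set.Icc x y, (s + t) / 2 ∈ Set.Icc x y := by
    rintro s ⟨hs1, hs2⟩ t ⟨ht1, ht2⟩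
    constructor <;> linarith
  have hmemc : ∀ s ∈ Set.Icc x y, c - s ∈ Set.Icc x y := by
    rintro s ⟨hs1, hs2⟩; constructor <;> linarith
  -- pointwise convexity inequality
  have hpt : ∀ s ∈ Set.Icc x y, ∀ t ∈ Set.Icc x y,
      2 * f (c / 2) ≤ f₀ ((s + t) / 2) + f₀ ((c - s + (c - t)) / 2) := by
    intro s hs t ht
    have ha := hmid s hs t ht
    have hb := hmid _ (hmemc s hs) _ (hmemc t ht)
    have := hconv.2 ha hb (by norm_num : (0:ℝ) ≤ 1/2) (by norm_num : (0:ℝ) ≤ 1/2)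
      (by norm_num)
    rw [hf₀eq _ ha, hf₀eq _ hb]
    have harg : (1/2 : ℝ) • ((s + t) / 2) + (1/2 : ℝ) • ((c - s + (c - t)) / 2) = c / 2 := by
      simp [smul_eq_mul]; ring
    rw [harg] at this
    simp only [smul_eq_mul] at this
    linarith
  -- the inner integral as a function of s
  set g : ℝ → ℝ := fun s => ∫ t in x..y, f₀ ((s + t) / 2) with hg
  have hgint : Continuous g := by
    apply intervalIntegral.continuous_parametric_intervalIntegral_of_continuous'
    exact hf₀c.comp ((continuous_fst.add continuous_snd).div_const 2)
  -- reflection identity for inner integral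
  have hrefl : ∀ s : ℝ, (∫ t in x..y, f₀ ((c - s + (c - t)) / 2)) = g (c - s) := by
    intro s
    have := intervalIntegral.integral_comp_sub_left (a := x) (b := y)
      (fun t => f₀ ((c - s + t) / 2)) c
    simp only [hc] at this ⊢
    rw [this]
    have h1 : x + y - y = x := by ring
    have h2 : x + y - x = y := by ring
    rw [h1, h2]
  -- step 1: inner bound
  have hinner : ∀ s ∈ Set.Icc x y, 2 * (y - x) * f (c / 2) ≤ g s + g (c - s) := by
    intro s hs
    have hInt1 : IntervalIntegrable (fun t => f₀ ((s + t) / 2)) MeasureTheory.volume x y :=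
      (hf₀c.comp ((continuous_const.add continuous_id).div_const 2)).intervalIntegrable x y
    have hInt2 : IntervalIntegrable (fun t => f₀ ((c - s + (c - t)) / 2))
        MeasureTheory.volume x y :=
      (hf₀c.comp (((continuous_const.add (continuous_const.sub continuous_id))).div_const 2)).intervalIntegrable x y
    have hmono := intervalIntegral.integral_mono_on (μ := MeasureTheory.volume) hle
      (intervalIntegrable_const (c := 2 * f (c / 2)))
      (hInt1.add hInt2)
      (fun t ht => hpt s hs t ht)
    rw [intervalIntegral.integral_const, intervalIntegral.integral_add hInt1 hInt2,
      hrefl s] at hmono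
    have h2 : (y - x) * (2 * f (c / 2)) ≤ g s + g (c - s) := by
      simpa [smul_eq_mul] using hmono
    linarith
  -- step 2: outer bound
  have hreflg : (∫ s in x..y, g (c - s)) = ∫ s in x..y, g s := by
    have := intervalIntegral.integral_comp_sub_left (a := x) (b := y) g c
    simp only [hc] at this ⊢
    rw [this]
    have h1 : x + y - y = x := by ring
    have h2 : x + y - x = y := by ring
    rw [h1, h2]
  have houter : 2 * (y - x) * f (c / 2) * (y - x) ≤ 2 * ∫ s in x..y, g s := by
    have hg1 : IntervalIntegrable g MeasureTheory.volume x y := hgint.intervalIntegrable x y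
    have hg2 : IntervalIntegrable (fun s => g (c - s)) MeasureTheory.volume x y :=
      (hgint.comp (continuous_const.sub continuous_id)).intervalIntegrable x y
    have hmono := intervalIntegral.integral_mono_on (μ := MeasureTheory.volume) hle
      (intervalIntegrable_const (c := 2 * (y - x) * f (c / 2)))
      (hg1.add hg2)
      (fun s hs => hinner s hs)
    rw [intervalIntegral.integral_const, intervalIntegral.integral_add hg1 hg2, hreflg] at hmono
    have : (y - x) * (2 * (y - x) * f (c / 2)) ≤ 2 * ∫ s in x..y, g s := by
      simpa [smul_eq_mul, two_mul] using hmono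
    linarith
  -- rewrite the goal's double integral using f₀
  have hcongr : (∫ s in x..y, ∫ t in x..y, f ((s + t) / 2)) = ∫ s in x..y, g s := by
    apply intervalIntegral.integral_congr
    intro s hs
    rw [Set.uIcc_of_le hle] at hs
    apply intervalIntegral.integral_congr
    intro t ht
    rw [Set.uIcc_of_le hle] at ht
    exact (hf₀eq _ (hmid s hs t ht)).symm
  rw [hcongr]
  have hyx : (0:ℝ) < y - x := sub_pos.mpr hxy
  have hpos : (0:ℝ) < (y - x) ^ 2 := by positivity
  rw [div_mul_eq_mul_div, le_div_iff₀ hpos, one_mul]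
  calc f ((x + y) / 2) * (y - x) ^ 2 = 2 * (y - x) * f (c / 2) * (y - x) / 2 := by
        rw [hc]; ring
    _ ≤ (2 * ∫ s in x..y, g s) / 2 := by linarith
    _ = ∫ s in x..y, g s := by ring
end

section
/- For all real numbers x < y and every function f : ℝ → ℝ that is convex and continuous on [x, y], one has (1/(y-x)²) · ∫_x^y ∫_x^y f((s+t)/2) ds dt ≤ (1/(y-x)) · ∫_x^y f(t) dt. -/
open intervalIntegral MeasureTheory

theorem hermite_hadamard_double_right (x y : ℝ) (hxy : x < y) (f : ℝ → ℝ)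
    (hconv : ConvexOn ℝ (Set.Icc x y) f)
    (hcont : ContinuousOn f (Set.Icc x y)) :
    (1 / (y - x) ^ 2) * ∫ s in x..y, ∫ t in x..y, f ((s + t) / 2)
      ≤ (1 / (y - x)) * ∫ t in x..y, f t := by
  have huIcc : Set.uIcc x y = Set.Icc x y := Set.uIcc_of_le hxy.le
  have hne : y - x ≠ 0 := sub_ne_zero.mpr hxy.ne'
  have hfint : IntervalIntegrable f volume x y :=
    ContinuousOn.intervalIntegrable (by rw [huIcc]; exact hcont)
  set c := ∫ t in x..y, f t with hc
  set F : ℝ → ℝ := fun a => ∫ u in x..a, f u with hF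
  have hFcont : ContinuousOn F (Set.Icc x y) := by
    rw [← huIcc]
    exact intervalIntegral.continuousOn_primitive_interval
      (by rw [huIcc]; exact hcont.integrableOn_Icc)
  have hsubint : ∀ a : ℝ, a ∈ Set.Icc x y → IntervalIntegrable f volume x a := by
    intro a ha
    apply hfint.mono_set
    rw [huIcc, Set.uIcc_of_le ha.1]
    exact Set.Icc_subset_Icc le_rfl ha.2
  have hmemL : ∀ s ∈ Set.Icc x y, 2⁻¹ * x + s / 2 ∈ Set.Icc x y := by
    intro s hs
    constructor
    · nlinarith [hs.1]
    · nlinarith [hs.2]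
  have hmemR : ∀ s ∈ Set.Icc x y, 2⁻¹ * y + s / 2 ∈ Set.Icc x y := by
    intro s hs
    constructor
    · nlinarith [hs.1]
    · nlinarith [hs.2]
  have hinner : ∀ s ∈ Set.Icc x y, (∫ t in x..y, f ((s + t) / 2))
      = 2 * (F (2⁻¹ * y + s / 2) - F (2⁻¹ * x + s / 2)) := by
    intro s hs
    have h1 : (∫ t in x..y, f ((s + t) / 2))
        = ∫ t in x..y, f (2⁻¹ * t + s / 2) := by
      congr 1; ext t; ring_nf
    rw [h1, intervalIntegral.integral_comp_mul_add f (by norm_num : (2:ℝ)⁻¹ ≠ 0) (s/2)]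
    have h2 := intervalIntegral.integral_interval_sub_left
      (hsubint _ (hmemR s hs)) (hsubint _ (hmemL s hs))
    simp only [hF]
    rw [h2]
    norm_num
  have hgcont : ContinuousOn
      (fun s => 2 * (F (2⁻¹ * y + s / 2) - F (2⁻¹ * x + s / 2))) (Set.Icc x y) := by
    apply continuousOn_const.mul
    apply ContinuousOn.sub
    · exact hFcont.comp (by fun_prop) hmemR
    · exact hFcont.comp (by fun_prop) hmemL
  have hintinner : IntervalIntegrable (fun s => ∫ t in x..y, f ((s + t) / 2)) volume x y := by
    apply ContinuousOn.intervalIntegrable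
    rw [huIcc]
    exact hgcont.congr hinner
  -- pointwise bound on the inner integral
  have hbound : ∀ s ∈ Set.Icc x y,
      (∫ t in x..y, f ((s + t) / 2)) ≤ ((y - x) * f s + c) / 2 := by
    intro s hs
    have hintc : IntervalIntegrable (fun t => f s / 2 + f t / 2) volume x y :=
      intervalIntegrable_const.add (hfint.div_const 2)
    have hintl : IntervalIntegrable (fun t => f ((s + t) / 2)) volume x y := by
      apply ContinuousOn.intervalIntegrable
      rw [huIcc]
      apply hcont.comp (by fun_prop)
      intro t ht
      constructor
      · nlinarith [hs.1, ht.1]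
      · nlinarith [hs.2, ht.2]
    have hptw : ∀ t ∈ Set.Icc x y, f ((s + t) / 2) ≤ f s / 2 + f t / 2 := by
      intro t ht
      have := hconv.2 hs ht (by norm_num : (0:ℝ) ≤ 1/2) (by norm_num : (0:ℝ) ≤ 1/2)
        (by norm_num)
      simp only [smul_eq_mul] at this
      calc f ((s + t) / 2) = f (1/2 * s + 1/2 * t) := by ring_nf
        _ ≤ 1/2 * f s + 1/2 * f t := this
        _ = f s / 2 + f t / 2 := by ring
    have hle : (∫ t in x..y, f ((s + t) / 2)) ≤ ∫ t in x..y, f s / 2 + f t / 2 :=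
      intervalIntegral.integral_mono_on hxy.le hintl hintc hptw
    calc (∫ t in x..y, f ((s + t) / 2)) ≤ ∫ t in x..y, f s / 2 + f t / 2 := hle
      _ = (y - x) * (f s / 2) + c / 2 := by
          rw [intervalIntegral.integral_add intervalIntegrable_const (hfint.div_const 2),
            intervalIntegral.integral_const, intervalIntegral.integral_div, smul_eq_mul]
      _ = ((y - x) * f s + c) / 2 := by ring
  have key : (∫ s in x..y, ∫ t in x..y, f ((s + t) / 2)) ≤ (y - x) * c := by
    have h1 : (∫ s in x..y, ∫ t in x..y, f ((s + t) / 2))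
        ≤ ∫ s in x..y, ((y - x) * f s + c) / 2 := by
      apply intervalIntegral.integral_mono_on hxy.le hintinner _ hbound
      exact ((hfint.const_mul _).add intervalIntegrable_const).div_const 2
    have h2 : (∫ s in x..y, ((y - x) * f s + c) / 2) = (y - x) * c := by
      rw [show (fun s => ((y - x) * f s + c) / 2)
          = fun s => (y - x) / 2 * f s + c / 2 from by ext s; ring]
      rw [intervalIntegral.integral_add ((hfint.const_mul _))
        intervalIntegrable_const, intervalIntegral.integral_const_mul,
        intervalIntegral.integral_const, smul_eq_mul, ← hc]
      ring
    linarith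
  have hpos : (0:ℝ) < (y - x) ^ 2 := by positivity
  calc (1 / (y - x) ^ 2) * ∫ s in x..y, ∫ t in x..y, f ((s + t) / 2)
      ≤ (1 / (y - x) ^ 2) * ((y - x) * c) :=
        mul_le_mul_of_nonneg_left key (by positivity)
    _ = (1 / (y - x)) * c := by
        field_simp
end

section
/- If a ≥ 0, then for every function f : ℝ → ℝ convex and continuous on [x, y], T_a f(x,y) ≤ (1/(y-x)) · ∫_x^y f(t) dt. -/
-- Right Hermite-Hadamard on [t, t+h]
lemma hh_right_aux (f : ℝ → ℝ) (t h : ℝ) (hh : 0 < h)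
    (hconv : ConvexOn ℝ (Set.Icc t (t + h)) f)
    (hcont : ContinuousOn f (Set.Icc t (t + h))) :
    ∫ s in t..(t + h), f s ≤ h / 2 * (f t + f (t + h)) := by
  set c : ℝ := (f (t + h) - f t) / h with hc
  have hfi : IntervalIntegrable f MeasureTheory.volume t (t + h) :=
    (hcont.mono (by rw [Set.uIcc_of_le (by linarith)])).intervalIntegrable
  have hgi : IntervalIntegrable (fun s => f t + (s - t) * c) MeasureTheory.volume t (t + h) := by
    apply Continuous.intervalIntegrable
    continuity
  have hmono : ∫ s in t..(t + h), f s ≤ ∫ s in t..(t + h), (f t + (s - t) * c) := by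
    apply intervalIntegral.integral_mono_on (by linarith) hfi hgi
    intro s hs
    have hs1 := hs.1
    have hs2 := hs.2
    set μ : ℝ := (s - t) / h with hμ
    have hμ0 : 0 ≤ μ := div_nonneg (by linarith) hh.le
    have hμ1 : μ ≤ 1 := by rw [hμ, div_le_one hh]; linarith
    have hcomb : (1 - μ) • t + μ • (t + h) = s := by
      simp only [smul_eq_mul, hμ]; field_simp; ring
    have := hconv.2 (Set.left_mem_Icc.mpr (by linarith)) (Set.right_mem_Icc.mpr (by linarith))
      (by linarith : (0:ℝ) ≤ 1 - μ) hμ0 (by ring)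
    rw [hcomb] at this
    calc f s ≤ (1 - μ) • f t + μ • f (t + h) := this
      _ = f t + (s - t) * c := by
          simp only [smul_eq_mul, hμ, hc]; field_simp; ring
  have hid : ∫ s in t..(t + h), (s - t) = h ^ 2 / 2 := by
    rw [intervalIntegral.integral_comp_sub_right (fun u => u) t]
    simp only [integral_id, sub_self, add_sub_cancel_left]
    ring
  have hcalc : ∫ s in t..(t + h), (f t + (s - t) * c) = h / 2 * (f t + f (t + h)) := by
    rw [intervalIntegral.integral_add (by apply Continuous.intervalIntegrable; continuity)
      (by apply Continuous.intervalIntegrable; continuity)]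
    rw [intervalIntegral.integral_mul_const, hid, intervalIntegral.integral_const]
    rw [hc]
    field_simp
    ring
  linarith [hmono, hcalc.le, hcalc.ge]

theorem Ta_le_integral (x y : ℝ) (hxy : x < y) (a : ℝ) (ha : 0 ≤ a)
    (f F Φ : ℝ → ℝ)
    (hconv : ConvexOn ℝ (Set.Icc x y) f)
    (hcont : ContinuousOn f (Set.Icc x y))
    (hF : ∀ t ∈ Set.Icc x y, HasDerivAt F (f t) t)
    (hΦ : ∀ t ∈ Set.Icc x y, HasDerivAt Φ (F t) t) :
    (1 - a / 2) * (F y - F x) / (y - x)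
      + 2 * a * (Φ x - 2 * Φ ((x + y) / 2) + Φ y) / (y - x) ^ 2
      ≤ (1 / (y - x)) * ∫ t in x..y, f t := by
  set m : ℝ := (x + y) / 2 with hm
  set h : ℝ := (y - x) / 2 with hh
  have hh0 : 0 < h := by rw [hh]; linarith
  have hxm : x < m := by rw [hm]; linarith
  have hmy : m < y := by rw [hm]; linarith
  have hxh : x + h = m := by rw [hm, hh]; ring
  have hmh : m + h = y := by rw [hm, hh]; ring
  -- continuity of F
  have hFc : ContinuousOn F (Set.Icc x y) := fun t ht => (hF t ht).continuousAt.continuousWithinAt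
  have hfi : IntervalIntegrable f MeasureTheory.volume x y :=
    (hcont.mono (by rw [Set.uIcc_of_le hxy.le])).intervalIntegrable
  -- FTC for F
  have hFTC : ∫ t in x..y, f t = F y - F x := by
    apply intervalIntegral.integral_eq_sub_of_hasDerivAt
    · intro t ht; exact hF t (by rwa [Set.uIcc_of_le hxy.le] at ht)
    · exact hfi
  -- FTC for Φ on halves
  have hΦ1 : ∫ t in x..m, F t = Φ m - Φ x := by
    apply intervalIntegral.integral_eq_sub_of_hasDerivAt
    · intro t ht
      rw [Set.uIcc_of_le hxm.le] at ht
      exact hΦ t ⟨ht.1, le_trans ht.2 hmy.le⟩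
    · apply ContinuousOn.intervalIntegrable
      apply hFc.mono
      rw [Set.uIcc_of_le hxm.le]
      exact Set.Icc_subset_Icc le_rfl hmy.le
  have hΦ2 : ∫ t in m..y, F t = Φ y - Φ m := by
    apply intervalIntegral.integral_eq_sub_of_hasDerivAt
    · intro t ht
      rw [Set.uIcc_of_le hmy.le] at ht
      exact hΦ t ⟨le_trans hxm.le ht.1, ht.2⟩
    · apply ContinuousOn.intervalIntegrable
      apply hFc.mono
      rw [Set.uIcc_of_le hmy.le]
      exact Set.Icc_subset_Icc hxm.le le_rfl
  -- translation identities
  have hmaps : ∀ t ∈ Set.Icc x m, t + h ∈ Set.Icc x y := by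
    intro t ht
    constructor
    · linarith [ht.1]
    · have := ht.2
      have : t + h ≤ m + h := by linarith
      linarith [hmh]
  have htransF : ∫ t in m..y, F t = ∫ t in x..m, F (t + h) := by
    rw [intervalIntegral.integral_comp_add_right F h, hxh, hmh]
  have htransf : ∫ t in m..y, f t = ∫ t in x..m, f (t + h) := by
    rw [intervalIntegral.integral_comp_add_right f h, hxh, hmh]
  -- continuity of shifted functions on [x, m]
  have hsub1 : Set.Icc x m ⊆ Set.Icc x y := Set.Icc_subset_Icc le_rfl hmy.le
  have hFsh : ContinuousOn (fun t => F (t + h)) (Set.Icc x m) :=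
    hFc.comp (continuous_add_right h).continuousOn hmaps
  have hfsh : ContinuousOn (fun t => f (t + h)) (Set.Icc x m) :=
    hcont.comp (continuous_add_right h).continuousOn hmaps
  -- pointwise right HH
  have hpt : ∀ t ∈ Set.Icc x m, F (t + h) - F t ≤ h / 2 * (f t + f (t + h)) := by
    intro t ht
    have hsub : Set.Icc t (t + h) ⊆ Set.Icc x y := by
      intro s hs
      constructor
      · linarith [ht.1, hs.1]
      · have h1 := hs.2
        have h2 : t + h ≤ y := (hmaps t ht).2
        linarith
    have hFTCt : ∫ s in t..(t + h), f s = F (t + h) - F t := by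
      apply intervalIntegral.integral_eq_sub_of_hasDerivAt
      · intro s hs
        rw [Set.uIcc_of_le (by linarith)] at hs
        exact hF s (hsub hs)
      · apply ContinuousOn.intervalIntegrable
        apply hcont.mono
        rw [Set.uIcc_of_le (by linarith)]
        exact hsub
    rw [← hFTCt]
    exact hh_right_aux f t h hh0 (hconv.subset hsub (convex_Icc _ _)) (hcont.mono hsub)
  -- integrate the pointwise bound
  have hI1 : IntervalIntegrable (fun t => F (t + h) - F t) MeasureTheory.volume x m := by
    apply ContinuousOn.intervalIntegrable
    rw [Set.uIcc_of_le hxm.le]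
    exact hFsh.sub (hFc.mono hsub1)
  have hI2 : IntervalIntegrable (fun t => h / 2 * (f t + f (t + h))) MeasureTheory.volume x m := by
    apply ContinuousOn.intervalIntegrable
    rw [Set.uIcc_of_le hxm.le]
    exact ((hcont.mono hsub1).add hfsh).const_smul (h / 2)
  have hmono : ∫ t in x..m, (F (t + h) - F t) ≤ ∫ t in x..m, h / 2 * (f t + f (t + h)) :=
    intervalIntegral.integral_mono_on hxm.le hI1 hI2 hpt
  -- compute both sides
  have hIF : IntervalIntegrable F MeasureTheory.volume x m := by
    apply ContinuousOn.intervalIntegrable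
    rw [Set.uIcc_of_le hxm.le]; exact hFc.mono hsub1
  have hIFsh : IntervalIntegrable (fun t => F (t + h)) MeasureTheory.volume x m := by
    apply ContinuousOn.intervalIntegrable
    rw [Set.uIcc_of_le hxm.le]; exact hFsh
  have hIfm : IntervalIntegrable f MeasureTheory.volume x m := by
    apply ContinuousOn.intervalIntegrable
    rw [Set.uIcc_of_le hxm.le]; exact hcont.mono hsub1
  have hIfsh : IntervalIntegrable (fun t => f (t + h)) MeasureTheory.volume x m := by
    apply ContinuousOn.intervalIntegrable
    rw [Set.uIcc_of_le hxm.le]; exact hfsh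
  have hLHS : ∫ t in x..m, (F (t + h) - F t) = (Φ x - 2 * Φ m + Φ y) := by
    rw [intervalIntegral.integral_sub hIFsh hIF, ← htransF, hΦ1, hΦ2]
    ring
  have hRHS : ∫ t in x..m, h / 2 * (f t + f (t + h)) = h / 2 * (F y - F x) := by
    rw [intervalIntegral.integral_const_mul, intervalIntegral.integral_add hIfm hIfsh,
      ← htransf]
    have hsplit : (∫ t in x..m, f t) + ∫ t in m..y, f t = ∫ t in x..y, f t :=
      intervalIntegral.integral_add_adjacent_intervals hIfm
        (by apply ContinuousOn.intervalIntegrable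
            rw [Set.uIcc_of_le hmy.le]
            exact hcont.mono (Set.Icc_subset_Icc hxm.le le_rfl))
    rw [hsplit, hFTC]
  have hkey : Φ x - 2 * Φ m + Φ y ≤ h / 2 * (F y - F x) := by
    rw [← hLHS, ← hRHS]; exact hmono
  -- final algebra
  set c : ℝ := y - x with hcdef
  have hc0 : 0 < c := by rw [hcdef]; linarith
  set I : ℝ := ∫ t in x..y, f t with hIdef
  have hBI : F y - F x = I := hFTC.symm
  have hhc : h = c / 2 := by rw [hh, hcdef]
  have hkey' : 4 * (Φ x - 2 * Φ m + Φ y) ≤ c * I := by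
    rw [← hBI]
    calc 4 * (Φ x - 2 * Φ m + Φ y) ≤ 4 * (h / 2 * (F y - F x)) :=
          mul_le_mul_of_nonneg_left hkey (by norm_num)
      _ = c * (F y - F x) := by rw [hhc]; ring
  have hmul : 2 * a * (Φ x - 2 * Φ m + Φ y) ≤ a / 2 * (c * I) := by
    have := mul_le_mul_of_nonneg_left hkey' (by linarith : (0:ℝ) ≤ a / 2)
    linarith
  have hnum : (1 - a / 2) * (F y - F x) * c + 2 * a * (Φ x - 2 * Φ m + Φ y) ≤ I * c := by
    rw [hBI]; nlinarith
  have e1 : (1 - a / 2) * (F y - F x) / c + 2 * a * (Φ x - 2 * Φ m + Φ y) / c ^ 2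
      = ((1 - a / 2) * (F y - F x) * c + 2 * a * (Φ x - 2 * Φ m + Φ y)) / c ^ 2 := by
    field_simp
  have e2 : 1 / c * I = (I * c) / c ^ 2 := by
    field_simp
  calc (1 - a / 2) * (F y - F x) / c + 2 * a * (Φ x - 2 * Φ m + Φ y) / c ^ 2
      = ((1 - a / 2) * (F y - F x) * c + 2 * a * (Φ x - 2 * Φ m + Φ y)) / c ^ 2 := e1
    _ ≤ (I * c) / c ^ 2 := by
        exact (div_le_div_iff_of_pos_right (by positivity : (0:ℝ) < c ^ 2)).mpr hnum
    _ = 1 / c * I := e2.symm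
end

section
/- If a ≤ 0, then for every function f : ℝ → ℝ convex and continuous on [x, y], T_a f(x,y) ≥ (1/(y-x)) · ∫_x^y f(t) dt. -/
theorem Ta_ge_integral (x y : ℝ) (hxy : x < y) (a : ℝ) (ha : a ≤ 0)
    (f F Φ : ℝ → ℝ)
    (hconv : ConvexOn ℝ (Set.Icc x y) f)
    (hcont : ContinuousOn f (Set.Icc x y))
    (hF : ∀ t ∈ Set.Icc x y, HasDerivAt F (f t) t)
    (hΦ : ∀ t ∈ Set.Icc x y, HasDerivAt Φ (F t) t) :
    (1 - a / 2) * (F y - F x) / (y - x)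
      + 2 * a * (Φ x - 2 * Φ ((x + y) / 2) + Φ y) / (y - x) ^ 2
      ≥ (1 / (y - x)) * ∫ t in x..y, f t := by
  have hyx : (0:ℝ) < y - x := by linarith
  set m : ℝ := (x + y) / 2 with hm
  set h : ℝ := (y - x) / 2 with hh
  have hh0 : 0 < h := by positivity
  have hmemp : ∀ s ∈ Set.Icc (0:ℝ) h, m + s ∈ Set.Icc x y := by
    rintro s ⟨h1, h2⟩
    rw [hh] at h2
    exact ⟨by rw [hm]; linarith, by rw [hm]; linarith⟩
  have hmemq : ∀ s ∈ Set.Icc (0:ℝ) h, m - s ∈ Set.Icc x y := by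
    rintro s ⟨h1, h2⟩
    rw [hh] at h2
    exact ⟨by rw [hm]; linarith, by rw [hm]; linarith⟩
  -- FTC for f
  have hI : (∫ t in x..y, f t) = F y - F x := by
    apply intervalIntegral.integral_eq_sub_of_hasDerivAt
    · intro t ht
      rw [Set.uIcc_of_le hxy.le] at ht
      exact hF t ht
    · exact (hcont.mono (by rw [Set.uIcc_of_le hxy.le])).intervalIntegrable
  set g : ℝ → ℝ := fun s => F (m + s) - F (m - s) with hgdef
  have hgderiv : ∀ s ∈ Set.Icc (0:ℝ) h, HasDerivAt g (f (m + s) + f (m - s)) s := by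
    intro s hs
    have h1 : HasDerivAt (fun s => F (m + s)) (f (m + s) * 1) s :=
      (hF (m + s) (hmemp s hs)).comp s ((hasDerivAt_id s).const_add m)
    have h2 : HasDerivAt (fun s => F (m - s)) (f (m - s) * (-1)) s :=
      (hF (m - s) (hmemq s hs)).comp s ((hasDerivAt_id s).const_sub m)
    have h3 := h1.sub h2
    have he : f (m + s) * 1 - f (m - s) * (-1) = f (m + s) + f (m - s) := by ring
    rw [he] at h3
    exact h3
  have hgcont : ContinuousOn g (Set.Icc 0 h) := fun s hs =>
    (hgderiv s hs).continuousAt.continuousWithinAt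
  have hmy : m + h = y := by rw [hm, hh]; ring
  have hmx : m - h = x := by rw [hm, hh]; ring
  -- Φ identity
  have hD : Φ x - 2 * Φ m + Φ y = ∫ s in (0:ℝ)..h, g s := by
    have key : (∫ s in (0:ℝ)..h, g s)
        = (fun s => Φ (m + s) + Φ (m - s)) h - (fun s => Φ (m + s) + Φ (m - s)) 0 := by
      refine intervalIntegral.integral_eq_sub_of_hasDerivAt
        (f := fun s => Φ (m + s) + Φ (m - s)) ?_ ?_
      · intro s hs
        rw [Set.uIcc_of_le hh0.le] at hs
        have h1 : HasDerivAt (fun s => Φ (m + s)) (F (m + s) * 1) s :=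
          (hΦ (m + s) (hmemp s hs)).comp s ((hasDerivAt_id s).const_add m)
        have h2 : HasDerivAt (fun s => Φ (m - s)) (F (m - s) * (-1)) s :=
          (hΦ (m - s) (hmemq s hs)).comp s ((hasDerivAt_id s).const_sub m)
        have h3 := h1.add h2
        have he : F (m + s) * 1 + F (m - s) * (-1) = g s := by rw [hgdef]; ring
        rw [he] at h3
        exact h3
      · exact (hgcont.mono (by rw [Set.uIcc_of_le hh0.le])).intervalIntegrable
    simp only [hmy, hmx, add_zero, sub_zero] at key
    rw [key]; ring
  -- g is convex on [0, h]
  have hgconv : ConvexOn ℝ (Set.Icc 0 h) g := by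
    apply MonotoneOn.convexOn_of_deriv (convex_Icc 0 h) hgcont
    · intro s hs
      rw [interior_Icc] at hs
      exact ((hgderiv s ⟨hs.1.le, hs.2.le⟩).differentiableAt).differentiableWithinAt
    · intro u hu v hv huv
      rw [interior_Icc] at hu hv
      rw [(hgderiv u ⟨hu.1.le, hu.2.le⟩).deriv, (hgderiv v ⟨hv.1.le, hv.2.le⟩).deriv]
      rcases eq_or_lt_of_le huv with rfl | hlt
      · exact le_refl _
      have hv0 : (0:ℝ) < v := hv.1
      have hu0 : (0:ℝ) ≤ u := hu.1.le
      set c : ℝ := (v - u) / (2 * v) with hc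
      set d : ℝ := (v + u) / (2 * v) with hd
      have hc0 : 0 ≤ c := by apply div_nonneg <;> linarith
      have hd0 : 0 ≤ d := by apply div_nonneg <;> linarith
      have hcd : c + d = 1 := by rw [hc, hd]; field_simp; ring
      have e1 : c * (m - v) + d * (m + v) = m + u := by
        rw [hc, hd]; field_simp; ring
      have e2 : d * (m - v) + c * (m + v) = m - u := by
        rw [hc, hd]; field_simp; ring
      have hqv : m - v ∈ Set.Icc x y := hmemq v ⟨hv0.le, hv.2.le⟩
      have hpv : m + v ∈ Set.Icc x y := hmemp v ⟨hv0.le, hv.2.le⟩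
      have A := hconv.2 hqv hpv hc0 hd0 hcd
      have B := hconv.2 hqv hpv hd0 hc0 (by linarith)
      simp only [smul_eq_mul] at A B
      rw [e1] at A
      rw [e2] at B
      calc f (m + u) + f (m - u)
          ≤ (c * f (m - v) + d * f (m + v)) + (d * f (m - v) + c * f (m + v)) :=
            add_le_add A B
        _ = (c + d) * (f (m - v) + f (m + v)) := by ring
        _ = f (m + v) + f (m - v) := by rw [hcd]; ring
  -- slope bound
  have hslope : ∀ s ∈ Set.Icc (0:ℝ) h, g s ≤ s / h * g h := by
    intro s hs
    have hg0 : g 0 = 0 := by rw [hgdef]; simp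
    have hb0 : 0 ≤ 1 - s / h := by
      have : s / h ≤ 1 := (div_le_one hh0).mpr hs.2
      linarith
    have hb1 : 0 ≤ s / h := div_nonneg hs.1 hh0.le
    have := hgconv.2 (Set.left_mem_Icc.mpr hh0.le) (Set.right_mem_Icc.mpr hh0.le)
      hb0 hb1 (by ring)
    simp only [smul_eq_mul, mul_zero, zero_add] at this
    rw [div_mul_cancel₀ _ hh0.ne'] at this
    rw [hg0] at this
    linarith [this]
  -- integral comparison
  have hgint : IntervalIntegrable g MeasureTheory.volume 0 h :=
    (hgcont.mono (by rw [Set.uIcc_of_le hh0.le])).intervalIntegrable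
  have hint : (∫ s in (0:ℝ)..h, g s) ≤ ∫ s in (0:ℝ)..h, s / h * g h := by
    apply intervalIntegral.integral_mono_on hh0.le hgint
    · exact (Continuous.intervalIntegrable (by continuity) 0 h)
    · exact hslope
  have hval : (∫ s in (0:ℝ)..h, s / h * g h) = h * g h / 2 := by
    have : (∫ s in (0:ℝ)..h, s / h * g h) = (g h / h) * ∫ s in (0:ℝ)..h, s := by
      rw [← intervalIntegral.integral_const_mul]
      congr 1; ext s; ring
    rw [this, integral_id]
    field_simp
    ring
  have hgh : g h = F y - F x := by rw [hgdef]; simp only; rw [hmy, hmx]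
  have hkey : (∫ s in (0:ℝ)..h, g s) ≤ (y - x) * (F y - F x) / 4 := by
    rw [hval, hgh, hh] at hint
    linarith
  rw [ge_iff_le, ← sub_nonneg, hI, hD]
  have expr_eq : (1 - a / 2) * (F y - F x) / (y - x)
      + 2 * a * (∫ s in (0:ℝ)..h, g s) / (y - x) ^ 2
      - 1 / (y - x) * (F y - F x)
      = (-2 * a / (y - x) ^ 2) * ((y - x) * (F y - F x) / 4 - ∫ s in (0:ℝ)..h, g s) := by
    field_simp
    ring
  rw [expr_eq]
  apply mul_nonneg
  · apply div_nonneg (by linarith) (by positivity)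
  · linarith [hkey]
end

section
/- If a ≤ 2, then for every function f : ℝ → ℝ convex and continuous on [x, y], f((x+y)/2) ≤ T_a f(x,y). -/
open Set

/-- Trapezoid upper bound for convex functions, via the antiderivative. -/
lemma trap_aux (x y u v : ℝ) (f F : ℝ → ℝ)
    (hconv : ConvexOn ℝ (Set.Icc x y) f)
    (hcont : ContinuousOn f (Set.Icc x y))
    (hF : ∀ t ∈ Set.Icc x y, HasDerivAt F (f t) t)
    (hu : u ∈ Set.Icc x y) (hv : v ∈ Set.Icc x y) (huv : u ≤ v) :
    F v - F u ≤ (v - u) * (f u + f v) / 2 := by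
  rcases eq_or_lt_of_le huv with rfl | huv'
  · simp
  have hvu : 0 < v - u := by linarith
  have hsub : Set.uIcc u v ⊆ Set.Icc x y := by
    rw [Set.uIcc_of_le huv]; exact Set.Icc_subset_Icc hu.1 hv.2
  have hint : IntervalIntegrable f MeasureTheory.volume u v :=
    (hcont.mono hsub).intervalIntegrable
  have hftc : F v - F u = ∫ s in u..v, f s :=
    (intervalIntegral.integral_eq_sub_of_hasDerivAt
      (fun s hs => hF s (hsub hs)) hint).symm
  have hpt : ∀ s ∈ Set.Icc u v, f s ≤ ((v - s) * f u + (s - u) * f v) / (v - u) := by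
    intro s hs
    have ha : (0:ℝ) ≤ (v - s) / (v - u) := by
      apply div_nonneg <;> linarith [hs.2]
    have hb : (0:ℝ) ≤ (s - u) / (v - u) := by
      apply div_nonneg <;> linarith [hs.1]
    have hab : (v - s) / (v - u) + (s - u) / (v - u) = 1 := by
      field_simp
      ring
    have hkey := hconv.2 hu hv ha hb hab
    simp only [smul_eq_mul] at hkey
    have harg : (v - s) / (v - u) * u + (s - u) / (v - u) * v = s := by
      field_simp; ring
    rw [harg] at hkey
    calc f s ≤ (v - s) / (v - u) * f u + (s - u) / (v - u) * f v := hkey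
      _ = ((v - s) * f u + (s - u) * f v) / (v - u) := by ring
  have hcont2 : Continuous fun s : ℝ => ((v - s) * f u + (s - u) * f v) / (v - u) := by
    fun_prop
  have h2 : (∫ s in u..v, f s) ≤ ∫ s in u..v, ((v - s) * f u + (s - u) * f v) / (v - u) :=
    intervalIntegral.integral_mono_on huv hint (hcont2.intervalIntegrable u v) hpt
  have h3 : (∫ s in u..v, ((v - s) * f u + (s - u) * f v) / (v - u))
      = (v - u) * (f u + f v) / 2 := by
    have heq : (fun s : ℝ => ((v - s) * f u + (s - u) * f v) / (v - u))
        = fun s : ℝ => (v * f u - u * f v) / (v - u) + s * ((f v - f u) / (v - u)) := by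
      funext s; field_simp; ring
    rw [heq, intervalIntegral.integral_add intervalIntegrable_const
      ((by fun_prop : Continuous fun s : ℝ => s * ((f v - f u) / (v - u))).intervalIntegrable u v),
      intervalIntegral.integral_const, intervalIntegral.integral_mul_const,
      integral_id]
    simp only [smul_eq_mul]
    field_simp
    ring
  rw [hftc, ← h3]
  exact h2

theorem midpoint_le_Ta (x y : ℝ) (hxy : x < y) (a : ℝ) (ha : a ≤ 2)
    (f F Φ : ℝ → ℝ)
    (hconv : ConvexOn ℝ (Set.Icc x y) f)
    (hcont : ContinuousOn f (Set.Icc x y))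
    (hF : ∀ t ∈ Set.Icc x y, HasDerivAt F (f t) t)
    (hΦ : ∀ t ∈ Set.Icc x y, HasDerivAt Φ (F t) t) :
    f ((x + y) / 2)
      ≤ (1 - a / 2) * (F y - F x) / (y - x)
        + 2 * a * (Φ x - 2 * Φ ((x + y) / 2) + Φ y) / (y - x) ^ 2 := by
  set m : ℝ := (x + y) / 2 with hm_def
  have hxm : x < m := by simp [hm_def]; linarith
  have hmy : m < y := by simp [hm_def]; linarith
  have hmmem : m ∈ Set.Icc x y := ⟨hxm.le, hmy.le⟩
  have hxmem : x ∈ Set.Icc x y := ⟨le_refl _, hxy.le⟩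
  have hymem : y ∈ Set.Icc x y := ⟨hxy.le, le_refl _⟩
  -- membership helpers
  have hmem1 : ∀ s ∈ Set.Icc m y, s ∈ Set.Icc x y := fun s hs =>
    ⟨le_trans hxm.le hs.1, hs.2⟩
  have hmem2 : ∀ s ∈ Set.Icc m y, x + y - s ∈ Set.Icc x y := by
    intro s hs
    constructor
    · linarith [hs.2]
    · have : m ≤ s := hs.1
      simp only [hm_def] at this; linarith
  -- continuity of F and Φ on Icc x y
  have hFc : ContinuousOn F (Set.Icc x y) := fun s hs =>
    (hF s hs).continuousAt.continuousWithinAt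
  have hΦc : ContinuousOn Φ (Set.Icc x y) := fun s hs =>
    (hΦ s hs).continuousAt.continuousWithinAt
  have hmaps : Set.MapsTo (fun s : ℝ => x + y - s) (Set.Icc m y) (Set.Icc x y) := hmem2
  have hrefl_cont : ContinuousOn (fun s : ℝ => x + y - s) (Set.Icc m y) := by fun_prop
  have hFc1 : ContinuousOn F (Set.Icc m y) := hFc.mono (Set.Icc_subset_Icc hxm.le le_rfl)
  have hΦc1 : ContinuousOn Φ (Set.Icc m y) := hΦc.mono (Set.Icc_subset_Icc hxm.le le_rfl)
  have hFc2 : ContinuousOn (fun s : ℝ => F (x + y - s)) (Set.Icc m y) :=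
    hFc.comp hrefl_cont hmaps
  have hΦc2 : ContinuousOn (fun s : ℝ => Φ (x + y - s)) (Set.Icc m y) :=
    hΦc.comp hrefl_cont hmaps
  -- derivative helpers
  have hIoo : ∀ s ∈ Set.Ioo m y, s ∈ Set.Icc x y ∧ x + y - s ∈ Set.Icc x y := by
    intro s hs
    exact ⟨hmem1 s ⟨hs.1.le, hs.2.le⟩, hmem2 s ⟨hs.1.le, hs.2.le⟩⟩
  have hdF2 : ∀ s ∈ Set.Ioo m y, HasDerivAt (fun t => F (x + y - t)) (-f (x + y - s)) s := by
    intro s hs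
    have hlin : HasDerivAt (fun t : ℝ => x + y - t) (-1) s := (hasDerivAt_id s).const_sub (x + y)
    have := (hF _ (hIoo s hs).2).comp s hlin
    exact this.congr_deriv (by ring)
  have hdΦ2 : ∀ s ∈ Set.Ioo m y, HasDerivAt (fun t => Φ (x + y - t)) (-F (x + y - s)) s := by
    intro s hs
    have hlin : HasDerivAt (fun t : ℝ => x + y - t) (-1) s := (hasDerivAt_id s).const_sub (x + y)
    have := (hΦ _ (hIoo s hs).2).comp s hlin
    exact this.congr_deriv (by ring)
  -- convexity midpoint inequality
  have hmid : ∀ s ∈ Set.Ioo m y, 2 * f m ≤ f s + f (x + y - s) := by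
    intro s hs
    obtain ⟨h1, h2⟩ := hIoo s hs
    have hkey := hconv.2 h1 h2 (by norm_num : (0:ℝ) ≤ 1/2) (by norm_num : (0:ℝ) ≤ 1/2)
      (by norm_num)
    simp only [smul_eq_mul] at hkey
    have harg : (1/2 : ℝ) * s + (1/2 : ℝ) * (x + y - s) = m := by
      rw [hm_def]; ring
    rw [harg] at hkey
    linarith
  -- First monotone function: g1 = psi'
  set g1 : ℝ → ℝ := fun s => F s - F (x + y - s) - 2 * f m * (s - m) with hg1_def
  have hg1d : ∀ s ∈ Set.Ioo m y,
      HasDerivAt g1 (f s + f (x + y - s) - 2 * f m) s := by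
    intro s hs
    have d1 := hF s (hIoo s hs).1
    have d2 := hdF2 s hs
    have d3 : HasDerivAt (fun t : ℝ => 2 * f m * (t - m)) (2 * f m) s := by
      simpa using ((hasDerivAt_id s).sub_const m).const_mul (2 * f m)
    have := (d1.sub d2).sub d3
    exact this.congr_deriv (by ring)
  have hg1c : ContinuousOn g1 (Set.Icc m y) := by
    apply (hFc1.sub hFc2).sub
    fun_prop
  have hg1mono : MonotoneOn g1 (Set.Icc m y) := by
    apply monotoneOn_of_hasDerivWithinAt_nonneg (convex_Icc m y) hg1c
      (f' := fun s => f s + f (x + y - s) - 2 * f m)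
    · rw [interior_Icc]; exact fun s hs => (hg1d s hs).hasDerivWithinAt
    · rw [interior_Icc]; intro s hs; linarith [hmid s hs]
  have hg1m : g1 m = 0 := by
    have : x + y - m = m := by simp [hm_def]; ring
    simp only [hg1_def, this]
    ring
  have hg1nonneg : ∀ s ∈ Set.Icc m y, 0 ≤ g1 s := by
    intro s hs
    have := hg1mono (Set.left_mem_Icc.2 hmy.le) hs hs.1
    linarith [hg1m ▸ this]
  -- Second monotone function: g2 = psi
  set g2 : ℝ → ℝ := fun s => Φ s + Φ (x + y - s) - 2 * Φ m - f m * (s - m) ^ 2 with hg2_def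
  have hg2d : ∀ s ∈ Set.Ioo m y, HasDerivAt g2 (g1 s) s := by
    intro s hs
    have d1 := hΦ s (hIoo s hs).1
    have d2 := hdΦ2 s hs
    have d3 : HasDerivAt (fun t : ℝ => f m * (t - m) ^ 2) (f m * (2 * (s - m))) s := by
      simpa using (((hasDerivAt_id s).sub_const m).pow 2).const_mul (f m)
    have := ((d1.add d2).sub_const (2 * Φ m)).sub d3
    exact this.congr_deriv (by simp only [hg1_def]; ring)
  have hg2c : ContinuousOn g2 (Set.Icc m y) := by
    apply ((hΦc1.add hΦc2).sub continuousOn_const).sub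
    fun_prop
  have hg2mono : MonotoneOn g2 (Set.Icc m y) := by
    apply monotoneOn_of_hasDerivWithinAt_nonneg (convex_Icc m y) hg2c (f' := g1)
    · rw [interior_Icc]; exact fun s hs => (hg2d s hs).hasDerivWithinAt
    · rw [interior_Icc]; intro s hs; exact hg1nonneg s ⟨hs.1.le, hs.2.le⟩
  have hg2m : g2 m = 0 := by
    have : x + y - m = m := by simp [hm_def]; ring
    simp only [hg2_def, this]
    ring
  have hQ1 : f m * (y - m) ^ 2 ≤ Φ x + Φ y - 2 * Φ m := by
    have := hg2mono (Set.left_mem_Icc.2 hmy.le) (Set.right_mem_Icc.2 hmy.le) hmy.le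
    rw [hg2m] at this
    have hxym : x + y - y = x := by ring
    simp only [hg2_def, hxym] at this
    linarith
  -- Third monotone function: g3 = phi
  set g3 : ℝ → ℝ := fun s =>
    2 * (s - m) * (F s - F (x + y - s)) - 4 * (Φ s + Φ (x + y - s) - 2 * Φ m) with hg3_def
  have hg3d : ∀ s ∈ Set.Ioo m y, HasDerivAt g3
      (2 * (s - m) * (f s + f (x + y - s)) - 2 * (F s - F (x + y - s))) s := by
    intro s hs
    have d1 := hF s (hIoo s hs).1
    have d2 := hdF2 s hs
    have dΦ1 := hΦ s (hIoo s hs).1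
    have dΦ2 := hdΦ2 s hs
    have dlin : HasDerivAt (fun t : ℝ => 2 * (t - m)) 2 s := by
      simpa using ((hasDerivAt_id s).sub_const m).const_mul 2
    have dmul := dlin.mul (d1.sub d2)
    have dsub := (((dΦ1.add dΦ2).sub_const (2 * Φ m)).const_mul 4)
    have := dmul.sub dsub
    exact this.congr_deriv (by simp only [Pi.sub_apply]; ring)
  have hg3c : ContinuousOn g3 (Set.Icc m y) := by
    apply ContinuousOn.sub
    · exact (ContinuousOn.mul (by fun_prop) (hFc1.sub hFc2))
    · exact continuousOn_const.mul ((hΦc1.add hΦc2).sub continuousOn_const)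
  have hg3mono : MonotoneOn g3 (Set.Icc m y) := by
    apply monotoneOn_of_hasDerivWithinAt_nonneg (convex_Icc m y) hg3c
      (f' := fun s => 2 * (s - m) * (f s + f (x + y - s)) - 2 * (F s - F (x + y - s)))
    · rw [interior_Icc]; exact fun s hs => (hg3d s hs).hasDerivWithinAt
    · rw [interior_Icc]
      intro s hs
      have ht := trap_aux x y (x + y - s) s f F hconv hcont hF (hIoo s hs).2 (hIoo s hs).1
        (by simp only [hm_def] at hs; linarith [hs.1])
      have hms : s - (x + y - s) = 2 * (s - m) := by rw [hm_def]; ring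
      rw [hms] at ht
      nlinarith [ht]
  have hg3m : g3 m = 0 := by
    have : x + y - m = m := by simp [hm_def]; ring
    simp only [hg3_def, this]
    ring
  have hQ2 : 4 * (Φ x + Φ y - 2 * Φ m) ≤ 2 * (y - m) * (F y - F x) := by
    have := hg3mono (Set.left_mem_Icc.2 hmy.le) (Set.right_mem_Icc.2 hmy.le) hmy.le
    rw [hg3m] at this
    have hxym : x + y - y = x := by ring
    simp only [hg3_def, hxym] at this
    linarith
  -- combine
  have hd : (0:ℝ) < y - x := by linarith
  have hd2 : (0:ℝ) < (y - x) ^ 2 := by positivity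
  have hym : y - m = (y - x) / 2 := by simp [hm_def]; ring
  rw [hym] at hQ1 hQ2
  have hrw : (1 - a / 2) * (F y - F x) / (y - x)
      + 2 * a * (Φ x - 2 * Φ m + Φ y) / (y - x) ^ 2
      = ((1 - a / 2) * (y - x) * (F y - F x) + 2 * a * (Φ x - 2 * Φ m + Φ y)) / (y - x) ^ 2 := by
    field_simp
  rw [hrw, le_div_iff₀ hd2]
  have hfac : 0 ≤ (1 - a / 2) * (2 * ((y - x) / 2) * (F y - F x) - 4 * (Φ x + Φ y - 2 * Φ m)) := by
    apply mul_nonneg (by linarith) (by linarith)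
  nlinarith [hQ1, hfac]
end

section
/- If a ≥ 6, then for every function f : ℝ → ℝ convex and continuous on [x, y], T_a f(x,y) ≤ f((x+y)/2). -/
set_option maxHeartbeats 1000000

open Set intervalIntegral

theorem Ta_le_midpoint (x y : ℝ) (hxy : x < y) (a : ℝ) (ha : 6 ≤ a)
    (f F Φ : ℝ → ℝ)
    (hconv : ConvexOn ℝ (Set.Icc x y) f)
    (hcont : ContinuousOn f (Set.Icc x y))
    (hF : ∀ t ∈ Set.Icc x y, HasDerivAt F (f t) t)
    (hΦ : ∀ t ∈ Set.Icc x y, HasDerivAt Φ (F t) t) :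
    (1 - a / 2) * (F y - F x) / (y - x)
      + 2 * a * (Φ x - 2 * Φ ((x + y) / 2) + Φ y) / (y - x) ^ 2
      ≤ f ((x + y) / 2) := by
  set m := (x + y) / 2 with hm
  set h := (y - x) / 2 with hh
  have hh0 : 0 < h := by rw [hh]; linarith
  have ha0 : (0:ℝ) < a := by linarith
  have hmy : m + h = y := by rw [hm, hh]; ring
  have hmx : m - h = x := by rw [hm, hh]; ring
  have hmem : ∀ s ∈ Icc (0:ℝ) h, m + s ∈ Icc x y ∧ m - s ∈ Icc x y := by
    intro s hs
    obtain ⟨h0, h1⟩ := hs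
    refine ⟨⟨?_, ?_⟩, ⟨?_, ?_⟩⟩ <;> [linarith [hmx]; linarith [hmy]; linarith [hmx]; linarith [hmy]]
  have huIcc : uIcc (0:ℝ) h = Icc 0 h := uIcc_of_le hh0.le
  -- continuity of F on Icc x y
  have hFcont : ContinuousOn F (Icc x y) := fun t ht => (hF t ht).continuousAt.continuousWithinAt
  -- continuity of translated functions
  have hcp : ContinuousOn (fun s : ℝ => m + s) (Icc 0 h) := (continuous_const.add continuous_id).continuousOn
  have hcn : ContinuousOn (fun s : ℝ => m - s) (Icc 0 h) := (continuous_const.sub continuous_id).continuousOn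
  have hgcont : ContinuousOn (fun s : ℝ => f (m + s) + f (m - s) - 2 * f m) (Icc 0 h) := by
    apply ContinuousOn.sub _ continuousOn_const
    exact (hcont.comp hcp (fun s hs => (hmem s hs).1)).add (hcont.comp hcn (fun s hs => (hmem s hs).2))
  have hGcont : ContinuousOn (fun s : ℝ => F (m + s) - F (m - s) - 2 * f m * s) (Icc 0 h) := by
    apply ContinuousOn.sub _ (continuousOn_const.mul continuousOn_id)
    exact (hFcont.comp hcp (fun s hs => (hmem s hs).1)).sub (hFcont.comp hcn (fun s hs => (hmem s hs).2))
  -- integrability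
  have hgint : IntervalIntegrable (fun s : ℝ => f (m + s) + f (m - s) - 2 * f m) MeasureTheory.volume 0 h := by
    apply ContinuousOn.intervalIntegrable; rwa [huIcc]
  have hGint : IntervalIntegrable (fun s : ℝ => F (m + s) - F (m - s) - 2 * f m * s) MeasureTheory.volume 0 h := by
    apply ContinuousOn.intervalIntegrable; rwa [huIcc]
  have hsgint : IntervalIntegrable (fun s : ℝ => s * (f (m + s) + f (m - s) - 2 * f m)) MeasureTheory.volume 0 h := by
    apply ContinuousOn.intervalIntegrable; rw [huIcc]
    exact continuousOn_id.mul hgcont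
  -- derivative facts
  have hGderiv : ∀ s ∈ Icc (0:ℝ) h,
      HasDerivAt (fun s : ℝ => F (m + s) - F (m - s) - 2 * f m * s)
        (f (m + s) + f (m - s) - 2 * f m) s := by
    intro s hs
    obtain ⟨h1, h2⟩ := hmem s hs
    have d1 : HasDerivAt (fun s : ℝ => F (m + s)) (f (m + s)) s := by
      have := (hF _ h1).comp s ((hasDerivAt_id s).const_add m)
      simpa [Function.comp_def] using this
    have d2 : HasDerivAt (fun s : ℝ => F (m - s)) (-f (m - s)) s := by
      have := (hF _ h2).comp s ((hasDerivAt_id s).const_sub m)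
      simpa [Function.comp_def] using this
    have d3 : HasDerivAt (fun s : ℝ => 2 * f m * s) (2 * f m) s := by
      simpa using (hasDerivAt_id s).const_mul (2 * f m)
    have := (d1.sub d2).sub d3
    exact this.congr_deriv (by ring)
  -- FTC 1 : I1
  have A1 : (∫ s in (0:ℝ)..h, (f (m + s) + f (m - s) - 2 * f m))
      = F y - F x - 2 * f m * h := by
    rw [integral_eq_sub_of_hasDerivAt (fun s hs => hGderiv s (huIcc ▸ hs)) hgint]
    simp only [hmy, hmx]
    ring
  -- FTC 2 : IG
  have A2 : (∫ s in (0:ℝ)..h, (F (m + s) - F (m - s) - 2 * f m * s))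
      = Φ x - 2 * Φ m + Φ y - f m * h ^ 2 := by
    have hΨderiv : ∀ s ∈ uIcc (0:ℝ) h,
        HasDerivAt (fun s : ℝ => Φ (m + s) + Φ (m - s) - 2 * Φ m - f m * s ^ 2)
          (F (m + s) - F (m - s) - 2 * f m * s) s := by
      intro s hs
      rw [huIcc] at hs
      obtain ⟨h1, h2⟩ := hmem s hs
      have d1 : HasDerivAt (fun s : ℝ => Φ (m + s)) (F (m + s)) s := by
        have := (hΦ _ h1).comp s ((hasDerivAt_id s).const_add m)
        simpa [Function.comp_def] using this
      have d2 : HasDerivAt (fun s : ℝ => Φ (m - s)) (-F (m - s)) s := by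
        have := (hΦ _ h2).comp s ((hasDerivAt_id s).const_sub m)
        simpa [Function.comp_def] using this
      have d3 : HasDerivAt (fun s : ℝ => f m * s ^ 2) (f m * (2 * s)) s := by
        simpa using (hasDerivAt_pow 2 s).const_mul (f m)
      have := ((d1.add d2).sub (hasDerivAt_const s (2 * Φ m))).sub d3
      exact this.congr_deriv (by ring)
    rw [integral_eq_sub_of_hasDerivAt hΨderiv hGint]
    simp only [hmy, hmx]
    ring
  -- FTC 3 : integration by parts
  have A3 : (∫ s in (0:ℝ)..h, (F (m + s) - F (m - s) - 2 * f m * s))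
      + (∫ s in (0:ℝ)..h, s * (f (m + s) + f (m - s) - 2 * f m))
      = h * (F y - F x - 2 * f m * h) := by
    have hWderiv : ∀ s ∈ uIcc (0:ℝ) h,
        HasDerivAt (fun s : ℝ => s * (F (m + s) - F (m - s) - 2 * f m * s))
          ((F (m + s) - F (m - s) - 2 * f m * s)
            + s * (f (m + s) + f (m - s) - 2 * f m)) s := by
      intro s hs
      rw [huIcc] at hs
      have := (hasDerivAt_id s).mul (hGderiv s hs)
      simp only [id_eq, one_mul] at this
      exact this
    have := integral_eq_sub_of_hasDerivAt hWderiv (hGint.add hsgint)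
    rw [integral_add hGint hsgint] at this
    rw [this]
    simp only [hmy, hmx]
    ring
  -- the key kernel integral J
  set s0 : ℝ := h / 2 + h / a with hs0def
  have hs00 : 0 < s0 := by rw [hs0def]; positivity
  have hs0h : s0 < h := by
    rw [hs0def]
    have : h / a ≤ h / 6 := by
      apply div_le_div_of_nonneg_left hh0.le (by norm_num) ha
    linarith
  have has0 : a * s0 = (1 + a / 2) * h := by
    rw [hs0def]; field_simp; ring
  -- convexity helper
  have seg : ∀ p ∈ Icc x y, ∀ q ∈ Icc x y, ∀ t : ℝ, 0 ≤ t → t ≤ 1 →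
      f ((1 - t) * p + t * q) ≤ (1 - t) * f p + t * f q := by
    intro p hp q hq t ht0 ht1
    exact hconv.2 hp hq (by linarith) ht0 (by ring)
  have hmmem : m ∈ Icc x y := ⟨by rw [hm]; linarith, by rw [hm]; linarith⟩
  have hs0mem : m + s0 ∈ Icc x y ∧ m - s0 ∈ Icc x y := hmem s0 ⟨hs00.le, hs0h.le⟩
  -- g s0 ≥ 0
  have hgs0 : 0 ≤ f (m + s0) + f (m - s0) - 2 * f m := by
    have := hconv.2 hs0mem.2 hs0mem.1 (by norm_num : (0:ℝ) ≤ 1/2) (by norm_num : (0:ℝ) ≤ 1/2) (by norm_num)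
    have hmid : (1/2 : ℝ) • (m - s0) + (1/2 : ℝ) • (m + s0) = m := by
      simp [smul_eq_mul]; ring
    rw [hmid] at this
    simp only [smul_eq_mul] at this
    linarith
  set L : ℝ := (f (m + s0) + f (m - s0) - 2 * f m) / s0 with hLdef
  have hL0 : 0 ≤ L := div_nonneg hgs0 hs00.le
  have hLs0 : L * s0 = f (m + s0) + f (m - s0) - 2 * f m := by
    rw [hLdef]; field_simp
  -- convexity slope inequalities
  have C1 : ∀ s ∈ Icc (0:ℝ) h, s ≤ s0 →
      f (m + s) + f (m - s) - 2 * f m ≤ L * s := by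
    intro s hs hss0
    obtain ⟨h1, h2⟩ := hmem s hs
    set t : ℝ := s / s0 with htdef
    have ht0 : 0 ≤ t := by rw [htdef]; exact div_nonneg hs.1 hs00.le
    have ht1 : t ≤ 1 := by rw [htdef]; rw [div_le_one hs00]; exact hss0
    have hts0 : t * s0 = s := by rw [htdef]; field_simp
    have e1 : (1 - t) * m + t * (m + s0) = m + s := by rw [← hts0]; ring
    have e2 : (1 - t) * m + t * (m - s0) = m - s := by rw [← hts0]; ring
    have i1 := seg m hmmem (m + s0) hs0mem.1 t ht0 ht1
    have i2 := seg m hmmem (m - s0) hs0mem.2 t ht0 ht1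
    rw [e1] at i1; rw [e2] at i2
    have : L * s = t * (f (m + s0) + f (m - s0) - 2 * f m) := by
      rw [← hLs0, ← hts0]; ring
    rw [this]
    linarith
  have C2 : ∀ s ∈ Icc (0:ℝ) h, s0 ≤ s →
      L * s ≤ f (m + s) + f (m - s) - 2 * f m := by
    intro s hs hss0
    obtain ⟨h1, h2⟩ := hmem s hs
    have hspos : 0 < s := lt_of_lt_of_le hs00 hss0
    set t : ℝ := s0 / s with htdef
    have ht0 : 0 ≤ t := by rw [htdef]; exact div_nonneg hs00.le hspos.le
    have ht1 : t ≤ 1 := by rw [htdef, div_le_one hspos]; exact hss0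
    have hts : t * s = s0 := by rw [htdef]; field_simp
    have e1 : (1 - t) * m + t * (m + s) = m + s0 := by rw [← hts]; ring
    have e2 : (1 - t) * m + t * (m - s) = m - s0 := by rw [← hts]; ring
    have i1 := seg m hmmem (m + s) h1 t ht0 ht1
    have i2 := seg m hmmem (m - s) h2 t ht0 ht1
    rw [e1] at i1; rw [e2] at i2
    -- g s0 ≤ t * g s ; multiply by s/s0 ... : L * s = (g s0) * s / s0 ≤ g s
    have key : f (m + s0) + f (m - s0) - 2 * f m ≤ t * (f (m + s) + f (m - s) - 2 * f m) := by
      linarith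
    rw [← hLs0] at key
    -- L * s0 ≤ (s0/s) * g s → L * s ≤ g s
    have := mul_le_mul_of_nonneg_left key (le_of_lt (by positivity : (0:ℝ) < s / s0))
    calc L * s = s / s0 * (L * s0) := by field_simp
    _ ≤ s / s0 * (t * (f (m + s) + f (m - s) - 2 * f m)) := this
    _ = f (m + s) + f (m - s) - 2 * f m := by rw [htdef]; field_simp
  -- pointwise kernel inequality
  have hpt : ∀ s ∈ Icc (0:ℝ) h,
      ((1 + a / 2) * h - a * s) * (f (m + s) + f (m - s) - 2 * f m)
        ≤ L * (((1 + a / 2) * h - a * s) * s) := by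
    intro s hs
    have hk : (1 + a / 2) * h - a * s = a * (s0 - s) := by rw [← has0]; ring
    rcases le_total s s0 with hle | hge
    · have hknn : 0 ≤ (1 + a / 2) * h - a * s := by
        rw [hk]; exact mul_nonneg ha0.le (by linarith)
      calc ((1 + a / 2) * h - a * s) * (f (m + s) + f (m - s) - 2 * f m)
          ≤ ((1 + a / 2) * h - a * s) * (L * s) :=
            mul_le_mul_of_nonneg_left (C1 s hs hle) hknn
        _ = L * (((1 + a / 2) * h - a * s) * s) := by ring
    · have hknp : (1 + a / 2) * h - a * s ≤ 0 := by
        rw [hk]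
        exact mul_nonpos_of_nonneg_of_nonpos ha0.le (by linarith)
      calc ((1 + a / 2) * h - a * s) * (f (m + s) + f (m - s) - 2 * f m)
          ≤ ((1 + a / 2) * h - a * s) * (L * s) :=
            mul_le_mul_of_nonpos_left (C2 s hs hge) hknp
        _ = L * (((1 + a / 2) * h - a * s) * s) := by ring
  -- integrability of the kernel integrand and the comparison function
  have hkgint : IntervalIntegrable
      (fun s : ℝ => ((1 + a / 2) * h - a * s) * (f (m + s) + f (m - s) - 2 * f m))
      MeasureTheory.volume 0 h := by
    apply ContinuousOn.intervalIntegrable; rw [huIcc]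
    exact ((continuous_const.sub (continuous_const.mul continuous_id)).continuousOn).mul hgcont
  have hrint : IntervalIntegrable (fun s : ℝ => L * (((1 + a / 2) * h - a * s) * s))
      MeasureTheory.volume 0 h := by
    apply Continuous.intervalIntegrable
    exact continuous_const.mul ((continuous_const.sub (continuous_const.mul continuous_id)).mul continuous_id)
  have hmono := integral_mono_on hh0.le hkgint hrint hpt
  -- value of the comparison integral
  have e4 : (∫ s in (0:ℝ)..h, L * (((1 + a / 2) * h - a * s) * s))
      = L * ((1 + a / 2) * h * (h ^ 2 / 2) - a * (h ^ 3 / 3)) := by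
    rw [integral_const_mul]
    congr 1
    have hd : ∀ s ∈ uIcc (0:ℝ) h,
        HasDerivAt (fun s : ℝ => (1 + a / 2) * h / 2 * s ^ 2 - a / 3 * s ^ 3)
          (((1 + a / 2) * h - a * s) * s) s := by
      intro s _
      have h1 := (hasDerivAt_pow 2 s).const_mul ((1 + a / 2) * h / 2)
      have h2 := (hasDerivAt_pow 3 s).const_mul (a / 3)
      have := h1.sub h2
      exact this.congr_deriv (by push_cast; ring)
    rw [integral_eq_sub_of_hasDerivAt hd (by apply Continuous.intervalIntegrable; exact (continuous_const.sub (continuous_const.mul continuous_id)).mul continuous_id)]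
    ring
  have hK : (1 + a / 2) * h * (h ^ 2 / 2) - a * (h ^ 3 / 3) ≤ 0 := by
    nlinarith [pow_pos hh0 3]
  have hJ : (∫ s in (0:ℝ)..h,
      ((1 + a / 2) * h - a * s) * (f (m + s) + f (m - s) - 2 * f m)) ≤ 0 := by
    refine le_trans hmono ?_
    rw [e4]
    exact mul_nonpos_of_nonneg_of_nonpos hL0 hK
  -- linearity: J = c * I1 - a * I2
  have A4 : (∫ s in (0:ℝ)..h,
      ((1 + a / 2) * h - a * s) * (f (m + s) + f (m - s) - 2 * f m))
      = (1 + a / 2) * h * (∫ s in (0:ℝ)..h, (f (m + s) + f (m - s) - 2 * f m))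
        - a * (∫ s in (0:ℝ)..h, s * (f (m + s) + f (m - s) - 2 * f m)) := by
    rw [show (fun s : ℝ => ((1 + a / 2) * h - a * s) * (f (m + s) + f (m - s) - 2 * f m))
        = fun s : ℝ => (1 + a / 2) * h * (f (m + s) + f (m - s) - 2 * f m)
          - a * (s * (f (m + s) + f (m - s) - 2 * f m)) from funext fun s => by ring]
    rw [integral_sub (hgint.const_mul _) (hsgint.const_mul _),
      integral_const_mul, integral_const_mul]
  have hJ' : (1 + a / 2) * h * (∫ s in (0:ℝ)..h, (f (m + s) + f (m - s) - 2 * f m))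
      - a * (∫ s in (0:ℝ)..h, s * (f (m + s) + f (m - s) - 2 * f m)) ≤ 0 := A4 ▸ hJ
  -- final algebra
  have hyx2 : y - x = 2 * h := by rw [hh]; ring
  have hP : F y - F x = (∫ s in (0:ℝ)..h, (f (m + s) + f (m - s) - 2 * f m)) + 2 * f m * h := by
    linarith [A1]
  have hQ : Φ x - 2 * Φ m + Φ y
      = h * (∫ s in (0:ℝ)..h, (f (m + s) + f (m - s) - 2 * f m))
        - (∫ s in (0:ℝ)..h, s * (f (m + s) + f (m - s) - 2 * f m)) + f m * h ^ 2 := by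
    linear_combination (-1 : ℝ) * A2 + A3 - h * A1
  rw [hyx2, hP, hQ]
  set i1 := ∫ s in (0:ℝ)..h, (f (m + s) + f (m - s) - 2 * f m) with hi1
  set i2 := ∫ s in (0:ℝ)..h, s * (f (m + s) + f (m - s) - 2 * f m) with hi2
  rw [div_add_div _ _ (by positivity) (by positivity), div_le_iff₀ (by positivity)]
  have h4J : 4 * h * ((1 + a / 2) * h * i1 - a * i2) ≤ 0 :=
    mul_nonpos_of_nonneg_of_nonpos (by positivity) hJ'
  nlinarith [h4J]
end

section
/- If a ≥ -6, then for every function f : ℝ → ℝ convex and continuous on [x, y], T_a f(x,y) ≤ (f(x) + f(y))/2. -/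
set_option maxHeartbeats 1000000

open intervalIntegral MeasureTheory Set

/-- Integral of a combination of `1, u, u^2, g u, u * g u` over `0..h`. -/
private lemma comb_integral (h c0 c1 c2 c3 c4 : ℝ) (g : ℝ → ℝ)
    (hg : IntervalIntegrable g volume 0 h)
    (hug : IntervalIntegrable (fun u => u * g u) volume 0 h) :
    ∫ u in (0:ℝ)..h, (c0 + c1 * u + c2 * u ^ 2 + c3 * g u + c4 * (u * g u)) =
      c0 * h + c1 * h ^ 2 / 2 + c2 * h ^ 3 / 3 + c3 * (∫ u in (0:ℝ)..h, g u)
        + c4 * (∫ u in (0:ℝ)..h, u * g u) := by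
  have i0 : IntervalIntegrable (fun u : ℝ => c0 + c1 * u + c2 * u ^ 2) volume 0 h :=
    ((continuous_const.add (continuous_const.mul continuous_id)).add
      (continuous_const.mul (continuous_pow 2))).intervalIntegrable _ _
  have i3 : IntervalIntegrable (fun u : ℝ => c3 * g u) volume 0 h := hg.const_mul c3
  have i4 : IntervalIntegrable (fun u : ℝ => c4 * (u * g u)) volume 0 h := hug.const_mul c4
  have e1 : ∫ u in (0:ℝ)..h, (c0 + c1 * u + c2 * u ^ 2 + c3 * g u + c4 * (u * g u)) =
      (∫ u in (0:ℝ)..h, (c0 + c1 * u + c2 * u ^ 2)) + (∫ u in (0:ℝ)..h, c3 * g u)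
        + (∫ u in (0:ℝ)..h, c4 * (u * g u)) := by
    rw [← intervalIntegral.integral_add i0 i3, ← intervalIntegral.integral_add (i0.add i3) i4]
  have e2 : ∫ u in (0:ℝ)..h, (c0 + c1 * u + c2 * u ^ 2) =
      c0 * h + c1 * h ^ 2 / 2 + c2 * h ^ 3 / 3 := by
    have i00 : IntervalIntegrable (fun _ : ℝ => c0) volume 0 h := intervalIntegrable_const
    have i01 : IntervalIntegrable (fun u : ℝ => c1 * u) volume 0 h :=
      (continuous_const.mul continuous_id).intervalIntegrable _ _
    have i02 : IntervalIntegrable (fun u : ℝ => c2 * u ^ 2) volume 0 h :=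
      (continuous_const.mul (continuous_pow 2)).intervalIntegrable _ _
    rw [intervalIntegral.integral_add (i00.add i01) i02, intervalIntegral.integral_add i00 i01,
      intervalIntegral.integral_const, intervalIntegral.integral_const_mul,
      intervalIntegral.integral_const_mul, integral_id, integral_pow]
    push_cast
    simp [smul_eq_mul]
    ring
  rw [e1, e2, intervalIntegral.integral_const_mul, intervalIntegral.integral_const_mul]

private lemma final_ineq (h S A B a : ℝ) (h0 : 0 < h) (ha : -6 ≤ a)
    (F1 : A ≤ h * S) (F2 : h * A ≤ 2 * B) (F3 : 6 * B ≤ h ^ 2 * S + 2 * h * A) :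
    h * A * (1 + a / 2) - a * B ≤ h ^ 2 * S := by
  rcases le_total a 0 with ha0 | ha0
  · nlinarith [mul_nonneg (by linarith : (0:ℝ) ≤ 6 + a) (by linarith : 0 ≤ 2 * B - h * A), F3]
  · nlinarith [mul_nonneg ha0 (by linarith : 0 ≤ 2 * B - h * A),
      mul_le_mul_of_nonneg_left F1 h0.le]

theorem Ta_le_endpoints (x y : ℝ) (hxy : x < y) (a : ℝ) (ha : -6 ≤ a)
    (f F Φ : ℝ → ℝ)
    (hconv : ConvexOn ℝ (Set.Icc x y) f)
    (hcont : ContinuousOn f (Set.Icc x y))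
    (hF : ∀ t ∈ Set.Icc x y, HasDerivAt F (f t) t)
    (hΦ : ∀ t ∈ Set.Icc x y, HasDerivAt Φ (F t) t) :
    (1 - a / 2) * (F y - F x) / (y - x)
      + 2 * a * (Φ x - 2 * Φ ((x + y) / 2) + Φ y) / (y - x) ^ 2
      ≤ (f x + f y) / 2 := by
  set S := f x + f y with hSdef
  set m := (x + y) / 2 with hmdef
  set h := (y - x) / 2 with hhdef
  clear_value S m h
  have h0 : 0 < h := by rw [hhdef]; linarith
  have hmh : m + h = y := by rw [hmdef, hhdef]; ring
  have hmh' : m - h = x := by rw [hmdef, hhdef]; ring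
  have hxm : x ≤ m := by rw [hmdef]; linarith
  have hmy : m ≤ y := by rw [hmdef]; linarith
  -- membership
  have hmem : ∀ u : ℝ, 0 ≤ u → u ≤ h → m + u ∈ Icc x y ∧ m - u ∈ Icc x y := by
    intro u h0u huh
    constructor <;> constructor <;> linarith
  set g : ℝ → ℝ := fun u => f (m + u) + f (m - u) with hgdef
  clear_value g
  have hgh : g h = S := by
    rw [hgdef]; simp only [hmh, hmh', hSdef]; ring
  -- continuity of g on [0, h]
  have hcg : ContinuousOn g (Icc 0 h) := by
    rw [hgdef]
    apply ContinuousOn.add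
    · exact hcont.comp (continuous_const.add continuous_id).continuousOn
        (fun u hu => (hmem u hu.1 hu.2).1)
    · exact hcont.comp (continuous_const.sub continuous_id).continuousOn
        (fun u hu => (hmem u hu.1 hu.2).2)
  have ig : IntervalIntegrable g volume 0 h := hcg.intervalIntegrable_of_Icc h0.le
  have iug : IntervalIntegrable (fun u => u * g u) volume 0 h :=
    (continuousOn_id.mul hcg).intervalIntegrable_of_Icc h0.le
  -- convexity facts for g
  have gconv3 : ∀ p q r : ℝ, 0 ≤ p → p ≤ q → q ≤ r → r ≤ h →
      (r - p) * g q ≤ (r - q) * g p + (q - p) * g r := by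
    intro p q r hp hpq hqr hrh
    rcases eq_or_lt_of_le (hpq.trans hqr) with heq | hpr
    · have hq : q = p := le_antisymm (heq ▸ hqr) hpq
      have hr : r = p := heq.symm
      subst hq; subst hr
      simp
    · set lam := (r - q) / (r - p) with hlam
      set mu := (q - p) / (r - p) with hmu
      have hrp : (0:ℝ) < r - p := by linarith
      have hlam0 : 0 ≤ lam := by apply div_nonneg <;> linarith
      have hmu0 : 0 ≤ mu := by apply div_nonneg <;> linarith
      have hsum : lam + mu = 1 := by
        rw [hlam, hmu, ← add_div, show r - q + (q - p) = r - p from by ring,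
          div_self (ne_of_gt hrp)]
      have hmemp := hmem p hp (by linarith)
      have hmemr := hmem r (by linarith) hrh
      have h1 := hconv.2 hmemp.1 hmemr.1 hlam0 hmu0 hsum
      have h2 := hconv.2 hmemp.2 hmemr.2 hlam0 hmu0 hsum
      rw [smul_eq_mul, smul_eq_mul, smul_eq_mul, smul_eq_mul] at h1 h2
      have e1 : lam * (m + p) + mu * (m + r) = m + q := by
        rw [hlam, hmu]; field_simp; try ring
      have e2 : lam * (m - p) + mu * (m - r) = m - q := by
        rw [hlam, hmu]; field_simp; try ring
      rw [e1] at h1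
      rw [e2] at h2
      have hsumf : g q ≤ lam * g p + mu * g r := by
        rw [hgdef]; simp only []
        calc f (m + q) + f (m - q) ≤ (lam * f (m + p) + mu * f (m + r))
              + (lam * f (m - p) + mu * f (m - r)) := add_le_add h1 h2
          _ = lam * (f (m + p) + f (m - p)) + mu * (f (m + r) + f (m - r)) := by ring
      calc (r - p) * g q ≤ (r - p) * (lam * g p + mu * g r) :=
            mul_le_mul_of_nonneg_left hsumf hrp.le
        _ = (r - q) * g p + (q - p) * g r := by
            rw [hlam, hmu]; field_simp; try ring
  have gmono : ∀ u v : ℝ, 0 ≤ u → u ≤ v → v ≤ h → g u ≤ g v := by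
    intro u v h0u huv hvh
    rcases eq_or_lt_of_le (h0u.trans huv) with heq | hv0
    · have hu0 : u = 0 := le_antisymm (heq ▸ huv) h0u
      rw [hu0, ← heq]
    · set lam := (v - u) / (2 * v) with hlam
      set mu := (v + u) / (2 * v) with hmu
      have hlam0 : 0 ≤ lam := by apply div_nonneg <;> linarith
      have hmu0 : 0 ≤ mu := by apply div_nonneg <;> linarith
      have hsum1 : lam + mu = 1 := by
        rw [hlam, hmu, ← add_div, show v - u + (v + u) = 2 * v from by ring,
          div_self (by positivity : (2:ℝ) * v ≠ 0)]
      have hsum2 : mu + lam = 1 := by linarith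
      have hmemv := hmem v (by linarith) hvh
      have h1 := hconv.2 hmemv.2 hmemv.1 hlam0 hmu0 hsum1
      have h2 := hconv.2 hmemv.2 hmemv.1 hmu0 hlam0 hsum2
      rw [smul_eq_mul, smul_eq_mul, smul_eq_mul, smul_eq_mul] at h1 h2
      have e1 : lam * (m - v) + mu * (m + v) = m + u := by
        rw [hlam, hmu]; field_simp; try ring
      have e2 : mu * (m - v) + lam * (m + v) = m - u := by
        rw [hlam, hmu]; field_simp; try ring
      rw [e1] at h1
      rw [e2] at h2
      have hs : lam * f (m - v) + mu * f (m + v) + (mu * f (m - v) + lam * f (m + v))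
          = f (m - v) + f (m + v) := by
        linear_combination (f (m - v) + f (m + v)) * hsum1
      have : f (m + u) + f (m - u) ≤ f (m - v) + f (m + v) := by linarith [h1, h2, hs]
      rw [hgdef]; simp only []
      linarith
  -- the integrals A and B
  set A := ∫ u in (0:ℝ)..h, g u with hAdef
  set B := ∫ u in (0:ℝ)..h, u * g u with hBdef
  clear_value A B
  -- Fact 1 : A ≤ h * S
  have F1 : A ≤ h * S := by
    rw [hAdef]
    have : (∫ u in (0:ℝ)..h, g u) ≤ ∫ _u in (0:ℝ)..h, S := by
      apply intervalIntegral.integral_mono_on h0.le ig intervalIntegrable_const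
      intro u hu
      rw [← hgh]
      exact gmono u h hu.1 hu.2 le_rfl
    rwa [intervalIntegral.integral_const, smul_eq_mul, sub_zero] at this
  -- Fact 2 : h * A ≤ 2 * B
  have F2 : h * A ≤ 2 * B := by
    set K := g (h / 2) with hKdef
    clear_value K
    have hnn : ∀ u ∈ Icc (0:ℝ) h,
        0 ≤ h * K + (-(2 * K)) * u + 0 * u ^ 2 + (-h) * g u + 2 * (u * g u) := by
      intro u hu
      have e : h * K + (-(2 * K)) * u + 0 * u ^ 2 + (-h) * g u + 2 * (u * g u)
          = (2 * u - h) * (g u - K) := by ring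
      rw [e]
      rcases le_total u (h / 2) with hc | hc
      · have w1 : 2 * u - h ≤ 0 := by linarith
        have w2 : g u - K ≤ 0 := by
          have := gmono u (h / 2) hu.1 hc (by linarith)
          rw [← hKdef] at this; linarith
        exact mul_nonneg_of_nonpos_of_nonpos w1 w2
      · have w1 : 0 ≤ 2 * u - h := by linarith
        have w2 : 0 ≤ g u - K := by
          have := gmono (h / 2) u (by linarith) hc hu.2
          rw [← hKdef] at this; linarith
        exact mul_nonneg w1 w2
    have hint := intervalIntegral.integral_nonneg (μ := volume) h0.le hnn
    rw [comb_integral h (h * K) (-(2 * K)) 0 (-h) 2 g ig iug] at hint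
    rw [← hAdef, ← hBdef] at hint
    nlinarith [hint]
  -- Fact 3 : 6 * B ≤ h ^ 2 * S + 2 * h * A
  have F3 : 6 * B ≤ h ^ 2 * S + 2 * h * A := by
    set K := S - g (h / 3) with hKdef
    clear_value K
    have hnn : ∀ u ∈ Icc (0:ℝ) h,
        0 ≤ (-(4 * h ^ 2 * S) + 6 * K * h ^ 2) + (12 * h * S - 24 * K * h) * u
          + (18 * K) * u ^ 2 + (4 * h ^ 2) * g u + (-(12 * h)) * (u * g u) := by
      intro u hu
      have e : (-(4 * h ^ 2 * S) + 6 * K * h ^ 2) + (12 * h * S - 24 * K * h) * u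
            + (18 * K) * u ^ 2 + (4 * h ^ 2) * g u + (-(12 * h)) * (u * g u)
          = (6 * u - 2 * h) * (2 * h * (S - g u) - 3 * K * (h - u)) := by ring
      rw [e]
      rcases le_total u (h / 3) with hc | hc
      · have w1 : 6 * u - 2 * h ≤ 0 := by linarith
        have w2 : 2 * h * (S - g u) - 3 * K * (h - u) ≤ 0 := by
          have hc3 := gconv3 u (h / 3) h hu.1 hc (by linarith) le_rfl
          rw [hgh] at hc3
          rw [hKdef]
          linarith [hc3]
        exact mul_nonneg_of_nonpos_of_nonpos w1 w2
      · have w1 : 0 ≤ 6 * u - 2 * h := by linarith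
        have w2 : 0 ≤ 2 * h * (S - g u) - 3 * K * (h - u) := by
          have hc3 := gconv3 (h / 3) u h (by linarith) hc hu.2 le_rfl
          rw [hgh] at hc3
          rw [hKdef]
          linarith [hc3]
        exact mul_nonneg w1 w2
    have hint := intervalIntegral.integral_nonneg (μ := volume) h0.le hnn
    rw [comb_integral h (-(4 * h ^ 2 * S) + 6 * K * h ^ 2) (12 * h * S - 24 * K * h)
      (18 * K) (4 * h ^ 2) (-(12 * h)) g ig iug] at hint
    rw [← hAdef, ← hBdef] at hint
    have H2 : 0 ≤ (2 * h) * (h ^ 2 * S + 2 * h * A - 6 * B) := by nlinarith [hint]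
    nlinarith [H2, h0]
  -- FTC and integration by parts to identify A and B with F, Φ
  have hfint : IntervalIntegrable f volume x y := hcont.intervalIntegrable_of_Icc hxy.le
  have hfint1 : IntervalIntegrable f volume x m :=
    (hcont.mono (Icc_subset_Icc le_rfl hmy)).intervalIntegrable_of_Icc hxm
  have hfint2 : IntervalIntegrable f volume m y :=
    (hcont.mono (Icc_subset_Icc hxm le_rfl)).intervalIntegrable_of_Icc hmy
  have hFcont : ContinuousOn F (Icc x y) :=
    fun t ht => (hF t ht).continuousAt.continuousWithinAt
  have hFint1 : IntervalIntegrable F volume x m :=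
    (hFcont.mono (Icc_subset_Icc le_rfl hmy)).intervalIntegrable_of_Icc hxm
  have hFint2 : IntervalIntegrable F volume m y :=
    (hFcont.mono (Icc_subset_Icc hxm le_rfl)).intervalIntegrable_of_Icc hmy
  have hFTCf : ∫ t in x..y, f t = F y - F x := by
    apply intervalIntegral.integral_eq_sub_of_hasDerivAt
    · intro t ht
      rw [uIcc_of_le hxy.le] at ht
      exact hF t ht
    · exact hfint
  have hFTC1 : ∫ t in x..m, F t = Φ m - Φ x := by
    apply intervalIntegral.integral_eq_sub_of_hasDerivAt
    · intro t ht
      rw [uIcc_of_le hxm] at ht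
      exact hΦ t (Icc_subset_Icc le_rfl hmy ht)
    · exact hFint1
  have hFTC2 : ∫ t in m..y, F t = Φ y - Φ m := by
    apply intervalIntegral.integral_eq_sub_of_hasDerivAt
    · intro t ht
      rw [uIcc_of_le hmy] at ht
      exact hΦ t (Icc_subset_Icc hxm le_rfl ht)
    · exact hFint2
  -- integration by parts on [x, m] and [m, y]
  have hIBP1 : ∫ t in x..m, (t - m) * f t = (m - m) * F m - (x - m) * F x
      - ∫ t in x..m, 1 * F t := by
    apply intervalIntegral.integral_mul_deriv_eq_deriv_mul
    · intro t _; exact (hasDerivAt_id t).sub_const m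
    · intro t ht
      rw [uIcc_of_le hxm] at ht
      exact hF t (Icc_subset_Icc le_rfl hmy ht)
    · exact intervalIntegrable_const
    · exact hfint1
  have hIBP2 : ∫ t in m..y, (t - m) * f t = (y - m) * F y - (m - m) * F m
      - ∫ t in m..y, 1 * F t := by
    apply intervalIntegral.integral_mul_deriv_eq_deriv_mul
    · intro t _; exact (hasDerivAt_id t).sub_const m
    · intro t ht
      rw [uIcc_of_le hmy] at ht
      exact hF t (Icc_subset_Icc hxm le_rfl ht)
    · exact intervalIntegrable_const
    · exact hfint2
  simp only [one_mul, sub_self, zero_mul, zero_sub, sub_zero] at hIBP1 hIBP2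
  rw [hFTC1] at hIBP1
  rw [hFTC2] at hIBP2
  -- substitution to [0, h]
  have hS1 : ∫ u in (0:ℝ)..h, f (m + u) = ∫ t in m..y, f t := by
    rw [intervalIntegral.integral_comp_add_left f m, add_zero, hmh]
  have hS2 : ∫ u in (0:ℝ)..h, f (m - u) = ∫ t in x..m, f t := by
    rw [intervalIntegral.integral_comp_sub_left f m, sub_zero, hmh']
  have hS3 : ∫ u in (0:ℝ)..h, u * f (m + u) = ∫ t in m..y, (t - m) * f t := by
    have e : (fun u : ℝ => u * f (m + u)) = fun u : ℝ => (m + u - m) * f (m + u) := by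
      funext u; ring_nf
    rw [e, intervalIntegral.integral_comp_add_left (fun t => (t - m) * f t) m, add_zero, hmh]
  have hS4 : ∫ u in (0:ℝ)..h, u * f (m - u) = -∫ t in x..m, (t - m) * f t := by
    have e : (fun u : ℝ => u * f (m - u)) = fun u : ℝ => -((m - u - m) * f (m - u)) := by
      funext u; ring_nf
    rw [e, intervalIntegral.integral_neg,
      intervalIntegral.integral_comp_sub_left (fun t => (t - m) * f t) m, sub_zero, hmh']
  -- integrability of the shifted pieces
  have ifp : IntervalIntegrable (fun u => f (m + u)) volume 0 h := by
    apply ContinuousOn.intervalIntegrable_of_Icc h0.le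
    exact hcont.comp (continuous_const.add continuous_id).continuousOn
      (fun u hu => (hmem u hu.1 hu.2).1)
  have ifm : IntervalIntegrable (fun u => f (m - u)) volume 0 h := by
    apply ContinuousOn.intervalIntegrable_of_Icc h0.le
    exact hcont.comp (continuous_const.sub continuous_id).continuousOn
      (fun u hu => (hmem u hu.1 hu.2).2)
  have iufp : IntervalIntegrable (fun u => u * f (m + u)) volume 0 h := by
    apply ContinuousOn.intervalIntegrable_of_Icc h0.le
    exact continuousOn_id.mul (hcont.comp (continuous_const.add continuous_id).continuousOn
      (fun u hu => (hmem u hu.1 hu.2).1))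
  have iufm : IntervalIntegrable (fun u => u * f (m - u)) volume 0 h := by
    apply ContinuousOn.intervalIntegrable_of_Icc h0.le
    exact continuousOn_id.mul (hcont.comp (continuous_const.sub continuous_id).continuousOn
      (fun u hu => (hmem u hu.1 hu.2).2))
  -- A = F y - F x
  have hFA : F y - F x = A := by
    have hsplit : (∫ t in x..m, f t) + ∫ t in m..y, f t = ∫ t in x..y, f t :=
      intervalIntegral.integral_add_adjacent_intervals hfint1 hfint2
    have hAsplit : A = (∫ u in (0:ℝ)..h, f (m + u)) + ∫ u in (0:ℝ)..h, f (m - u) := by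
      rw [hAdef, hgdef, intervalIntegral.integral_add ifp ifm]
    rw [hAsplit, hS1, hS2, ← hFTCf, ← hsplit]
    ring
  -- Φ x - 2 Φ m + Φ y = h * A - B
  have hPhiB : Φ x - 2 * Φ m + Φ y = h * A - B := by
    have hBsplit : B = (∫ u in (0:ℝ)..h, u * f (m + u)) + ∫ u in (0:ℝ)..h, u * f (m - u) := by
      rw [hBdef, hgdef]
      have e : (fun u : ℝ => u * (f (m + u) + f (m - u)))
          = fun u : ℝ => u * f (m + u) + u * f (m - u) := by funext u; ring
      rw [e, intervalIntegral.integral_add iufp iufm]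
    have hB2 : B = (∫ t in m..y, (t - m) * f t) - ∫ t in x..m, (t - m) * f t := by
      rw [hBsplit, hS3, hS4]; ring
    rw [hB2, hIBP1, hIBP2, ← hFA]
    have hym : y - m = h := by linarith
    have hxm' : x - m = -h := by linarith
    rw [hym, hxm']
    ring
  -- final algebra
  have hyx : y - x = 2 * h := by rw [hhdef]; ring
  rw [hFA, hPhiB, hyx, ← sub_nonneg]
  have e : S / 2 - ((1 - a / 2) * A / (2 * h) + 2 * a * (h * A - B) / (2 * h) ^ 2)
      = (h ^ 2 * S - (h * A * (1 + a / 2) - a * B)) / (2 * h ^ 2) := by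
    field_simp
    ring
  rw [e]
  apply div_nonneg _ (by positivity)
  rw [sub_nonneg]
  exact final_ineq h S A B a h0 ha F1 F2 F3
end

section
/- If a ∈ (2, 6), then the expressions T_a f(x,y) and f((x+y)/2) are not comparable in the class of convex functions: there exist functions f₁, F₁, Φ₁ and f₂, F₂, Φ₂ (with f_i convex and continuous on [x, y], F_i' = f_i and Φ_i' = F_i on [x, y]) such that T_a f₁(x,y) > f₁((x+y)/2) and T_a f₂(x,y) < f₂((x+y)/2). -/
lemma abs_mul_self_hasDerivAt (t : ℝ) :
    HasDerivAt (fun u : ℝ => |u| * u / 2) |t| t := by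
  rcases lt_trichotomy t 0 with h | h | h
  · have h1 : HasDerivAt (fun u : ℝ => -(u * u) / 2) |t| t := by
      have := (((hasDerivAt_id t).mul (hasDerivAt_id t)).neg).div_const 2
      refine this.congr_deriv ?_
      rw [abs_of_neg h]; simp [id_eq]
    apply h1.congr_of_eventuallyEq
    filter_upwards [Iio_mem_nhds h] with u hu
    rw [abs_of_neg hu]; ring
  · subst h
    rw [hasDerivAt_iff_tendsto_slope]
    have ht : Filter.Tendsto (fun u : ℝ => |u| / 2) (nhdsWithin (0:ℝ) {(0:ℝ)}ᶜ) (nhds |(0:ℝ)|) := by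
      have := (continuous_abs.div_const 2).tendsto (0:ℝ)
      simpa using this.mono_left nhdsWithin_le_nhds
    apply ht.congr'
    filter_upwards [self_mem_nhdsWithin] with u hu
    have hu' : u ≠ 0 := hu
    simp only [slope, vsub_eq_sub, sub_zero, abs_zero, zero_mul, zero_div]
    rw [smul_eq_mul]; field_simp
  · have h1 : HasDerivAt (fun u : ℝ => (u * u) / 2) |t| t := by
      have := ((hasDerivAt_id t).mul (hasDerivAt_id t)).div_const 2
      refine this.congr_deriv ?_
      rw [abs_of_pos h]; simp [id_eq]
    apply h1.congr_of_eventuallyEq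
    filter_upwards [Ioi_mem_nhds h] with u hu
    rw [abs_of_pos hu]

lemma abs_mul_sq_hasDerivAt (t : ℝ) :
    HasDerivAt (fun u : ℝ => |u| * u ^ 2 / 6) (|t| * t / 2) t := by
  rcases lt_trichotomy t 0 with h | h | h
  · have h1 : HasDerivAt (fun u : ℝ => -(u ^ 3) / 6) (|t| * t / 2) t := by
      have := ((hasDerivAt_pow 3 t).neg).div_const 6
      refine this.congr_deriv ?_
      rw [abs_of_neg h]; push_cast; ring
    apply h1.congr_of_eventuallyEq
    filter_upwards [Iio_mem_nhds h] with u hu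
    rw [abs_of_neg hu]; ring
  · subst h
    rw [hasDerivAt_iff_tendsto_slope]
    have ht : Filter.Tendsto (fun u : ℝ => |u| * u / 6) (nhdsWithin (0:ℝ) {(0:ℝ)}ᶜ)
        (nhds (|(0:ℝ)| * 0 / 2)) := by
      have := ((continuous_abs.mul continuous_id).div_const 6).tendsto (0:ℝ)
      simpa using this.mono_left nhdsWithin_le_nhds
    apply ht.congr'
    filter_upwards [self_mem_nhdsWithin] with u hu
    have hu' : u ≠ 0 := hu
    simp only [slope, vsub_eq_sub, sub_zero, abs_zero, zero_mul, zero_div]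
    rw [smul_eq_mul]; field_simp
  · have h1 : HasDerivAt (fun u : ℝ => (u ^ 3) / 6) (|t| * t / 2) t := by
      have := (hasDerivAt_pow 3 t).div_const 6
      refine this.congr_deriv ?_
      rw [abs_of_pos h]; push_cast; ring
    apply h1.congr_of_eventuallyEq
    filter_upwards [Ioi_mem_nhds h] with u hu
    rw [abs_of_pos hu]; ring

theorem Ta_midpoint_incomparable (x y : ℝ) (hxy : x < y) (a : ℝ)
    (ha2 : 2 < a) (ha6 : a < 6) :
    (∃ f F Φ : ℝ → ℝ,
      ConvexOn ℝ (Set.Icc x y) f ∧ ContinuousOn f (Set.Icc x y) ∧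
      (∀ t ∈ Set.Icc x y, HasDerivAt F (f t) t) ∧
      (∀ t ∈ Set.Icc x y, HasDerivAt Φ (F t) t) ∧
      (1 - a / 2) * (F y - F x) / (y - x)
        + 2 * a * (Φ x - 2 * Φ ((x + y) / 2) + Φ y) / (y - x) ^ 2
        > f ((x + y) / 2)) ∧
    (∃ f F Φ : ℝ → ℝ,
      ConvexOn ℝ (Set.Icc x y) f ∧ ContinuousOn f (Set.Icc x y) ∧
      (∀ t ∈ Set.Icc x y, HasDerivAt F (f t) t) ∧
      (∀ t ∈ Set.Icc x y, HasDerivAt Φ (F t) t) ∧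
      (1 - a / 2) * (F y - F x) / (y - x)
        + 2 * a * (Φ x - 2 * Φ ((x + y) / 2) + Φ y) / (y - x) ^ 2
        < f ((x + y) / 2)) := by
  set m : ℝ := (x + y) / 2 with hm
  have hd : (0:ℝ) < y - x := sub_pos.2 hxy
  have hym : y - m = (y - x) / 2 := by rw [hm]; ring
  have hxm : x - m = -((y - x) / 2) := by rw [hm]; ring
  have hmm : m - m = 0 := sub_self m
  constructor
  · -- f = |t - m|
    refine ⟨fun t => |t - m|, fun t => |t - m| * (t - m) / 2,
      fun t => |t - m| * (t - m) ^ 2 / 6, ?_, ?_, ?_, ?_, ?_⟩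
    · refine ⟨convex_Icc x y, ?_⟩
      intro u _ v _ p q hp hq hpq
      simp only [smul_eq_mul]
      calc |p * u + q * v - m| = |p * (u - m) + q * (v - m)| := by
            congr 1; linear_combination m * hpq
        _ ≤ |p * (u - m)| + |q * (v - m)| := abs_add_le _ _
        _ = p * |u - m| + q * |v - m| := by
            rw [abs_mul, abs_mul, abs_of_nonneg hp, abs_of_nonneg hq]
    · exact (continuous_abs.comp (continuous_id.sub continuous_const)).continuousOn
    · intro t _
      have := (abs_mul_self_hasDerivAt (t - m)).comp t ((hasDerivAt_id t).sub_const m)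
      exact this.congr_deriv (by simp)
    · intro t _
      have := (abs_mul_sq_hasDerivAt (t - m)).comp t ((hasDerivAt_id t).sub_const m)
      exact this.congr_deriv (by simp)
    · beta_reduce
      rw [hmm, hym, hxm]
      have h2 : |(y - x) / 2| = (y - x) / 2 := abs_of_pos (by linarith)
      have h3 : |-((y - x) / 2)| = (y - x) / 2 := by rw [abs_neg, h2]
      rw [h2, h3, abs_zero]
      have key : (1 - a / 2) * ((y - x) / 2 * ((y - x) / 2) / 2 -
            (y - x) / 2 * -((y - x) / 2) / 2) / (y - x)
          + 2 * a * ((y - x) / 2 * (-((y - x) / 2)) ^ 2 / 6 - 2 * (0 * 0 ^ 2 / 6)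
            + (y - x) / 2 * ((y - x) / 2) ^ 2 / 6) / (y - x) ^ 2
          = (y - x) * (6 - a) / 24 := by
        field_simp
        ring
      rw [key]
      nlinarith [mul_pos hd (show (0:ℝ) < 6 - a by linarith)]
  · -- f = (t - m)^(2n)
    obtain ⟨n, hn⟩ := exists_nat_gt (2 / (a - 2))
    have ha2' : (0:ℝ) < a - 2 := by linarith
    have hN : 2 < (n : ℝ) * (a - 2) := by
      rw [div_lt_iff₀ ha2'] at hn
      linarith
    have hn1 : 1 ≤ n := by
      by_contra h
      push_neg at h
      interval_cases n
      · simp at hN; linarith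
    refine ⟨fun t => (t - m) ^ (2 * n),
      fun t => (t - m) ^ (2 * n + 1) / (2 * (n:ℝ) + 1),
      fun t => (t - m) ^ (2 * n + 2) / ((2 * (n:ℝ) + 1) * (2 * (n:ℝ) + 2)),
      ?_, ?_, ?_, ?_, ?_⟩
    · refine ⟨convex_Icc x y, ?_⟩
      intro u _ v _ p q hp hq hpq
      simp only [smul_eq_mul]
      have h := (Even.convexOn_pow (even_two_mul n)).2 (Set.mem_univ (u - m))
        (Set.mem_univ (v - m)) hp hq hpq
      simp only [smul_eq_mul] at h
      calc (p * u + q * v - m) ^ (2 * n) = (p * (u - m) + q * (v - m)) ^ (2 * n) := by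
            congr 1; linear_combination m * hpq
        _ ≤ p * (u - m) ^ (2 * n) + q * (v - m) ^ (2 * n) := h
    · exact (Continuous.continuousOn (by continuity))
    · intro t _
      have h1 := ((hasDerivAt_pow (2 * n + 1) (t - m)).comp t
        ((hasDerivAt_id t).sub_const m)).div_const (2 * (n:ℝ) + 1)
      refine h1.congr_deriv ?_
      have : (2 * n + 1 - 1) = 2 * n := by omega
      rw [this]
      push_cast
      field_simp
    · intro t _
      have h1 := ((hasDerivAt_pow (2 * n + 2) (t - m)).comp t
        ((hasDerivAt_id t).sub_const m)).div_const ((2 * (n:ℝ) + 1) * (2 * (n:ℝ) + 2))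
      refine h1.congr_deriv ?_
      have : (2 * n + 2 - 1) = 2 * n + 1 := by omega
      rw [this]
      push_cast
      have hK : (2 * (n:ℝ) + 1) ≠ 0 := by positivity
      have hL : (2 * (n:ℝ) + 2) ≠ 0 := by positivity
      field_simp
    · beta_reduce
      rw [hmm, hym, hxm]
      have hneg1 : (-((y - x) / 2)) ^ (2 * n + 1) = -(((y - x) / 2) ^ (2 * n + 1)) :=
        Odd.neg_pow ⟨n, by ring⟩ _
      have hneg2 : (-((y - x) / 2)) ^ (2 * n + 2) = ((y - x) / 2) ^ (2 * n + 2) :=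
        Even.neg_pow ⟨n + 1, by ring⟩ _
      have h0 : (0:ℝ) ^ (2 * n) = 0 := zero_pow (by omega)
      have h0' : (0:ℝ) ^ (2 * n + 2) = 0 := zero_pow (by omega)
      rw [hneg1, hneg2, h0, h0']
      set c : ℝ := ((y - x) / 2) ^ (2 * n) with hc
      have hcpos : 0 < c := pow_pos (by linarith) _
      have hp1 : ((y - x) / 2) ^ (2 * n + 1) = c * ((y - x) / 2) := by
        rw [hc, pow_succ]
      have hp2 : ((y - x) / 2) ^ (2 * n + 2) = c * ((y - x) / 2) * ((y - x) / 2) := by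
        rw [hc, pow_succ, pow_succ]
      rw [hp1, hp2]
      have hK : (0:ℝ) < 2 * (n:ℝ) + 1 := by positivity
      have hL : (0:ℝ) < 2 * (n:ℝ) + 2 := by positivity
      have key : (1 - a / 2) * (c * ((y - x) / 2) / (2 * (n:ℝ) + 1)
            - -(c * ((y - x) / 2)) / (2 * (n:ℝ) + 1)) / (y - x)
          + 2 * a * (c * ((y - x) / 2) * ((y - x) / 2) / ((2 * (n:ℝ) + 1) * (2 * (n:ℝ) + 2))
            - 2 * (0 / ((2 * (n:ℝ) + 1) * (2 * (n:ℝ) + 2)))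
            + c * ((y - x) / 2) * ((y - x) / 2) / ((2 * (n:ℝ) + 1) * (2 * (n:ℝ) + 2)))
            / (y - x) ^ 2
          = c * ((2 * (n:ℝ) + 2) - a * n) / ((2 * (n:ℝ) + 1) * (2 * (n:ℝ) + 2)) := by
        field_simp
        ring
      rw [key]
      apply div_neg_of_neg_of_pos
      · apply mul_neg_of_pos_of_neg hcpos
        nlinarith
      · positivity
end

section
/- If a < -6, then the expressions T_a f(x,y) and (f(x)+f(y))/2 are not comparable in the class of convex functions: there exist functions f₁, F₁, Φ₁ and f₂, F₂, Φ₂ (with f_i convex and continuous on [x, y], F_i' = f_i and Φ_i' = F_i on [x, y]) such that T_a f₁(x,y) > (f₁(x)+f₁(y))/2 and T_a f₂(x,y) < (f₂(x)+f₂(y))/2. -/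
lemma hasDerivAt_mul_abs (t : ℝ) : HasDerivAt (fun u : ℝ => u * |u|) (2 * |t|) t := by
  rcases lt_trichotomy t 0 with h | h | h
  · have h2 : HasDerivAt (fun u : ℝ => -(u * u)) (2 * |t|) t := by
      have := ((hasDerivAt_id t).mul (hasDerivAt_id t)).neg
      refine this.congr_deriv ?_
      simp [abs_of_neg h]; ring
    refine h2.congr_of_eventuallyEq ?_
    filter_upwards [eventually_lt_nhds h] with u hu
    rw [abs_of_neg hu]; ring
  · subst h
    rw [hasDerivAt_iff_tendsto]
    have he : (fun u : ℝ => ‖u - 0‖⁻¹ * ‖u * |u| - 0 * |0| - (u - 0) • (2 * |0|)‖) = fun u => |u| := by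
      funext u
      rcases eq_or_ne u 0 with rfl | hu
      · simp
      · have h1 : ‖u * |u| - 0 * |0| - (u - 0) • (2 * |0|)‖ = |u| * |u| := by
          simp [Real.norm_eq_abs, abs_mul, abs_abs]
        have h2 : ‖u - (0:ℝ)‖⁻¹ = |u|⁻¹ := by simp [Real.norm_eq_abs]
        rw [h1, h2, inv_mul_cancel_left₀ (abs_ne_zero.mpr hu)]
    rw [he]
    have := continuous_abs.tendsto (0:ℝ)
    simp only [abs_zero] at this
    exact this
  · have h2 : HasDerivAt (fun u : ℝ => u * u) (2 * |t|) t := by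
      have := (hasDerivAt_id t).mul (hasDerivAt_id t)
      refine this.congr_deriv ?_
      simp [abs_of_pos h]; ring
    refine h2.congr_of_eventuallyEq ?_
    filter_upwards [eventually_gt_nhds h] with u hu
    rw [abs_of_pos hu]

lemma hasDerivAt_abs_cube (t : ℝ) : HasDerivAt (fun u : ℝ => |u| ^ 3) (3 * (t * |t|)) t := by
  rcases lt_trichotomy t 0 with h | h | h
  · have h2 : HasDerivAt (fun u : ℝ => -(u ^ 3)) (3 * (t * |t|)) t := by
      have := (hasDerivAt_pow 3 t).neg
      refine this.congr_deriv ?_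
      simp [abs_of_neg h]; ring
    refine h2.congr_of_eventuallyEq ?_
    filter_upwards [eventually_lt_nhds h] with u hu
    rw [abs_of_neg hu]; ring
  · subst h
    rw [hasDerivAt_iff_tendsto]
    have he : (fun u : ℝ => ‖u - 0‖⁻¹ * ‖|u| ^ 3 - |(0:ℝ)| ^ 3 - (u - 0) • (3 * ((0:ℝ) * |(0:ℝ)|))‖) = fun u => |u| ^ 2 := by
      funext u
      rcases eq_or_ne u 0 with rfl | hu
      · simp
      · have h1 : ‖|u| ^ 3 - |(0:ℝ)| ^ 3 - (u - 0) • (3 * ((0:ℝ) * |(0:ℝ)|))‖ = |u| ^ 3 := by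
          simp [Real.norm_eq_abs, abs_pow, abs_abs]
        have h2 : ‖u - (0:ℝ)‖⁻¹ = |u|⁻¹ := by simp [Real.norm_eq_abs]
        rw [h1, h2]
        rw [pow_succ' |u| 2, inv_mul_cancel_left₀ (abs_ne_zero.mpr hu)]
    rw [he]
    have := ((continuous_pow 2).tendsto (0:ℝ))
    simpa using this
  · have h2 : HasDerivAt (fun u : ℝ => u ^ 3) (3 * (t * |t|)) t := by
      have := hasDerivAt_pow 3 t
      refine this.congr_deriv ?_
      simp [abs_of_pos h]; ring
    refine h2.congr_of_eventuallyEq ?_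
    filter_upwards [eventually_gt_nhds h] with u hu
    rw [abs_of_pos hu]

lemma tent_key (x y : ℝ) (hxy : x < y) (a q : ℝ) (hq0 : 0 ≤ q) (hq1 : q ≤ 1) :
    ∃ f F Φ : ℝ → ℝ,
      ConvexOn ℝ (Set.Icc x y) f ∧ ContinuousOn f (Set.Icc x y) ∧
      (∀ t ∈ Set.Icc x y, HasDerivAt F (f t) t) ∧
      (∀ t ∈ Set.Icc x y, HasDerivAt Φ (F t) t) ∧
      (1 - a / 2) * (F y - F x) / (y - x)
        + 2 * a * (Φ x - 2 * Φ ((x + y) / 2) + Φ y) / (y - x) ^ 2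
        - (f x + f y) / 2
      = (y - x) / 2 * ((q - 1) * (-(a * q ^ 2) + (3 + a / 2) * (q + 1))) / 6 := by
  set s : ℝ := (y - x) / 2 with hs_def
  have hs : 0 < s := by simp only [hs_def]; linarith
  set p : ℝ := (x + y) / 2 + q * s with hp_def
  refine ⟨fun t => |t - p|, fun t => (t - p) * |t - p| / 2, fun t => |t - p| ^ 3 / 6, ?_, ?_, ?_, ?_, ?_⟩
  · refine ⟨convex_Icc x y, ?_⟩
    intro u _ v _ A B hA hB hAB
    simp only [smul_eq_mul]
    calc |A * u + B * v - p| = |A * (u - p) + B * (v - p)| := by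
          rw [show A * u + B * v - p = A * (u - p) + B * (v - p) by linear_combination p * hAB]
      _ ≤ |A * (u - p)| + |B * (v - p)| := abs_add_le _ _
      _ = A * |u - p| + B * |v - p| := by
          rw [abs_mul, abs_mul, abs_of_nonneg hA, abs_of_nonneg hB]
  · exact (continuous_abs.comp (continuous_id.sub continuous_const)).continuousOn
  · intro t _
    have := ((hasDerivAt_mul_abs (t - p)).comp t ((hasDerivAt_id t).sub_const p)).div_const 2
    refine this.congr_deriv ?_
    simp [abs_mul]
  · intro t _
    have := ((hasDerivAt_abs_cube (t - p)).comp t ((hasDerivAt_id t).sub_const p)).div_const 6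
    refine this.congr_deriv ?_
    ring
  · have hxp : x - p = -((1 + q) * s) := by rw [hp_def, hs_def]; ring
    have hyp : y - p = (1 - q) * s := by rw [hp_def, hs_def]; ring
    have hmp : (x + y) / 2 - p = -(q * s) := by rw [hp_def]; ring
    have haxp : |x - p| = (1 + q) * s := by
      rw [hxp, abs_neg, abs_of_nonneg (by positivity)]
    have hayp : |y - p| = (1 - q) * s := by
      rw [hyp, abs_of_nonneg (by nlinarith)]
    have hamp : |(x + y) / 2 - p| = q * s := by
      rw [hmp, abs_neg, abs_of_nonneg (by positivity)]
    have hyx : y - x = 2 * s := by rw [hs_def]; ring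
    beta_reduce
    rw [haxp, hayp, hamp, hxp, hyp, hyx]
    field_simp
    ring

theorem Ta_endpoints_incomparable (x y : ℝ) (hxy : x < y) (a : ℝ)
    (ha : a < -6) :
    (∃ f F Φ : ℝ → ℝ,
      ConvexOn ℝ (Set.Icc x y) f ∧ ContinuousOn f (Set.Icc x y) ∧
      (∀ t ∈ Set.Icc x y, HasDerivAt F (f t) t) ∧
      (∀ t ∈ Set.Icc x y, HasDerivAt Φ (F t) t) ∧
      (1 - a / 2) * (F y - F x) / (y - x)
        + 2 * a * (Φ x - 2 * Φ ((x + y) / 2) + Φ y) / (y - x) ^ 2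
        > (f x + f y) / 2) ∧
    (∃ f F Φ : ℝ → ℝ,
      ConvexOn ℝ (Set.Icc x y) f ∧ ContinuousOn f (Set.Icc x y) ∧
      (∀ t ∈ Set.Icc x y, HasDerivAt F (f t) t) ∧
      (∀ t ∈ Set.Icc x y, HasDerivAt Φ (F t) t) ∧
      (1 - a / 2) * (F y - F x) / (y - x)
        + 2 * a * (Φ x - 2 * Φ ((x + y) / 2) + Φ y) / (y - x) ^ 2
        < (f x + f y) / 2) := by
  have ha0 : a < 0 := by linarith
  have ha0' : a ≠ 0 := ne_of_lt ha0
  constructor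
  · obtain ⟨f, F, Φ, h1, h2, h3, h4, heq⟩ := tent_key x y hxy a 0 le_rfl zero_le_one
    refine ⟨f, F, Φ, h1, h2, h3, h4, ?_⟩
    rw [gt_iff_lt, ← sub_pos, heq]
    have hs : 0 < (y - x) / 2 := by linarith
    nlinarith
  · set q : ℝ := Real.sqrt (1 + 6 / a) with hq_def
    have harg0 : 0 ≤ 1 + 6 / a := by
      have h6 : -1 < 6 / a := by
        rw [lt_div_iff_of_neg ha0]
        linarith
      linarith
    have harg1 : 1 + 6 / a < 1 := by
      have : 6 / a < 0 := div_neg_of_pos_of_neg (by norm_num) ha0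
      linarith
    have hq0 : 0 ≤ q := Real.sqrt_nonneg _
    have hq2 : q ^ 2 = 1 + 6 / a := Real.sq_sqrt harg0
    have hq1 : q < 1 := by
      nlinarith
    obtain ⟨f, F, Φ, h1, h2, h3, h4, heq⟩ := tent_key x y hxy a q hq0 hq1.le
    refine ⟨f, F, Φ, h1, h2, h3, h4, ?_⟩
    rw [← sub_neg, heq]
    have haq : a * q ^ 2 = a + 6 := by
      rw [hq2]; field_simp
    have hfac : (q - 1) * (-(a * q ^ 2) + (3 + a / 2) * (q + 1)) = (3 + a / 2) * (q - 1) ^ 2 := by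
      linear_combination (1 - q) * haq
    rw [hfac]
    have hs : 0 < (y - x) / 2 := by linarith
    have hne : q - 1 ≠ 0 := sub_ne_zero.mpr (ne_of_lt hq1)
    have hsq : 0 < (q - 1) ^ 2 := by positivity
    nlinarith [mul_pos hs hsq]
end

section
/- For all real numbers x < y and every function f : ℝ → ℝ that is convex and continuous on [x, y], one has 3·(1/(y-x)²) · ∫_x^y ∫_x^y f((s+t)/2) ds dt ≤ (2/(y-x)) · ∫_x^y f(t) dt + f((x+y)/2). -/
set_option maxHeartbeats 1000000

open Set MeasureTheory intervalIntegral

lemma key_chord (h : ℝ) (hh : 0 < h) (g : ℝ → ℝ)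
    (hg : ConvexOn ℝ (Set.Icc 0 h) g) (hc : ContinuousOn g (Set.Icc 0 h)) :
    ∫ v in (0:ℝ)..h, g v * (2 * h - 3 * v) ≤ g 0 * h ^ 2 / 2 := by
  set c : ℝ := 2 * h / 3 with hcdef
  have hc0 : 0 < c := by positivity
  have hch : c < h := by rw [hcdef]; linarith
  have hmemc : c ∈ Icc (0:ℝ) h := ⟨hc0.le, hch.le⟩
  have hmem0 : (0:ℝ) ∈ Icc (0:ℝ) h := ⟨le_rfl, hh.le⟩
  set ℓ : ℝ → ℝ := fun v => g 0 + (g c - g 0) * (v / c) with hldef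
  have hpt : ∀ v ∈ Icc (0:ℝ) h, g v * (2 * h - 3 * v) ≤ ℓ v * (2 * h - 3 * v) := by
    intro v hv
    rcases le_or_gt v c with hvc | hvc
    · have hgl : g v ≤ ℓ v := by
        have h2 := hg.2 hmem0 hmemc
          (show (0:ℝ) ≤ 1 - v / c by
            have : v / c ≤ 1 := (div_le_one hc0).2 hvc; linarith)
          (show (0:ℝ) ≤ v / c from div_nonneg hv.1 hc0.le)
          (show (1 - v / c) + v / c = 1 by ring)
        have hv' : (1 - v / c) • (0:ℝ) + (v / c) • c = v := by
          field_simp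
          simp [hc0.ne']
        rw [hv'] at h2
        simp only [hldef, smul_eq_mul] at h2 ⊢
        have he : (1 - v / c) * g 0 + v / c * g c = g 0 + (g c - g 0) * (v / c) := by ring
        linarith
      have : (0:ℝ) ≤ 2 * h - 3 * v := by rw [hcdef] at hvc; linarith
      exact mul_le_mul_of_nonneg_right hgl this
    · have hgl : ℓ v ≤ g v := by
        have hv0 : 0 < v := lt_trans hc0 hvc
        have h2 := hg.2 hmem0 (Set.mem_Icc.2 ⟨le_of_lt hv0, hv.2⟩)
          (show (0:ℝ) ≤ 1 - c / v by
            have : c / v ≤ 1 := (div_le_one hv0).2 hvc.le; linarith)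
          (show (0:ℝ) ≤ c / v by positivity)
          (show (1 - c / v) + c / v = 1 by ring)
        have hv' : (1 - c / v) • (0:ℝ) + (c / v) • v = c := by
          field_simp
          simp [hv0.ne']
        rw [hv'] at h2
        simp only [hldef, smul_eq_mul] at h2 ⊢
        have h3 : v * g c ≤ v * ((1 - c / v) * g 0 + c / v * g v) :=
          mul_le_mul_of_nonneg_left h2 hv0.le
        have h4 : v * ((1 - c / v) * g 0 + c / v * g v) = (v - c) * g 0 + c * g v := by
          field_simp; try ring
        rw [show g 0 + (g c - g 0) * (v / c) = (c * g 0 + (g c - g 0) * v) / c by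
          field_simp; try ring, div_le_iff₀ hc0]
        linarith
      have : 2 * h - 3 * v ≤ 0 := by rw [hcdef] at hvc; linarith
      exact mul_le_mul_of_nonpos_right hgl this
  have hint1 : IntervalIntegrable (fun v => g v * (2 * h - 3 * v)) volume 0 h := by
    apply ContinuousOn.intervalIntegrable
    rw [uIcc_of_le hh.le]
    exact hc.mul (by fun_prop)
  have hint2 : IntervalIntegrable (fun v => ℓ v * (2 * h - 3 * v)) volume 0 h := by
    apply ContinuousOn.intervalIntegrable
    apply Continuous.continuousOn
    fun_prop
  have hmono := intervalIntegral.integral_mono_on hh.le hint1 hint2 hpt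
  have hval : ∫ v in (0:ℝ)..h, ℓ v * (2 * h - 3 * v) = g 0 * h ^ 2 / 2 := by
    have heq : ∀ v : ℝ, ℓ v * (2 * h - 3 * v)
        = 2 * h * g 0 + (2 * h * ((g c - g 0) / c) - 3 * g 0) * v
          - 3 * ((g c - g 0) / c) * v ^ 2 := by
      intro v
      simp only [hldef]
      field_simp
      ring
    rw [intervalIntegral.integral_congr (g := fun v => 2 * h * g 0
      + (2 * h * ((g c - g 0) / c) - 3 * g 0) * v - 3 * ((g c - g 0) / c) * v ^ 2)
      (fun v _ => heq v)]
    rw [intervalIntegral.integral_sub (by apply Continuous.intervalIntegrable; fun_prop)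
      (by apply Continuous.intervalIntegrable; fun_prop),
      intervalIntegral.integral_add (by apply Continuous.intervalIntegrable; fun_prop)
      (by apply Continuous.intervalIntegrable; fun_prop),
      intervalIntegral.integral_const, intervalIntegral.integral_const_mul,
      intervalIntegral.integral_const_mul, integral_id, integral_pow]
    have : c ≠ 0 := ne_of_gt hc0
    field_simp
    ring
  linarith [hmono, hval.le]

theorem double_integral_ineq_i (x y : ℝ) (hxy : x < y) (f : ℝ → ℝ)
    (hconv : ConvexOn ℝ (Set.Icc x y) f)
    (hcont : ContinuousOn f (Set.Icc x y)) :
    3 * ((1 / (y - x) ^ 2) * ∫ s in x..y, ∫ t in x..y, f ((s + t) / 2))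
      ≤ (2 / (y - x)) * (∫ t in x..y, f t) + f ((x + y) / 2) := by
  set m : ℝ := (x + y) / 2 with hm
  set h : ℝ := (y - x) / 2 with hhdef
  have hh : 0 < h := by rw [hhdef]; linarith
  have hxm : x < m := by rw [hm]; linarith
  have hmy : m < y := by rw [hm]; linarith
  have hmmem : m ∈ Icc x y := ⟨hxm.le, hmy.le⟩
  set Φ : ℝ → ℝ := fun u => ∫ t in x..u, f t with hΦ
  have hfi : ∀ a b, a ∈ Icc x y → b ∈ Icc x y → IntervalIntegrable f volume a b := by
    intro a b ha hb
    exact (hcont.mono (uIcc_subset_Icc ha hb)).intervalIntegrable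
  have hΦcont : ContinuousOn Φ (Icc x y) := by
    have : ContinuousOn (fun u => ∫ t in x..u, f t) (uIcc x y) :=
      intervalIntegral.continuousOn_primitive_interval
        (by rw [uIcc_of_le hxy.le]; exact hcont.integrableOn_Icc)
    rwa [uIcc_of_le hxy.le] at this
  -- memberships of midpoints
  have hmidx : ∀ s ∈ Icc x y, (s + x) / 2 ∈ Icc x y := by
    intro s hs; exact ⟨by linarith [hs.1], by linarith [hs.2]⟩
  have hmidy : ∀ s ∈ Icc x y, (s + y) / 2 ∈ Icc x y := by
    intro s hs; exact ⟨by linarith [hs.1], by linarith [hs.2]⟩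
  -- inner integral
  have inner : ∀ s ∈ uIcc x y, (∫ t in x..y, f ((s + t) / 2))
      = 2 * (Φ ((s + y) / 2) - Φ ((s + x) / 2)) := by
    intro s hs
    rw [uIcc_of_le hxy.le] at hs
    have e1 : (∫ t in x..y, f ((s + t) / 2)) = ∫ t in x..y, f (2⁻¹ * t + s / 2) := by
      apply intervalIntegral.integral_congr
      intro t _
      show f ((s + t) / 2) = f (2⁻¹ * t + s / 2)
      rw [show (2⁻¹:ℝ) * t + s / 2 = (s + t) / 2 by ring]
    rw [e1, intervalIntegral.integral_comp_mul_add f (by norm_num : (2⁻¹:ℝ) ≠ 0) (s / 2)]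
    rw [show (2⁻¹:ℝ) * x + s / 2 = (s + x) / 2 by ring,
      show (2⁻¹:ℝ) * y + s / 2 = (s + y) / 2 by ring]
    rw [← intervalIntegral.integral_interval_sub_left
      (hfi x ((s + y) / 2) ⟨le_rfl, hxy.le⟩ (hmidy s hs))
      (hfi x ((s + x) / 2) ⟨le_rfl, hxy.le⟩ (hmidx s hs))]
    simp [smul_eq_mul]; rfl
  -- continuity of composed primitives
  have hcompy : ContinuousOn (fun s => Φ ((s + y) / 2)) (Icc x y) := by
    apply hΦcont.comp (by fun_prop)
    intro s hs; exact hmidy s hs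
  have hcompx : ContinuousOn (fun s => Φ ((s + x) / 2)) (Icc x y) := by
    apply hΦcont.comp (by fun_prop)
    intro s hs; exact hmidx s hs
  have hiy : IntervalIntegrable (fun s => Φ ((s + y) / 2)) volume x y := by
    apply ContinuousOn.intervalIntegrable; rwa [uIcc_of_le hxy.le]
  have hix : IntervalIntegrable (fun s => Φ ((s + x) / 2)) volume x y := by
    apply ContinuousOn.intervalIntegrable; rwa [uIcc_of_le hxy.le]
  have houter : (∫ s in x..y, ∫ t in x..y, f ((s + t) / 2))
      = 2 * ((∫ s in x..y, Φ ((s + y) / 2)) - ∫ s in x..y, Φ ((s + x) / 2)) := by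
    rw [intervalIntegral.integral_congr inner, intervalIntegral.integral_const_mul,
      intervalIntegral.integral_sub hiy hix]
  have hAy : (∫ s in x..y, Φ ((s + y) / 2)) = 2 * ∫ u in m..y, Φ u := by
    have e1 : (∫ s in x..y, Φ ((s + y) / 2)) = ∫ s in x..y, Φ (2⁻¹ * s + y / 2) := by
      apply intervalIntegral.integral_congr
      intro s _
      show Φ ((s + y) / 2) = Φ (2⁻¹ * s + y / 2)
      rw [show (2⁻¹:ℝ) * s + y / 2 = (s + y) / 2 by ring]
    rw [e1, intervalIntegral.integral_comp_mul_add Φ (by norm_num : (2⁻¹:ℝ) ≠ 0) (y / 2)]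
    rw [show (2⁻¹:ℝ) * x + y / 2 = m by rw [hm]; ring,
      show (2⁻¹:ℝ) * y + y / 2 = y by ring]
    simp [smul_eq_mul]
  have hAx : (∫ s in x..y, Φ ((s + x) / 2)) = 2 * ∫ u in x..m, Φ u := by
    have e1 : (∫ s in x..y, Φ ((s + x) / 2)) = ∫ s in x..y, Φ (2⁻¹ * s + x / 2) := by
      apply intervalIntegral.integral_congr
      intro s _
      show Φ ((s + x) / 2) = Φ (2⁻¹ * s + x / 2)
      rw [show (2⁻¹:ℝ) * s + x / 2 = (s + x) / 2 by ring]
    rw [e1, intervalIntegral.integral_comp_mul_add Φ (by norm_num : (2⁻¹:ℝ) ≠ 0) (x / 2)]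
    rw [show (2⁻¹:ℝ) * x + x / 2 = x by ring,
      show (2⁻¹:ℝ) * y + x / 2 = m by rw [hm]; ring]
    simp [smul_eq_mul]
  -- FTC derivative of Φ
  have hder : ∀ u ∈ Ioo x y, HasDerivAt Φ (f u) u := by
    intro u hu
    have hu' : u ∈ Icc x y := Ioo_subset_Icc_self hu
    exact intervalIntegral.integral_hasDerivAt_right
      (hfi x u ⟨le_rfl, hxy.le⟩ hu')
      (ContinuousOn.stronglyMeasurableAtFilter isOpen_Ioo
        (hcont.mono Ioo_subset_Icc_self) u hu)
      ((hcont u hu').continuousAt (Icc_mem_nhds hu.1 hu.2))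
  have hIccxm : Icc x m ⊆ Icc x y := Icc_subset_Icc le_rfl hmy.le
  have hIccmy : Icc m y ⊆ Icc x y := Icc_subset_Icc hxm.le le_rfl
  have hΦint1 : IntervalIntegrable Φ volume x m := by
    apply ContinuousOn.intervalIntegrable
    rw [uIcc_of_le hxm.le]; exact hΦcont.mono hIccxm
  have hΦint2 : IntervalIntegrable Φ volume m y := by
    apply ContinuousOn.intervalIntegrable
    rw [uIcc_of_le hmy.le]; exact hΦcont.mono hIccmy
  have hw1int : IntervalIntegrable (fun u => f u * (u - x)) volume x m := by
    apply ContinuousOn.intervalIntegrable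
    rw [uIcc_of_le hxm.le]
    exact ((hcont.mono hIccxm).mul (by fun_prop))
  have hw2int : IntervalIntegrable (fun u => f u * (u - y)) volume m y := by
    apply ContinuousOn.intervalIntegrable
    rw [uIcc_of_le hmy.le]
    exact ((hcont.mono hIccmy).mul (by fun_prop))
  -- integration by parts identities
  have ibp1 : (∫ u in x..m, Φ u) + (∫ u in x..m, f u * (u - x)) = Φ m * (m - x) := by
    rw [← intervalIntegral.integral_add hΦint1 hw1int]
    have := intervalIntegral.integral_eq_sub_of_hasDerivAt_of_le
      (f := fun u => Φ u * (u - x)) (f' := fun u => Φ u + f u * (u - x)) hxm.le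
      (((hΦcont.mono hIccxm).mul (by fun_prop)))
      (by
        intro u hu
        have hu' : u ∈ Ioo x y := ⟨hu.1, lt_trans hu.2 hmy⟩
        have := (hder u hu').mul ((hasDerivAt_id u).sub_const x)
        exact this.congr_deriv (by simp; ring))
      (hΦint1.add hw1int)
    rw [this]
    show Φ m * (m - x) - Φ x * (x - x) = Φ m * (m - x)
    have hx0 : Φ x = 0 := by simp [hΦ]
    rw [hx0]; ring
  have ibp2 : (∫ u in m..y, Φ u) + (∫ u in m..y, f u * (u - y)) = Φ m * (y - m) := by
    rw [← intervalIntegral.integral_add hΦint2 hw2int]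
    have := intervalIntegral.integral_eq_sub_of_hasDerivAt_of_le
      (f := fun u => Φ u * (u - y)) (f' := fun u => Φ u + f u * (u - y)) hmy.le
      (((hΦcont.mono hIccmy).mul (by fun_prop)))
      (by
        intro u hu
        have hu' : u ∈ Ioo x y := ⟨lt_trans hxm hu.1, hu.2⟩
        have := (hder u hu').mul ((hasDerivAt_id u).sub_const y)
        exact this.congr_deriv (by simp; ring))
      (hΦint2.add hw2int)
    rw [this]
    show Φ y * (y - y) - Φ m * (m - y) = Φ m * (y - m)
    ring
  -- substitution to symmetric function g
  set g : ℝ → ℝ := fun v => f (m - v) + f (m + v) with hg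
  have hmapsm : ∀ v ∈ Icc (0:ℝ) h, m - v ∈ Icc x y := by
    intro v hv
    constructor
    · have := hv.2; rw [hm, hhdef] at *; linarith
    · have := hv.1; rw [hm] at *; linarith
  have hmapsp : ∀ v ∈ Icc (0:ℝ) h, m + v ∈ Icc x y := by
    intro v hv
    constructor
    · have := hv.1; rw [hm] at *; linarith
    · have := hv.2; rw [hm, hhdef] at *; linarith
  have hcontm : ContinuousOn (fun v => f (m - v)) (Icc (0:ℝ) h) :=
    hcont.comp (by fun_prop) hmapsm
  have hcontp : ContinuousOn (fun v => f (m + v)) (Icc (0:ℝ) h) :=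
    hcont.comp (by fun_prop) hmapsp
  have hintm : ∀ (F : ℝ → ℝ), ContinuousOn F (Icc (0:ℝ) h) →
      IntervalIntegrable F volume 0 h := by
    intro F hF
    apply ContinuousOn.intervalIntegrable; rwa [uIcc_of_le hh.le]
  have s1 : (∫ u in x..m, f u * (u - x)) = ∫ v in (0:ℝ)..h, f (m - v) * (h - v) := by
    have := intervalIntegral.integral_comp_sub_left (fun u => f u * (u - x)) m
      (a := 0) (b := h)
    rw [show m - h = x by rw [hm, hhdef]; ring, show m - 0 = m by ring] at this
    rw [← this]
    apply intervalIntegral.integral_congr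
    intro v _
    show f (m - v) * (m - v - x) = f (m - v) * (h - v)
    rw [show m - v - x = h - v by rw [hm, hhdef]; ring]
  have s2 : (∫ u in m..y, f u * (u - y)) = -∫ v in (0:ℝ)..h, f (m + v) * (h - v) := by
    have := intervalIntegral.integral_comp_add_left (fun u => f u * (u - y)) m
      (a := 0) (b := h)
    rw [show m + 0 = m by ring, show m + h = y by rw [hm, hhdef]; ring] at this
    rw [← this, ← intervalIntegral.integral_neg]
    apply intervalIntegral.integral_congr
    intro v _
    show f (m + v) * (m + v - y) = -(f (m + v) * (h - v))
    rw [show m + v - y = -(h - v) by rw [hm, hhdef]; ring]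
    ring
  have sum1 : (∫ v in (0:ℝ)..h, f (m - v) * (h - v)) + (∫ v in (0:ℝ)..h, f (m + v) * (h - v))
      = ∫ v in (0:ℝ)..h, g v * (h - v) := by
    rw [← intervalIntegral.integral_add (hintm (fun v => f (m - v) * (h - v)) (hcontm.mul (by fun_prop)))
      (hintm (fun v => f (m + v) * (h - v)) (hcontp.mul (by fun_prop)))]
    apply intervalIntegral.integral_congr
    intro v _
    show f (m - v) * (h - v) + f (m + v) * (h - v) = (f (m - v) + f (m + v)) * (h - v)
    ring
  -- the uniform integral
  have t1 : (∫ u in x..m, f u) = ∫ v in (0:ℝ)..h, f (m - v) := by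
    have := intervalIntegral.integral_comp_sub_left f m (a := 0) (b := h)
    rw [show m - h = x by rw [hm, hhdef]; ring, show m - 0 = m by ring] at this
    rw [← this]
  have t2 : (∫ u in m..y, f u) = ∫ v in (0:ℝ)..h, f (m + v) := by
    have := intervalIntegral.integral_comp_add_left f m (a := 0) (b := h)
    rw [show m + 0 = m by ring, show m + h = y by rw [hm, hhdef]; ring] at this
    rw [← this]
  have tsum : (∫ t in x..y, f t) = ∫ v in (0:ℝ)..h, g v := by
    rw [← intervalIntegral.integral_add_adjacent_intervals
      (hfi x m ⟨le_rfl, hxy.le⟩ hmmem) (hfi m y hmmem ⟨hxy.le, le_rfl⟩),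
      t1, t2, ← intervalIntegral.integral_add (hintm _ hcontm) (hintm _ hcontp)]
  -- convexity and continuity of g
  have hgconv : ConvexOn ℝ (Icc (0:ℝ) h) g := by
    refine ⟨convex_Icc _ _, ?_⟩
    intro v hv w hw p q hp hq hpq
    have h1 := hconv.2 (hmapsm v hv) (hmapsm w hw) hp hq hpq
    have h2 := hconv.2 (hmapsp v hv) (hmapsp w hw) hp hq hpq
    simp only [smul_eq_mul] at h1 h2 ⊢
    have e1 : m - (p * v + q * w) = p * (m - v) + q * (m - w) := by
      linear_combination (-m) * hpq
    have e2 : m + (p * v + q * w) = p * (m + v) + q * (m + w) := by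
      linear_combination (-m) * hpq
    show f (m - (p * v + q * w)) + f (m + (p * v + q * w))
      ≤ p * (f (m - v) + f (m + v)) + q * (f (m - w) + f (m + w))
    rw [e1, e2]
    linarith
  have hgcont : ContinuousOn g (Icc (0:ℝ) h) := hcontm.add hcontp
  have hg0 : g 0 = 2 * f m := by
    show f (m - 0) + f (m + 0) = 2 * f m
    rw [sub_zero, add_zero]; ring
  -- apply the key lemma
  have K := key_chord h hh g hgconv hgcont
  rw [hg0] at K
  have lin : (∫ v in (0:ℝ)..h, g v * (2 * h - 3 * v))
      = 3 * (∫ v in (0:ℝ)..h, g v * (h - v)) - h * ∫ v in (0:ℝ)..h, g v := by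
    rw [← intervalIntegral.integral_const_mul, ← intervalIntegral.integral_const_mul,
      ← intervalIntegral.integral_sub
        (by exact (hintm _ (hgcont.mul (by fun_prop))).const_mul 3)
        (by exact (hintm _ hgcont).const_mul h)]
    apply intervalIntegral.integral_congr
    intro v _
    show g v * (2 * h - 3 * v) = 3 * (g v * (h - v)) - h * g v
    ring
  rw [lin] at K
  -- assemble
  have Deq : (∫ s in x..y, ∫ t in x..y, f ((s + t) / 2))
      = 4 * ∫ v in (0:ℝ)..h, g v * (h - v) := by
    rw [houter, hAy, hAx]
    have e1 : (∫ u in x..m, Φ u) = Φ m * (m - x) - ∫ u in x..m, f u * (u - x) := by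
      linarith [ibp1]
    have e2 : (∫ u in m..y, Φ u) = Φ m * (y - m) - ∫ u in m..y, f u * (u - y) := by
      linarith [ibp2]
    rw [e1, e2, s1, s2]
    have hmx : m - x = h := by rw [hm, hhdef]; ring
    have hym : y - m = h := by rw [hm, hhdef]; ring
    rw [hmx, hym]
    linear_combination (4:ℝ) * sum1
  rw [Deq, tsum]
  set W : ℝ := ∫ v in (0:ℝ)..h, g v * (h - v) with hW
  set I2 : ℝ := ∫ v in (0:ℝ)..h, g v with hI2
  have hyx : y - x = 2 * h := by rw [hhdef]; ring
  rw [hyx]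
  have e3 : 3 * (1 / (2 * h) ^ 2 * (4 * W)) = 3 * W / h ^ 2 := by
    field_simp; try ring
  have e4 : 2 / (2 * h) * I2 = I2 / h := by
    field_simp
  rw [e3, e4, div_le_iff₀ (by positivity : (0:ℝ) < h ^ 2)]
  have e5 : (I2 / h + f m) * h ^ 2 = h * I2 + f m * h ^ 2 := by
    field_simp; try ring
  rw [e5]
  nlinarith [K]
end

section
/- For all real numbers x < y and every function f : ℝ → ℝ that is convex and continuous on [x, y], one has (4/(y-x)) · ∫_x^y f(t) dt ≤ 3·(1/(y-x)²) · ∫_x^y ∫_x^y f((s+t)/2) ds dt + (f(x) + f(y))/2. -/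
section aux
open intervalIntegral MeasureTheory Set

lemma integral_quadratic (a b p q r : ℝ) :
    ∫ u in a..b, (p + q*u + r*u^2) = (p*b + q*b^2/2 + r*b^3/3) - (p*a + q*a^2/2 + r*a^3/3) := by
  apply intervalIntegral.integral_eq_sub_of_hasDerivAt
  · intro u hu
    have h1 : HasDerivAt (fun u : ℝ => p*u + q*u^2/2 + r*u^3/3)
        (p*1 + q*(2*u^1)/2 + r*(3*u^2)/3) u := by
      exact (((hasDerivAt_id u).const_mul p).add ((hasDerivAt_pow 2 u).const_mul q |>.div_const 2)).add
        ((hasDerivAt_pow 3 u).const_mul r |>.div_const 3)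
    exact h1.congr_deriv (by ring)
  · apply Continuous.intervalIntegrable; continuity

lemma lemA (g : ℝ → ℝ) (hg : Continuous g) (hconv : ConvexOn ℝ (Set.Icc (0:ℝ) 1) g) :
    ∫ u in (0:ℝ)..(1/2), (4 - 12*u) * g u ≤ g 0 / 2 := by
  set c₀ := g 0
  set c₁ := g (1/3 : ℝ)
  have key : ∫ u in (0:ℝ)..(1/2), (4 - 12*u) * g u
      ≤ ∫ u in (0:ℝ)..(1/2), (4*c₀ + (12*c₁ - 24*c₀)*u + (36*c₀ - 36*c₁)*u^2) := by
    apply intervalIntegral.integral_mono_on (by norm_num)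
    · exact (Continuous.mul (by continuity) hg).intervalIntegrable _ _
    · apply Continuous.intervalIntegrable; continuity
    · intro u hu
      obtain ⟨hu0, hu2⟩ := hu
      have hline : 4*c₀ + (12*c₁ - 24*c₀)*u + (36*c₀ - 36*c₁)*u^2
          = (4 - 12*u) * ((1-3*u)*c₀ + 3*u*c₁) := by ring
      rw [hline]
      rcases le_or_gt u (1/3) with h | h
      · -- weight nonneg, g u ≤ chord
        have hch := hconv.2 (show (0:ℝ) ∈ Icc (0:ℝ) 1 by norm_num)
          (show (1/3:ℝ) ∈ Icc (0:ℝ) 1 by norm_num)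
          (show (0:ℝ) ≤ 1-3*u by linarith) (show (0:ℝ) ≤ 3*u by linarith)
          (show (1-3*u) + 3*u = 1 by ring)
        have : g ((1-3*u) • (0:ℝ) + (3*u) • (1/3:ℝ)) = g u := by
          norm_num; ring_nf
        rw [this] at hch
        have hw : (0:ℝ) ≤ 4 - 12*u := by linarith
        simp only [smul_eq_mul] at hch
        exact mul_le_mul_of_nonneg_left hch hw
      · -- weight nonpos, g u ≥ secant
        have hu1 : u ≤ 1 := by linarith
        have hupos : (0:ℝ) < 3*u := by linarith
        have hch := hconv.2 (show (0:ℝ) ∈ Icc (0:ℝ) 1 by norm_num)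
          (show u ∈ Icc (0:ℝ) 1 from ⟨by linarith, hu1⟩)
          (show (0:ℝ) ≤ 1 - 1/(3*u) by
            rw [sub_nonneg, div_le_one hupos]; linarith)
          (show (0:ℝ) ≤ 1/(3*u) by positivity)
          (show (1 - 1/(3*u)) + 1/(3*u) = 1 by ring)
        have heq : (1 - 1/(3*u)) • (0:ℝ) + (1/(3*u)) • u = 1/3 := by
          show (1 - 1/(3*u)) * (0:ℝ) + (1/(3*u)) * u = 1/3
          field_simp [show u ≠ 0 by linarith]
          ring
        rw [heq] at hch
        simp only [smul_eq_mul] at hch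
        -- hch : c₁ ≤ (1 - 1/(3*u)) * c₀ + 1/(3*u) * g u
        have hgu : (1-3*u)*c₀ + 3*u*c₁ ≤ g u := by
          have h3 := mul_le_mul_of_nonneg_left hch (le_of_lt hupos)
          have : 3*u*((1 - 1/(3*u)) * c₀ + 1/(3*u) * g u) = (3*u-1)*c₀ + g u := by
            field_simp
          rw [this] at h3
          linarith
        have hw : 4 - 12*u ≤ 0 := by linarith
        exact mul_le_mul_of_nonpos_left hgu hw
  rw [integral_quadratic] at key
  calc _ ≤ _ := key
  _ = c₀ / 2 := by norm_num; ring

lemma double_eq (g : ℝ → ℝ) (hg : Continuous g) :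
    (∫ s in (0:ℝ)..1, ∫ t in (0:ℝ)..1, g ((s+t)/2))
      = 4 * ((∫ u in (0:ℝ)..(1/2:ℝ), u * g u) + ∫ u in (1/2:ℝ)..1, (1-u) * g u) := by
  set F : ℝ → ℝ := fun w => ∫ t in (0:ℝ)..w, g t with hFdef
  have hF : ∀ v : ℝ, HasDerivAt F (g v) v :=
    fun v => (hg.integral_hasStrictDerivAt 0 v).hasDerivAt
  have hFc : Continuous F := (Differentiable.continuous (fun v => (hF v).differentiableAt))
  -- inner identity
  have inner : ∀ s : ℝ, (∫ t in (0:ℝ)..1, g ((s+t)/2)) = 2 * (F ((s+1)/2) - F (s/2)) := by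
    intro s
    have h1 : (fun t => g ((s+t)/2)) = fun t => g (2⁻¹ * t + s/2) := by
      funext t; congr 1; ring
    rw [h1, intervalIntegral.integral_comp_mul_add g (by norm_num : (2:ℝ)⁻¹ ≠ 0) (s/2)]
    have h2 : (2:ℝ)⁻¹ * 0 + s/2 = s/2 := by ring
    have h3 : (2:ℝ)⁻¹ * 1 + s/2 = (s+1)/2 := by ring
    have h4 : F ((s+1)/2) - F (s/2) = ∫ t in (s/2)..((s+1)/2), g t :=
      intervalIntegral.integral_interval_sub_left
        (hg.intervalIntegrable _ _) (hg.intervalIntegrable _ _)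
    rw [h2, h3, h4, smul_eq_mul]; norm_num
  rw [intervalIntegral.integral_congr (g := fun s => 2 * (F ((s+1)/2) - F (s/2)))
    (fun s _ => inner s)]
  -- outer substitutions
  have houter1 : (∫ s in (0:ℝ)..1, F ((s+1)/2)) = 2 * ∫ v in (1/2:ℝ)..1, F v := by
    have h1 : (fun s : ℝ => F ((s+1)/2)) = fun s => F (2⁻¹ * s + 1/2) := by
      funext s; congr 1; ring
    rw [h1, intervalIntegral.integral_comp_mul_add F (by norm_num : (2:ℝ)⁻¹ ≠ 0) (1/2)]
    norm_num
  have houter2 : (∫ s in (0:ℝ)..1, F (s/2)) = 2 * ∫ v in (0:ℝ)..(1/2:ℝ), F v := by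
    have h1 : (fun s : ℝ => F (s/2)) = fun s => F (2⁻¹ * s + 0) := by
      funext s; congr 1; ring
    rw [h1, intervalIntegral.integral_comp_mul_add F (by norm_num : (2:ℝ)⁻¹ ≠ 0) 0]
    norm_num
  have hsplit : (∫ s in (0:ℝ)..1, 2 * (F ((s+1)/2) - F (s/2)))
      = 2 * ((∫ s in (0:ℝ)..1, F ((s+1)/2)) - ∫ s in (0:ℝ)..1, F (s/2)) := by
    have hi1 : IntervalIntegrable (fun s : ℝ => F ((s+1)/2)) volume 0 1 :=
      Continuous.intervalIntegrable (by fun_prop) _ _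
    have hi2 : IntervalIntegrable (fun s : ℝ => F (s/2)) volume 0 1 :=
      Continuous.intervalIntegrable (by fun_prop) _ _
    rw [intervalIntegral.integral_const_mul, intervalIntegral.integral_sub hi1 hi2]
  rw [hsplit, houter1, houter2]
  -- integration by parts on each piece
  have parts : ∀ a b : ℝ, (∫ v in a..b, F v)
      = F b * b - F a * a - ∫ v in a..b, g v * v := by
    intro a b
    have := intervalIntegral.integral_mul_deriv_eq_deriv_mul
      (u := F) (v := fun w => w) (u' := g) (v' := fun _ => 1)
      (fun w _ => hF w) (fun w _ => hasDerivAt_id w)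
      (hg.intervalIntegrable a b) (continuous_const.intervalIntegrable a b)
    simpa using this
  rw [parts, parts]
  have hF0 : F 0 = 0 := by simp [hFdef]
  have hF1 : F 1 - F (1/2) = ∫ u in (1/2:ℝ)..1, g u :=
    intervalIntegral.integral_interval_sub_left
      (hg.intervalIntegrable _ _) (hg.intervalIntegrable _ _)
  -- rewrite target pieces
  have e1 : (∫ u in (1/2:ℝ)..1, (1-u) * g u)
      = (∫ u in (1/2:ℝ)..1, g u) - ∫ u in (1/2:ℝ)..1, g u * u := by
    rw [← intervalIntegral.integral_sub (hg.intervalIntegrable _ _)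
      ((show Continuous (fun u : ℝ => g u * u) from hg.mul (by continuity)).intervalIntegrable _ _)]
    congr 1; funext u; ring
  have e2 : (∫ u in (0:ℝ)..(1/2:ℝ), u * g u) = ∫ u in (0:ℝ)..(1/2:ℝ), g u * u := by
    congr 1; funext u; ring
  rw [e1, e2, ← hF1, hF0]
  ring

lemma key (g : ℝ → ℝ) (hg : Continuous g) (hconv : ConvexOn ℝ (Set.Icc (0:ℝ) 1) g) :
    4 * (∫ t in (0:ℝ)..1, g t)
      ≤ 3 * (∫ s in (0:ℝ)..1, ∫ t in (0:ℝ)..1, g ((s+t)/2)) + (g 0 + g 1)/2 := by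
  have hconv' : ConvexOn ℝ (Icc (0:ℝ) 1) (fun u => g (1-u)) := by
    refine ⟨convex_Icc 0 1, ?_⟩
    intro p hp q hq a b ha hb hab
    have hp' : (1:ℝ) - p ∈ Icc (0:ℝ) 1 := ⟨by linarith [hp.2], by linarith [hp.1]⟩
    have hq' : (1:ℝ) - q ∈ Icc (0:ℝ) 1 := ⟨by linarith [hq.2], by linarith [hq.1]⟩
    have h := hconv.2 hp' hq' ha hb hab
    simp only [smul_eq_mul] at h ⊢
    have h1 : a * (1-p) + b * (1-q) = 1 - (a*p + b*q) := by
      have : a + b = 1 := hab; nlinarith [this]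
    rw [h1] at h
    exact h
  have hA1 := lemA g hg hconv
  have hA2' := lemA (fun u => g (1-u)) (by fun_prop) hconv'
  -- reflect hA2'
  have hrefl := intervalIntegral.integral_comp_sub_left
    (a := (0:ℝ)) (b := (1/2:ℝ)) (fun v => (12*v - 8) * g v) 1
  have heq : (fun x : ℝ => (12*(1-x) - 8) * g (1-x)) = fun x : ℝ => (4 - 12*x) * g (1-x) := by
    funext x; congr 1; ring
  rw [heq] at hrefl
  have hA2 : ∫ u in (1/2:ℝ)..1, (12*u - 8) * g u ≤ g 1 / 2 := by
    have h5 : (1:ℝ) - (1/2:ℝ) = 1/2 := by norm_num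
    have h6 : (1:ℝ) - (0:ℝ) = 1 := by norm_num
    rw [h5, h6] at hrefl
    rw [← hrefl]
    simpa using hA2'
  -- linear expansions
  set P := ∫ u in (0:ℝ)..(1/2:ℝ), g u with hP
  set Q := ∫ u in (1/2:ℝ)..1, g u with hQ
  set R := ∫ u in (0:ℝ)..(1/2:ℝ), u * g u with hR
  set S := ∫ u in (1/2:ℝ)..1, (1-u) * g u with hS
  have hE1 : ∫ u in (0:ℝ)..(1/2:ℝ), (4 - 12*u) * g u = 4*P - 12*R := by
    rw [show (∫ u in (0:ℝ)..(1/2:ℝ), (4 - 12*u) * g u)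
        = ∫ u in (0:ℝ)..(1/2:ℝ), (4 * g u - 12*(u * g u)) by congr 1; funext u; ring]
    rw [intervalIntegral.integral_sub (Continuous.intervalIntegrable (by fun_prop) _ _)
      (Continuous.intervalIntegrable (by fun_prop) _ _),
      intervalIntegral.integral_const_mul, intervalIntegral.integral_const_mul]
  have hE2 : ∫ u in (1/2:ℝ)..1, (12*u - 8) * g u = 4*Q - 12*S := by
    rw [show (∫ u in (1/2:ℝ)..1, (12*u - 8) * g u)
        = ∫ u in (1/2:ℝ)..1, (4 * g u - 12*((1-u) * g u)) by congr 1; funext u; ring]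
    rw [intervalIntegral.integral_sub (Continuous.intervalIntegrable (by fun_prop) _ _)
      (Continuous.intervalIntegrable (by fun_prop) _ _),
      intervalIntegral.integral_const_mul, intervalIntegral.integral_const_mul]
  have hPQ : (∫ t in (0:ℝ)..1, g t) = P + Q :=
    (intervalIntegral.integral_add_adjacent_intervals
      (hg.intervalIntegrable _ _) (hg.intervalIntegrable _ _)).symm
  have hD := double_eq g hg
  rw [hE1] at hA1
  rw [hE2] at hA2
  rw [hPQ, hD]
  linarith

end aux

open intervalIntegral MeasureTheory Set in
theorem double_integral_ineq_ii (x y : ℝ) (hxy : x < y) (f : ℝ → ℝ)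
    (hconv : ConvexOn ℝ (Set.Icc x y) f)
    (hcont : ContinuousOn f (Set.Icc x y)) :
    (4 / (y - x)) * (∫ t in x..y, f t)
      ≤ 3 * ((1 / (y - x) ^ 2) * ∫ s in x..y, ∫ t in x..y, f ((s + t) / 2))
        + (f x + f y) / 2 := by
  set L := y - x with hLdef
  have hL : 0 < L := by simp [hLdef]; linarith
  have hLne : L ≠ 0 := ne_of_gt hL
  -- clamp extension
  set c : ℝ → ℝ := fun u => max x (min u y) with hc
  have hcc : Continuous c := by fun_prop
  have hcmem : ∀ u, c u ∈ Set.Icc x y := fun u =>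
    ⟨le_max_left _ _, max_le hxy.le (min_le_right _ _)⟩
  have hceq : ∀ u ∈ Set.Icc x y, c u = u := by
    intro u hu
    simp only [hc]
    rw [min_eq_left hu.2, max_eq_right hu.1]
  set F : ℝ → ℝ := fun u => f (c u) with hF
  have hFc : Continuous F := hcont.comp_continuous hcc hcmem
  have hFeq : ∀ u ∈ Set.Icc x y, F u = f u := by
    intro u hu; simp only [hF]; rw [hceq u hu]
  -- rescaled function
  set g : ℝ → ℝ := fun u => F (L * u + x) with hg
  have hgc : Continuous g := by fun_prop
  have hmem : ∀ u ∈ Set.Icc (0:ℝ) 1, L * u + x ∈ Set.Icc x y := by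
    intro u hu
    constructor
    · nlinarith [hu.1]
    · simp only [hLdef]; nlinarith [hu.2]
  have hgconv : ConvexOn ℝ (Set.Icc (0:ℝ) 1) g := by
    refine ⟨convex_Icc 0 1, ?_⟩
    intro p hp q hq a b ha hb hab
    simp only [smul_eq_mul, hg]
    have hp' := hmem p hp
    have hq' := hmem q hq
    have h := hconv.2 hp' hq' ha hb hab
    simp only [smul_eq_mul] at h
    have hpq : a*p + b*q ∈ Set.Icc (0:ℝ) 1 := by
      constructor
      · nlinarith [hp.1, hq.1]
      · nlinarith [hp.2, hq.2]
    have h1 : L * (a*p + b*q) + x = a * (L*p+x) + b * (L*q+x) := by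
      linear_combination (-x) * hab
    rw [hFeq _ (hmem _ hpq), hFeq _ hp', hFeq _ hq', h1]
    exact h
  -- transfer single integral
  have hcomp : ∀ (H : ℝ → ℝ), (∫ u in (0:ℝ)..1, H (L * u + x)) = L⁻¹ * ∫ t in x..y, H t := by
    intro H
    rw [intervalIntegral.integral_comp_mul_add H hLne x]
    have e0 : L * 0 + x = x := by ring
    have e1 : L * 1 + x = y := by simp [hLdef]
    rw [e0, e1, smul_eq_mul]
  have T1 : (∫ t in x..y, f t) = L * ∫ u in (0:ℝ)..1, g u := by
    have h1 : (∫ t in x..y, f t) = ∫ t in x..y, F t := by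
      apply intervalIntegral.integral_congr
      intro t ht
      rw [Set.uIcc_of_le hxy.le] at ht
      exact (hFeq t ht).symm
    rw [h1, hg]
    rw [hcomp F]
    field_simp
  -- transfer double integral
  have inner_congr : ∀ s ∈ Set.Icc x y,
      (∫ t in x..y, f ((s+t)/2)) = ∫ t in x..y, F ((s+t)/2) := by
    intro s hs
    apply intervalIntegral.integral_congr
    intro t ht
    rw [Set.uIcc_of_le hxy.le] at ht
    have : (s+t)/2 ∈ Set.Icc x y := by
      constructor
      · have := hs.1; have := ht.1; linarith
      · have := hs.2; have := ht.2; linarith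
    exact (hFeq _ this).symm
  have inner_sub : ∀ s : ℝ,
      (∫ t in x..y, F ((s+t)/2)) = L * ∫ τ in (0:ℝ)..1, F ((s + (L*τ+x))/2) := by
    intro s
    have := hcomp (fun t => F ((s+t)/2))
    rw [eq_comm, inv_mul_eq_iff_eq_mul₀ hLne] at this
    rw [← this]
  have h2 : ∀ σ : ℝ, (∫ t in x..y, F ((L*σ+x+t)/2))
      = L * ∫ τ in (0:ℝ)..1, g ((σ+τ)/2) := by
    intro σ
    rw [inner_sub (L*σ+x)]
    congr 1
    apply intervalIntegral.integral_congr
    intro τ _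
    simp only [hg]
    congr 1
    ring
  have T2 : (∫ s in x..y, ∫ t in x..y, f ((s + t) / 2))
      = L^2 * ∫ s in (0:ℝ)..1, ∫ t in (0:ℝ)..1, g ((s+t)/2) := by
    have h1 : (∫ s in x..y, ∫ t in x..y, f ((s + t) / 2))
        = ∫ s in x..y, ∫ t in x..y, F ((s+t)/2) := by
      apply intervalIntegral.integral_congr
      intro s hs
      rw [Set.uIcc_of_le hxy.le] at hs
      exact inner_congr s hs
    have h3 := hcomp (fun s => ∫ t in x..y, F ((s+t)/2))
    beta_reduce at h3
    have h4 : (∫ σ in (0:ℝ)..1, ∫ t in x..y, F ((L*σ+x+t)/2))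
        = ∫ σ in (0:ℝ)..1, L * ∫ τ in (0:ℝ)..1, g ((σ+τ)/2) :=
      intervalIntegral.integral_congr (fun σ _ => h2 σ)
    rw [h4, intervalIntegral.integral_const_mul] at h3
    rw [h1]
    calc (∫ s in x..y, ∫ t in x..y, F ((s+t)/2))
        = L * (L⁻¹ * ∫ s in x..y, ∫ t in x..y, F ((s+t)/2)) := by
          rw [← mul_assoc, mul_inv_cancel₀ hLne, one_mul]
      _ = L * (L * ∫ s in (0:ℝ)..1, ∫ t in (0:ℝ)..1, g ((s+t)/2)) := by rw [← h3]
      _ = L^2 * ∫ s in (0:ℝ)..1, ∫ t in (0:ℝ)..1, g ((s+t)/2) := by ring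
  -- conclude
  have hkey := key g hgc hgconv
  have hg0 : g 0 = f x := by
    simp only [hg]
    rw [show L * 0 + x = x by ring, hFeq x ⟨le_refl x, hxy.le⟩]
  have hg1 : g 1 = f y := by
    simp only [hg]
    rw [show L * 1 + x = y by simp [hLdef], hFeq y ⟨hxy.le, le_refl y⟩]
  rw [hg0, hg1] at hkey
  rw [T1, T2]
  have e1 : 4 / L * (L * ∫ u in (0:ℝ)..1, g u) = 4 * ∫ u in (0:ℝ)..1, g u := by
    field_simp
  have e2 : 1 / L^2 * (L^2 * ∫ s in (0:ℝ)..1, ∫ t in (0:ℝ)..1, g ((s+t)/2))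
      = ∫ s in (0:ℝ)..1, ∫ t in (0:ℝ)..1, g ((s+t)/2) := by
    field_simp
  rw [e1, e2]
  exact hkey
end

section
/- For every real number λ > 3/4 and all real numbers x < y, there exists a function f : ℝ → ℝ convex and continuous on [x, y] such that (1/(y-x)) · ∫_x^y f(t) dt > λ·(1/(y-x)²) · ∫_x^y ∫_x^y f((s+t)/2) ds dt + (1-λ)·(f(x)+f(y))/2. -/
lemma int_abs_aux (x y a : ℝ) (h1 : x ≤ a) (h2 : a ≤ y) :
    ∫ t in x..y, |t - a| = ((a - x) ^ 2 + (y - a) ^ 2) / 2 := by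
  have hi : ∀ u v : ℝ, IntervalIntegrable (fun t => |t - a|) MeasureTheory.volume u v :=
    fun u v => ((continuous_id.sub continuous_const).abs).intervalIntegrable u v
  rw [← intervalIntegral.integral_add_adjacent_intervals (hi x a) (hi a y)]
  have e1 : (∫ t in x..a, |t - a|) = (a - x) ^ 2 / 2 := by
    rw [intervalIntegral.integral_congr (g := fun t => a - t)
      (by intro t ht
          rw [Set.uIcc_of_le h1] at ht
          simp only
          rw [abs_of_nonpos (by linarith [ht.2])]; ring)]
    rw [intervalIntegral.integral_comp_sub_left (fun u => u) a]
    simp [integral_id]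
  have e2 : (∫ t in a..y, |t - a|) = (y - a) ^ 2 / 2 := by
    rw [intervalIntegral.integral_congr (g := fun t => t - a)
      (by intro t ht
          rw [Set.uIcc_of_le h2] at ht
          simp only
          rw [abs_of_nonneg (by linarith [ht.1])])]
    rw [intervalIntegral.integral_comp_sub_right (fun u => u) a]
    simp [integral_id]
  rw [e1, e2]; ring

theorem lambda_sharp (L : ℝ) (hL : 3 / 4 < L) (x y : ℝ) (hxy : x < y) :
    ∃ f : ℝ → ℝ, ConvexOn ℝ (Set.Icc x y) f ∧ ContinuousOn f (Set.Icc x y) ∧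
      (1 / (y - x)) * (∫ t in x..y, f t)
        > L * ((1 / (y - x) ^ 2) * ∫ s in x..y, ∫ t in x..y, f ((s + t) / 2))
          + (1 - L) * ((f x + f y) / 2) := by
  set m : ℝ := (x + y) / 2 with hm
  refine ⟨fun t => |t - m|, ?_, ?_, ?_⟩
  · refine ⟨convex_Icc x y, fun a _ b _ p q hp hq hpq => ?_⟩
    simp only [smul_eq_mul]
    calc |p * a + q * b - m| = |p * (a - m) + q * (b - m)| := by
          rw [show p * a + q * b - m = p * (a - m) + q * (b - m) by
            linear_combination m * hpq]
      _ ≤ |p * (a - m)| + |q * (b - m)| := abs_add_le _ _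
      _ = p * |a - m| + q * |b - m| := by
          rw [abs_mul, abs_mul, abs_of_nonneg hp, abs_of_nonneg hq]
  · exact ((continuous_id.sub continuous_const).abs).continuousOn
  · have hd : (0:ℝ) < y - x := by linarith
    have I1 : (∫ t in x..y, |t - m|) = (y - x) ^ 2 / 4 := by
      rw [int_abs_aux x y m (by rw [hm]; linarith) (by rw [hm]; linarith)]
      rw [hm]; ring
    have Iinner : ∀ s ∈ Set.Icc x y,
        (∫ t in x..y, |(s + t) / 2 - m|) = ((y - s) ^ 2 + (s - x) ^ 2) / 4 := by
      intro s hs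
      have : (∫ t in x..y, |(s + t) / 2 - m|) = ∫ t in x..y, |t - (x + y - s)| / 2 := by
        apply intervalIntegral.integral_congr
        intro t _
        simp only
        rw [show (s + t) / 2 - m = (t - (x + y - s)) / 2 by rw [hm]; ring, abs_div]
        norm_num
      rw [this, intervalIntegral.integral_div,
        int_abs_aux x y (x + y - s) (by linarith [hs.2]) (by linarith [hs.1])]
      ring
    have I2 : (∫ s in x..y, ∫ t in x..y, |(s + t) / 2 - m|) = (y - x) ^ 3 / 6 := by
      rw [intervalIntegral.integral_congr (g := fun s => ((y - s) ^ 2 + (s - x) ^ 2) / 4)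
        (fun s hs => Iinner s (by rwa [Set.uIcc_of_le hxy.le] at hs))]
      have ha : (∫ s in x..y, (y - s) ^ 2) = (y - x) ^ 3 / 3 := by
        rw [intervalIntegral.integral_comp_sub_left (fun u => u ^ 2) y]
        simp [integral_pow]
        ring
      have hb : (∫ s in x..y, (s - x) ^ 2) = (y - x) ^ 3 / 3 := by
        rw [intervalIntegral.integral_comp_sub_right (fun u => u ^ 2) x]
        simp [integral_pow]
        ring
      have hia : IntervalIntegrable (fun s => (y - s) ^ 2) MeasureTheory.volume x y :=
        (Continuous.pow (continuous_const.sub continuous_id) 2).intervalIntegrable x y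
      have hib : IntervalIntegrable (fun s => (s - x) ^ 2) MeasureTheory.volume x y :=
        (Continuous.pow (continuous_id.sub continuous_const) 2).intervalIntegrable x y
      calc (∫ s in x..y, ((y - s) ^ 2 + (s - x) ^ 2) / 4)
          = (∫ s in x..y, ((y - s) ^ 2 + (s - x) ^ 2)) / 4 := intervalIntegral.integral_div _ _
        _ = ((y - x) ^ 3 / 3 + (y - x) ^ 3 / 3) / 4 := by
            rw [intervalIntegral.integral_add hia hib, ha, hb]
        _ = (y - x) ^ 3 / 6 := by ring
    simp only
    rw [I1, I2]
    have hx' : |x - m| = (y - x) / 2 := by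
      rw [hm, abs_of_nonpos (by linarith)]; ring
    have hy' : |y - m| = (y - x) / 2 := by
      rw [hm, abs_of_nonneg (by linarith)]; ring
    rw [hx', hy']
    have hne : y - x ≠ 0 := ne_of_gt hd
    have ea : (1 / (y - x)) * ((y - x) ^ 2 / 4) = (y - x) / 4 := by field_simp
    have eb : (1 / (y - x) ^ 2) * ((y - x) ^ 3 / 6) = (y - x) / 6 := by field_simp
    rw [ea, eb]
    nlinarith [mul_pos (show (0:ℝ) < L - 3/4 by linarith) hd]
end

section
/- For every real number γ < 2/3 and all real numbers x < y, there exists a function f : ℝ → ℝ convex and continuous on [x, y] such that (1/(y-x)²) · ∫_x^y ∫_x^y f((s+t)/2) ds dt > γ·(1/(y-x)) · ∫_x^y f(t) dt + (1-γ)·f((x+y)/2). -/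
lemma int_abs_sub (a b c : ℝ) (hac : a ≤ c) (hcb : c ≤ b) :
    ∫ t in a..b, |t - c| = ((c - a) ^ 2 + (b - c) ^ 2) / 2 := by
  have hint : ∀ u v : ℝ, IntervalIntegrable (fun t => |t - c|) MeasureTheory.volume u v :=
    fun u v => ((continuous_id.sub continuous_const).abs).intervalIntegrable u v
  have h1 : ∫ t in a..c, |t - c| = (c - a) ^ 2 / 2 := by
    rw [intervalIntegral.integral_congr (g := fun t => c - t)
      (by intro t ht
          rw [Set.uIcc_of_le hac] at ht
          simp only
          rw [abs_of_nonpos (by linarith [ht.2])]; ring)]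
    rw [intervalIntegral.integral_sub intervalIntegrable_const intervalIntegral.intervalIntegrable_id,
      integral_id]
    simp [smul_eq_mul]; ring
  have h2 : ∫ t in c..b, |t - c| = (b - c) ^ 2 / 2 := by
    rw [intervalIntegral.integral_congr (g := fun t => t - c)
      (by intro t ht
          rw [Set.uIcc_of_le hcb] at ht
          simp only
          rw [abs_of_nonneg (by linarith [ht.1])])]
    rw [intervalIntegral.integral_sub intervalIntegral.intervalIntegrable_id intervalIntegrable_const,
      integral_id]
    simp [smul_eq_mul]; ring
  rw [← intervalIntegral.integral_add_adjacent_intervals (hint a c) (hint c b), h1, h2]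
  ring

theorem gamma_sharp (γ : ℝ) (hγ : γ < 2 / 3) (x y : ℝ) (hxy : x < y) :
    ∃ f : ℝ → ℝ, ConvexOn ℝ (Set.Icc x y) f ∧ ContinuousOn f (Set.Icc x y) ∧
      (1 / (y - x) ^ 2) * (∫ s in x..y, ∫ t in x..y, f ((s + t) / 2))
        > γ * ((1 / (y - x)) * ∫ t in x..y, f t)
          + (1 - γ) * f ((x + y) / 2) := by
  set m : ℝ := (x + y) / 2 with hm
  refine ⟨fun t => |t - m|, ?_, ?_, ?_⟩
  · refine ⟨convex_Icc x y, ?_⟩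
    intro a _ b _ p q hp hq hpq
    simp only [smul_eq_mul]
    have : p * a + q * b - m = p * (a - m) + q * (b - m) := by
      have : p * m + q * m = m := by rw [← add_mul, hpq, one_mul]
      linarith [this]
    rw [this]
    calc |p * (a - m) + q * (b - m)| ≤ |p * (a - m)| + |q * (b - m)| := abs_add_le _ _
      _ = p * |a - m| + q * |b - m| := by
          rw [abs_mul, abs_mul, abs_of_nonneg hp, abs_of_nonneg hq]
  · exact ((continuous_id.sub continuous_const).abs).continuousOn
  · have hxm : x ≤ m := by simp [hm]; linarith
    have hmy : m ≤ y := by simp [hm]; linarith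
    have hI : ∫ t in x..y, |t - m| = (y - x) ^ 2 / 4 := by
      rw [int_abs_sub x y m hxm hmy]
      simp [hm]; ring
    have hII : (∫ s in x..y, ∫ t in x..y, |(s + t) / 2 - m|) = (y - x) ^ 3 / 6 := by
      have hcong : ∀ s ∈ Set.uIcc x y,
          (∫ t in x..y, |(s + t) / 2 - m|) = ((y - s) ^ 2 + (s - x) ^ 2) / 4 := by
        intro s hs
        rw [Set.uIcc_of_le hxy.le] at hs
        have hc1 : x ≤ x + y - s := by linarith [hs.2]
        have hc2 : x + y - s ≤ y := by linarith [hs.1]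
        have heq : ∀ t : ℝ, |(s + t) / 2 - m| = |t - (x + y - s)| / 2 := by
          intro t
          rw [show (s + t) / 2 - m = (t - (x + y - s)) / 2 by rw [hm]; ring,
            abs_div, abs_of_nonneg (by norm_num : (0:ℝ) ≤ 2)]
        simp only [heq]
        rw [intervalIntegral.integral_div, int_abs_sub x y _ hc1 hc2]
        ring
      rw [intervalIntegral.integral_congr hcong]
      have e1 : ∫ s in x..y, (y - s) ^ 2 = (y - x) ^ 3 / 3 := by
        rw [intervalIntegral.integral_comp_sub_left (fun u => u ^ 2) y]
        simp [integral_pow]; ring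
      have e2 : ∫ s in x..y, (s - x) ^ 2 = (y - x) ^ 3 / 3 := by
        rw [intervalIntegral.integral_comp_sub_right (fun u => u ^ 2) x]
        simp [integral_pow]; ring
      have : (fun s => ((y - s) ^ 2 + (s - x) ^ 2) / 4)
          = fun s => ((y - s) ^ 2 + (s - x) ^ 2) / 4 := rfl
      rw [show (∫ s in x..y, ((y - s) ^ 2 + (s - x) ^ 2) / 4)
          = (∫ s in x..y, ((y - s) ^ 2 + (s - x) ^ 2)) / 4 from
        intervalIntegral.integral_div _ _]
      have i1 : IntervalIntegrable (fun s : ℝ => (y - s) ^ 2) MeasureTheory.volume x y :=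
        (by fun_prop : Continuous fun s : ℝ => (y - s) ^ 2).intervalIntegrable x y
      have i2 : IntervalIntegrable (fun s : ℝ => (s - x) ^ 2) MeasureTheory.volume x y :=
        (by fun_prop : Continuous fun s : ℝ => (s - x) ^ 2).intervalIntegrable x y
      rw [intervalIntegral.integral_add i1 i2, e1, e2]
      ring
    rw [hI, hII]
    have hd : (0:ℝ) < y - x := by linarith
    simp only [hm, sub_self, abs_zero, mul_zero, add_zero]
    have ha : (1 / (y - x) ^ 2) * ((y - x) ^ 3 / 6) = (y - x) / 6 := by
      field_simp
    have hb : (1 / (y - x)) * ((y - x) ^ 2 / 4) = (y - x) / 4 := by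
      field_simp
    rw [ha, hb]
    nlinarith
end

section
/- For all real numbers x < y and every function f : ℝ → ℝ that is convex and continuous on [x, y], one has (1/6)·f(x) + (2/3)·f((x+y)/2) + (1/6)·f(y) ≥ (1/(y-x)²) · ∫_x^y ∫_x^y f((s+t)/2) ds dt. -/
open Set intervalIntegral MeasureTheory

lemma quadint (x y a b c : ℝ) :
    ∫ s in x..y, (a + b*s + c*s^2) = a*(y-x) + b*(y^2-x^2)/2 + c*(y^3-x^3)/3 := by
  have h : ∀ s : ℝ, HasDerivAt (fun u : ℝ => a*u + b*u^2/2 + c*u^3/3) (a + b*s + c*s^2) s := by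
    intro s
    have h1 := (hasDerivAt_id s).const_mul a
    have h2 := ((hasDerivAt_pow 2 s).const_mul b).div_const 2
    have h3 := ((hasDerivAt_pow 3 s).const_mul c).div_const 3
    refine ((h1.add h2).add h3).congr_deriv ?_
    push_cast
    ring
  rw [intervalIntegral.integral_eq_sub_of_hasDerivAt (fun s _ => h s)
    (Continuous.intervalIntegrable (by fun_prop) _ _)]
  ring

lemma linint1 (a b c : ℝ) : ∫ t in a..b, (c - t) = c*(b-a) - (b^2-a^2)/2 := by
  have h : ∀ s : ℝ, HasDerivAt (fun u : ℝ => c*u - u^2/2) (c - s) s := by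
    intro s
    have h1 := (hasDerivAt_id s).const_mul c
    have h2 := (hasDerivAt_pow 2 s).div_const 2
    refine (h1.sub h2).congr_deriv ?_
    push_cast
    ring
  rw [intervalIntegral.integral_eq_sub_of_hasDerivAt (fun s _ => h s)
    (Continuous.intervalIntegrable (by fun_prop) _ _)]
  ring

lemma linint2 (a b c : ℝ) : ∫ t in a..b, (t - c) = (b^2-a^2)/2 - c*(b-a) := by
  have h : ∀ s : ℝ, HasDerivAt (fun u : ℝ => u^2/2 - c*u) (s - c) s := by
    intro s
    have h1 := (hasDerivAt_pow 2 s).div_const 2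
    have h2 := (hasDerivAt_id s).const_mul c
    refine (h1.sub h2).congr_deriv ?_
    push_cast
    ring
  rw [intervalIntegral.integral_eq_sub_of_hasDerivAt (fun s _ => h s)
    (Continuous.intervalIntegrable (by fun_prop) _ _)]
  ring

lemma absint (x y c : ℝ) (h1 : x ≤ c) (h2 : c ≤ y) :
    ∫ t in x..y, |t - c| = ((c-x)^2 + (y-c)^2)/2 := by
  have hc : Continuous fun t : ℝ => |t - c| := (continuous_id.sub continuous_const).abs
  rw [← intervalIntegral.integral_add_adjacent_intervals (a := x) (b := c) (c := y)
    (hc.intervalIntegrable _ _) (hc.intervalIntegrable _ _)]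
  have e1 : ∫ t in x..c, |t - c| = ∫ t in x..c, (c - t) := by
    apply intervalIntegral.integral_congr
    intro t ht
    rw [uIcc_of_le h1] at ht
    show |t - c| = c - t
    rw [abs_sub_comm, abs_of_nonneg (by linarith [ht.2])]
  have e2 : ∫ t in c..y, |t - c| = ∫ t in c..y, (t - c) := by
    apply intervalIntegral.integral_congr
    intro t ht
    rw [uIcc_of_le h2] at ht
    show |t - c| = t - c
    rw [abs_of_nonneg (by linarith [ht.1])]
  rw [e1, e2, linint1, linint2]
  ring

lemma chord {f : ℝ → ℝ} {s : Set ℝ} (h : ConvexOn ℝ s f) {a b u : ℝ}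
    (ha : a ∈ s) (hb : b ∈ s) (hab : a < b) (h1 : a ≤ u) (h2 : u ≤ b) :
    f u ≤ f a + (f b - f a) * (u - a) / (b - a) := by
  set θ := (u - a) / (b - a) with hθ
  have hba : (0:ℝ) < b - a := by linarith
  have hθ0 : 0 ≤ θ := div_nonneg (by linarith) hba.le
  have hθ1 : θ ≤ 1 := by rw [hθ, div_le_one hba]; linarith
  have huu : u = (1 - θ) * a + θ * b := by rw [hθ]; field_simp; ring
  have key := h.2 ha hb (by linarith : (0:ℝ) ≤ 1 - θ) hθ0 (by ring)
  rw [smul_eq_mul, smul_eq_mul, smul_eq_mul, smul_eq_mul, ← huu] at key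
  have : f a + (f b - f a) * (u - a) / (b - a) = (1 - θ) * f a + θ * f b := by
    rw [hθ]; field_simp; ring
  linarith

theorem three_point_upper_bound (x y : ℝ) (hxy : x < y) (f : ℝ → ℝ)
    (hconv : ConvexOn ℝ (Set.Icc x y) f)
    (hcont : ContinuousOn f (Set.Icc x y)) :
    (1 / 6) * f x + (2 / 3) * f ((x + y) / 2) + (1 / 6) * f y
      ≥ (1 / (y - x) ^ 2) * ∫ s in x..y, ∫ t in x..y, f ((s + t) / 2) := by
  have hxy' := hxy.le
  have hyx : y - x ≠ 0 := sub_ne_zero.mpr hxy.ne'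
  set m : ℝ := (x + y) / 2 with hm
  set D : ℝ := y - x with hD
  have hD0 : (0:ℝ) < D := by rw [hD]; linarith
  have hDne : D ≠ 0 := hD0.ne'
  have hxm : x < m := by rw [hm]; linarith
  have hmy : m < y := by rw [hm]; linarith
  set β : ℝ := (f y - f x) / D with hβ
  set γ : ℝ := (f x + f y - 2 * f m) / D with hγ
  set q : ℝ → ℝ := fun u => f m + β * (u - m) + γ * |u - m| with hq
  set F : ℝ → ℝ := fun u => f (Set.projIcc x y hxy' u) with hFdef
  have hF : Continuous F :=
    hcont.comp_continuous (continuous_subtype_val.comp continuous_projIcc)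
      (fun u => (Set.projIcc x y hxy' u).2)
  have hFeq : ∀ u ∈ Icc x y, F u = f u := by
    intro u hu
    simp [hFdef, Set.projIcc_of_mem hxy' hu]
  have hqc : Continuous q := by
    apply ((continuous_const.add (continuous_const.mul
      (continuous_id.sub continuous_const))).add (continuous_const.mul
      (continuous_id.sub continuous_const).abs))
  -- pointwise bound
  have hle : ∀ u ∈ Icc x y, F u ≤ q u := by
    intro u hu
    rw [hFeq u hu]
    rcases le_total u m with h | h
    · have hch := chord hconv (Set.left_mem_Icc.2 hxy') ⟨hxm.le, hmy.le⟩ hxm hu.1 h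
      have habs : |u - m| = m - u := by
        rw [abs_sub_comm, abs_of_nonneg (by linarith)]
      have heq : f x + (f m - f x) * (u - x) / (m - x)
          = f m + β * (u - m) + γ * (m - u) := by
        rw [hβ, hγ, hm, hD, show (x+y)/2 - x = (y-x)/2 by ring]
        have hne : y - x ≠ 0 := sub_ne_zero.mpr hxy.ne'
        field_simp [hne]
        ring
      rw [hq]
      simp only
      rw [habs]
      linarith
    · have hch := chord hconv ⟨hxm.le, hmy.le⟩ (Set.right_mem_Icc.2 hxy') hmy h hu.2
      have habs : |u - m| = u - m := abs_of_nonneg (by linarith)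
      have heq : f m + (f y - f m) * (u - m) / (y - m)
          = f m + β * (u - m) + γ * (u - m) := by
        rw [hβ, hγ, hm, hD, show y - (x+y)/2 = (y-x)/2 by ring]
        have hne : y - x ≠ 0 := sub_ne_zero.mpr hxy.ne'
        field_simp [hne]
        ring
      rw [hq]
      simp only
      rw [habs]
      linarith
  -- replace f by F inside the double integral
  have hdouble : (∫ s in x..y, ∫ t in x..y, f ((s + t) / 2))
      = ∫ s in x..y, ∫ t in x..y, F ((s + t) / 2) := by
    apply intervalIntegral.integral_congr
    intro s hs
    rw [uIcc_of_le hxy'] at hs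
    apply intervalIntegral.integral_congr
    intro t ht
    rw [uIcc_of_le hxy'] at ht
    exact (hFeq _ ⟨by linarith [hs.1, ht.1], by linarith [hs.2, ht.2]⟩).symm
  -- continuity of the integrands
  have hFst : Continuous (Function.uncurry fun s t : ℝ => F ((s + t) / 2)) := by
    apply hF.comp
    exact (continuous_fst.add continuous_snd).div_const 2
  have hqst : Continuous (Function.uncurry fun s t : ℝ => q ((s + t) / 2)) := by
    apply hqc.comp
    exact (continuous_fst.add continuous_snd).div_const 2
  have hFinner : Continuous fun s => ∫ t in x..y, F ((s + t) / 2) :=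
    intervalIntegral.continuous_parametric_intervalIntegral_of_continuous' hFst x y
  have hqinner : Continuous fun s => ∫ t in x..y, q ((s + t) / 2) :=
    intervalIntegral.continuous_parametric_intervalIntegral_of_continuous' hqst x y
  -- monotonicity
  have hmono : (∫ s in x..y, ∫ t in x..y, F ((s + t) / 2))
      ≤ ∫ s in x..y, ∫ t in x..y, q ((s + t) / 2) := by
    apply intervalIntegral.integral_mono_on hxy'
      (hFinner.intervalIntegrable _ _) (hqinner.intervalIntegrable _ _)
    intro s hs
    have hcF : Continuous fun t : ℝ => F ((s + t) / 2) := hF.comp (by fun_prop)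
    have hcq : Continuous fun t : ℝ => q ((s + t) / 2) := hqc.comp (by fun_prop)
    apply intervalIntegral.integral_mono_on hxy'
      (hcF.intervalIntegrable _ _) (hcq.intervalIntegrable _ _)
    intro t ht
    exact hle _ ⟨by linarith [hs.1, ht.1], by linarith [hs.2, ht.2]⟩
  -- compute the q double integral
  set a₀ : ℝ := D * f m - β * D * m / 2 + γ * (x^2 + y^2) / 4 with ha₀
  set b₀ : ℝ := β * D / 2 - γ * (x + y) / 2 with hb₀
  set c₀ : ℝ := γ / 2 with hc₀
  have inner_q : ∀ s ∈ uIcc x y,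
      (∫ t in x..y, q ((s + t) / 2)) = a₀ + b₀ * s + c₀ * s^2 := by
    intro s hs
    rw [uIcc_of_le hxy'] at hs
    have i1 : IntervalIntegrable
        (fun t : ℝ => (f m + β * (s/2 - m)) + (β/2) * t + 0 * t^2) volume x y :=
      Continuous.intervalIntegrable (by fun_prop) _ _
    have i2 : IntervalIntegrable (fun t : ℝ => |(s + t)/2 - m|) volume x y :=
      Continuous.intervalIntegrable (by fun_prop) _ _
    have split : (∫ t in x..y, q ((s + t) / 2))
        = (∫ t in x..y, ((f m + β * (s/2 - m)) + (β/2) * t + 0 * t^2))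
          + γ * ∫ t in x..y, |(s + t)/2 - m| := by
      rw [← intervalIntegral.integral_const_mul,
        ← intervalIntegral.integral_add i1
          (Continuous.intervalIntegrable (by fun_prop) _ _)]
      apply intervalIntegral.integral_congr
      intro t _
      show q ((s + t) / 2) = _
      rw [hq]
      ring_nf
    have habs2 : (∫ t in x..y, |(s + t)/2 - m|) = ((y - s)^2 + (s - x)^2) / 4 := by
      have e : (∫ t in x..y, |(s + t)/2 - m|) = ∫ t in x..y, |t - (x + y - s)| / 2 := by
        apply intervalIntegral.integral_congr
        intro t _
        show |(s + t)/2 - m| = |t - (x + y - s)| / 2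
        rw [show (s + t)/2 - m = (t - (x + y - s))/2 by rw [hm]; ring, abs_div, abs_two]
      rw [e, intervalIntegral.integral_div,
        absint x y (x + y - s) (by linarith [hs.2]) (by linarith [hs.1])]
      ring
    rw [split, habs2, quadint, ha₀, hb₀, hc₀, hm, hD]
    ring
  have houter : (∫ s in x..y, ∫ t in x..y, q ((s + t) / 2))
      = D^2 * ((1/6) * f x + (2/3) * f m + (1/6) * f y) := by
    rw [intervalIntegral.integral_congr inner_q, quadint, ha₀, hb₀, hc₀, hβ, hγ, hm, hD]
    have hne : y - x ≠ 0 := sub_ne_zero.mpr hxy.ne'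
    field_simp [hne]
    ring
  -- conclude
  rw [ge_iff_le, hdouble]
  calc 1 / D^2 * ∫ s in x..y, ∫ t in x..y, F ((s + t) / 2)
      ≤ 1 / D^2 * (D^2 * ((1/6) * f x + (2/3) * f m + (1/6) * f y)) := by
        apply mul_le_mul_of_nonneg_left _ (by positivity)
        rw [← houter]; exact hmono
    _ = (1/6) * f x + (2/3) * f m + (1/6) * f y := by
        field_simp
end

section
/- For every α ∈ (0,1) and every function f : ℝ → ℝ convex and continuous on [x, y] with antiderivative F on [x, y], one has f(αx + (1-α)y) ≤ S¹_α f(x,y) ≤ α·f(x) + (1-α)·f(y). -/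
lemma trapezoid_bound (a b : ℝ) (hab : a < b) (f : ℝ → ℝ)
    (hconv : ConvexOn ℝ (Set.Icc a b) f) (hcont : ContinuousOn f (Set.Icc a b)) :
    ∫ t in a..b, f t ≤ (b - a) * (f a + f b) / 2 := by
  have hba : (0:ℝ) < b - a := by linarith
  have hintf : IntervalIntegrable f MeasureTheory.volume a b :=
    (hcont.mono (by rw [Set.uIcc_of_le hab.le])).intervalIntegrable
  have hg : IntervalIntegrable (fun t => ((b - t) * f a + (t - a) * f b) / (b - a))
      MeasureTheory.volume a b := by
    apply Continuous.intervalIntegrable; continuity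
  have hmono : ∫ t in a..b, f t ≤ ∫ t in a..b, ((b - t) * f a + (t - a) * f b) / (b - a) := by
    apply intervalIntegral.integral_mono_on hab.le hintf hg
    intro t ht
    have hw1 : (0:ℝ) ≤ (b - t)/(b - a) := by
      apply div_nonneg _ hba.le; linarith [ht.2]
    have hw2 : (0:ℝ) ≤ (t - a)/(b - a) := by
      apply div_nonneg _ hba.le; linarith [ht.1]
    have hsum : (b - t)/(b - a) + (t - a)/(b - a) = 1 := by
      rw [← add_div, div_eq_one_iff_eq hba.ne']; ring
    have h2 := hconv.2 (Set.left_mem_Icc.2 hab.le) (Set.right_mem_Icc.2 hab.le) hw1 hw2 hsum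
    have heq : ((b - t)/(b - a)) • a + ((t - a)/(b - a)) • b = t := by
      rw [smul_eq_mul, smul_eq_mul, div_mul_eq_mul_div, div_mul_eq_mul_div, ← add_div,
        div_eq_iff hba.ne']; ring
    rw [heq] at h2
    calc f t ≤ (b - t)/(b - a) * f a + (t - a)/(b - a) * f b := h2
    _ = ((b - t) * f a + (t - a) * f b) / (b - a) := by ring
  refine hmono.trans (le_of_eq ?_)
  have : ∀ t : ℝ, ((b - t) * f a + (t - a) * f b) / (b - a)
      = (b * f a - a * f b)/(b - a) + ((f b - f a)/(b - a)) * t := by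
    intro t; field_simp; ring
  simp only [this]
  rw [intervalIntegral.integral_add (by apply Continuous.intervalIntegrable; continuity)
    (by apply Continuous.intervalIntegrable; continuity),
    intervalIntegral.integral_const, intervalIntegral.integral_const_mul]
  simp only [integral_id]
  field_simp
  linear_combination (b - a) * (2 * b * f a - 2 * a * f b) * mul_inv_cancel₀ hba.ne'

lemma midpoint_bound (a b : ℝ) (hab : a < b) (f : ℝ → ℝ)
    (hconv : ConvexOn ℝ (Set.Icc a b) f) (hcont : ContinuousOn f (Set.Icc a b)) :
    (b - a) * f ((a + b) / 2) ≤ ∫ t in a..b, f t := by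
  have hintf : IntervalIntegrable f MeasureTheory.volume a b :=
    (hcont.mono (by rw [Set.uIcc_of_le hab.le])).intervalIntegrable
  have hmaps : ∀ t ∈ Set.uIcc a b, a + b - t ∈ Set.Icc a b := by
    rw [Set.uIcc_of_le hab.le]
    intro t ht
    exact ⟨by linarith [ht.2], by linarith [ht.1]⟩
  have hint2 : IntervalIntegrable (fun t => f (a + b - t)) MeasureTheory.volume a b := by
    exact (hcont.comp ((continuous_const.sub continuous_id).continuousOn) hmaps).intervalIntegrable
  have hrefl : ∫ t in a..b, f (a + b - t) = ∫ t in a..b, f t := by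
    rw [intervalIntegral.integral_comp_sub_left f (a + b)]
    norm_num
  have key : ∫ t in a..b, (2:ℝ) * f ((a + b) / 2) ≤ ∫ t in a..b, (f t + f (a + b - t)) := by
    apply intervalIntegral.integral_mono_on hab.le
      (by apply Continuous.intervalIntegrable; continuity) (hintf.add hint2)
    intro t ht
    have ht1 : t ∈ Set.Icc a b := ht
    have ht2 : a + b - t ∈ Set.Icc a b := ⟨by linarith [ht.2], by linarith [ht.1]⟩
    have h2 := hconv.2 ht1 ht2 (by norm_num : (0:ℝ) ≤ 1/2) (by norm_num : (0:ℝ) ≤ 1/2)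
      (by norm_num)
    have heq : (1/2 : ℝ) • t + (1/2 : ℝ) • (a + b - t) = (a + b) / 2 := by
      simp only [smul_eq_mul]; ring
    rw [heq] at h2
    simp only [smul_eq_mul] at h2
    linarith
  rw [intervalIntegral.integral_const_mul, intervalIntegral.integral_const,
    intervalIntegral.integral_add hintf hint2, hrefl] at key
  simp only [smul_eq_mul] at key
  linarith


theorem S1_hermite_hadamard (x y : ℝ) (hxy : x < y) (α : ℝ)
    (hα : α ∈ Set.Ioo (0 : ℝ) 1)
    (f F : ℝ → ℝ)
    (hconv : ConvexOn ℝ (Set.Icc x y) f)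
    (hcont : ContinuousOn f (Set.Icc x y))
    (hF : ∀ t ∈ Set.Icc x y, HasDerivAt F (f t) t) :
    f (α * x + (1 - α) * y)
      ≤ ((-α / (1 - α)) * F x + ((2 * α - 1) / (α * (1 - α))) * F (α * x + (1 - α) * y)
          + ((1 - α) / α) * F y) / (y - x) ∧
    ((-α / (1 - α)) * F x + ((2 * α - 1) / (α * (1 - α))) * F (α * x + (1 - α) * y)
        + ((1 - α) / α) * F y) / (y - x)
      ≤ α * f x + (1 - α) * f y := by
  obtain ⟨hα0, hα1⟩ := hα
  have h1α : (0:ℝ) < 1 - α := by linarith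
  have hyx : (0:ℝ) < y - x := by linarith
  set c : ℝ := α * x + (1 - α) * y with hc
  have hcx : x < c := by rw [hc]; nlinarith
  have hcy : c < y := by rw [hc]; nlinarith
  have hca : c - x = (1 - α) * (y - x) := by rw [hc]; ring
  have hcb : y - c = α * (y - x) := by rw [hc]; ring
  have hsub1 : Set.Icc x c ⊆ Set.Icc x y := Set.Icc_subset_Icc le_rfl hcy.le
  have hsub2 : Set.Icc c y ⊆ Set.Icc x y := Set.Icc_subset_Icc hcx.le le_rfl
  have hconv1 := hconv.subset hsub1 (convex_Icc x c)
  have hconv2 := hconv.subset hsub2 (convex_Icc c y)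
  have hcont1 := hcont.mono hsub1
  have hcont2 := hcont.mono hsub2
  have hint1 : IntervalIntegrable f MeasureTheory.volume x c :=
    (hcont1.mono (by rw [Set.uIcc_of_le hcx.le])).intervalIntegrable
  have hint2 : IntervalIntegrable f MeasureTheory.volume c y :=
    (hcont2.mono (by rw [Set.uIcc_of_le hcy.le])).intervalIntegrable
  have hA : ∫ t in x..c, f t = F c - F x :=
    intervalIntegral.integral_eq_sub_of_hasDerivAt
      (fun t ht => hF t (hsub1 (by rwa [Set.uIcc_of_le hcx.le] at ht))) hint1
  have hB : ∫ t in c..y, f t = F y - F c :=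
    intervalIntegral.integral_eq_sub_of_hasDerivAt
      (fun t ht => hF t (hsub2 (by rwa [Set.uIcc_of_le hcy.le] at ht))) hint2
  have L1 : (c - x) * f ((x + c) / 2) ≤ F c - F x := by
    rw [← hA]; exact midpoint_bound x c hcx f hconv1 hcont1
  have U1 : F c - F x ≤ (c - x) * (f x + f c) / 2 := by
    rw [← hA]; exact trapezoid_bound x c hcx f hconv1 hcont1
  have L2 : (y - c) * f ((c + y) / 2) ≤ F y - F c := by
    rw [← hB]; exact midpoint_bound c y hcy f hconv2 hcont2
  have U2 : F y - F c ≤ (y - c) * (f c + f y) / 2 := by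
    rw [← hB]; exact trapezoid_bound c y hcy f hconv2 hcont2
  have hSeq : ((-α / (1 - α)) * F x + ((2 * α - 1) / (α * (1 - α))) * F c
        + ((1 - α) / α) * F y) / (y - x)
      = (α / (1 - α)) * (F c - F x) / (y - x) + ((1 - α) / α) * (F y - F c) / (y - x) := by
    field_simp
    ring
  have hw1 : (0:ℝ) < α / (1 - α) := div_pos hα0 h1α
  have hw2 : (0:ℝ) < (1 - α) / α := div_pos h1α hα0
  -- memberships
  have hm1 : (x + c) / 2 ∈ Set.Icc x y := ⟨by linarith, by linarith⟩
  have hm2 : (c + y) / 2 ∈ Set.Icc x y := ⟨by linarith, by linarith⟩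
  have hxmem : x ∈ Set.Icc x y := Set.left_mem_Icc.2 hxy.le
  have hymem : y ∈ Set.Icc x y := Set.right_mem_Icc.2 hxy.le
  have hcmem : c ∈ Set.Icc x y := ⟨hcx.le, hcy.le⟩
  constructor
  · -- lower bound
    have i1 : α * f ((x + c) / 2) ≤ (α / (1 - α)) * (F c - F x) / (y - x) := by
      have e1 : (α / (1 - α)) * ((c - x) * f ((x + c) / 2)) / (y - x) = α * f ((x + c) / 2) := by
        rw [hca]; field_simp
      rw [← e1]
      exact (div_le_div_iff_of_pos_right hyx).2 (mul_le_mul_of_nonneg_left L1 hw1.le)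
    have i2 : (1 - α) * f ((c + y) / 2) ≤ ((1 - α) / α) * (F y - F c) / (y - x) := by
      have e2 : ((1 - α) / α) * ((y - c) * f ((c + y) / 2)) / (y - x)
          = (1 - α) * f ((c + y) / 2) := by
        rw [hcb]; field_simp
      rw [← e2]
      exact (div_le_div_iff_of_pos_right hyx).2 (mul_le_mul_of_nonneg_left L2 hw2.le)
    have hjen : f c ≤ α * f ((x + c) / 2) + (1 - α) * f ((c + y) / 2) := by
      have h2 := hconv.2 hm1 hm2 hα0.le h1α.le (by ring)
      have heq : α • ((x + c) / 2) + (1 - α) • ((c + y) / 2) = c := by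
        simp only [smul_eq_mul]; rw [hc]; ring
      rw [heq] at h2
      simpa using h2
    rw [hSeq]
    linarith
  · have i1 : (α / (1 - α)) * (F c - F x) / (y - x) ≤ α * (f x + f c) / 2 := by
      have e1 : (α / (1 - α)) * ((c - x) * (f x + f c) / 2) / (y - x)
          = α * (f x + f c) / 2 := by
        rw [hca]; field_simp
      rw [← e1]
      exact (div_le_div_iff_of_pos_right hyx).2 (mul_le_mul_of_nonneg_left U1 hw1.le)
    have i2 : ((1 - α) / α) * (F y - F c) / (y - x) ≤ (1 - α) * (f c + f y) / 2 := by
      have e2 : ((1 - α) / α) * ((y - c) * (f c + f y) / 2) / (y - x)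
          = (1 - α) * (f c + f y) / 2 := by
        rw [hcb]; field_simp
      rw [← e2]
      exact (div_le_div_iff_of_pos_right hyx).2 (mul_le_mul_of_nonneg_left U2 hw2.le)
    have hjen : f c ≤ α * f x + (1 - α) * f y := by
      have h2 := hconv.2 hxmem hymem hα0.le h1α.le (by ring)
      simpa [hc] using h2
    rw [hSeq]
    linarith
end

section
/- For every α ∈ [0,1] and every function f : ℝ → ℝ convex and continuous on [x, y] (with F' = f and Φ' = F on [x, y]), one has S²_α f(x,y) ≤ α·f(x) + (1-α)·f(y). -/
open MeasureTheory intervalIntegral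

lemma integral_quad (x y a b c : ℝ) :
    (∫ t in x..y, (a*t^2 + b*t + c)) =
      (a*y^3/3 + b*y^2/2 + c*y) - (a*x^3/3 + b*x^2/2 + c*x) := by
  have h1 : ∀ t ∈ Set.uIcc x y, HasDerivAt (fun t : ℝ => a*t^3/3 + (b*t^2/2 + c*t))
      (a*t^2 + b*t + c) t := by
    intro t _
    have h : HasDerivAt (fun t : ℝ => a*t^3/3 + (b*t^2/2 + c*t))
        (a*(↑3*t^(3-1))/3 + (b*(↑2*t^(2-1))/2 + c*1)) t :=
      (((hasDerivAt_pow 3 t).const_mul a).div_const 3).add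
        ((((hasDerivAt_pow 2 t).const_mul b).div_const 2).add ((hasDerivAt_id' t).const_mul c))
    convert h using 1
    norm_num; ring
  have h2 : IntervalIntegrable (fun t : ℝ => a*t^2 + b*t + c) MeasureTheory.volume x y := by
    apply Continuous.intervalIntegrable; fun_prop
  rw [intervalIntegral.integral_eq_sub_of_hasDerivAt h1 h2]; ring

lemma key0 (x y : ℝ) (hxy : x < y)
    (f F Φ : ℝ → ℝ)
    (hconv : ConvexOn ℝ (Set.Icc x y) f)
    (hcont : ContinuousOn f (Set.Icc x y))
    (hF : ∀ t ∈ Set.Icc x y, HasDerivAt F (f t) t)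
    (hΦ : ∀ t ∈ Set.Icc x y, HasDerivAt Φ (F t) t) :
    (4 * F y + 2 * F x) / (y - x) - 6 * (Φ y - Φ x) / (y - x) ^ 2 ≤ f y := by
  have hyx : 0 < y - x := sub_pos.2 hxy
  set m : ℝ := (2*x + y)/3 with hm
  have hxm : x < m := by rw [hm]; linarith
  have hmy : m < y := by rw [hm]; linarith
  have hmIcc : m ∈ Set.Icc x y := ⟨hxm.le, hmy.le⟩
  set g : ℝ → ℝ := fun t => (y - x) * f t - ((y - t) * f x + (t - x) * f y) with hg
  -- pointwise bound
  have hpt : ∀ t ∈ Set.Icc x y,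
      (y - m) * ((6*t - 4*x - 2*y) * g t) ≤ (6 * g m) * ((t - m) * (y - t)) := by
    intro t ht
    rcases le_total t m with h | h
    · -- t ≤ m
      have hyt : (0:ℝ) < y - t := by linarith
      have ha : (0:ℝ) ≤ (y-m)/(y-t) := div_nonneg (by linarith) hyt.le
      have hb : (0:ℝ) ≤ (m-t)/(y-t) := div_nonneg (by linarith) hyt.le
      have hab : (y-m)/(y-t) + (m-t)/(y-t) = 1 := by field_simp; ring
      have hc := hconv.2 ht (Set.right_mem_Icc.mpr hxy.le) ha hb hab
      simp only [smul_eq_mul] at hc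
      have harg : (y-m)/(y-t) * t + (m-t)/(y-t) * y = m := by field_simp; try ring
      rw [harg] at hc
      have hc2 : (y - t) * f m ≤ (y - m) * f t + (m - t) * f y := by
        have h5 := mul_le_mul_of_nonneg_left hc hyt.le
        have h7 : (y-t) * ((y-m)/(y-t) * f t + (m-t)/(y-t) * f y)
            = (y-m)*f t + (m-t)*f y := by field_simp; try ring
        rw [h7] at h5; linarith
      have hD : 0 ≤ (m - t) * ((y - x) * ((y - m)*f t + (m - t)*f y - (y - t)*f m)) :=
        mul_nonneg (by linarith) (mul_nonneg hyx.le (by linarith))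
      have hgoal : (6 * g m) * ((t - m) * (y - t)) - (y - m) * ((6*t - 4*x - 2*y) * g t)
          = 6 * ((m - t) * ((y - x) * ((y - m)*f t + (m - t)*f y - (y - t)*f m))) := by
        simp only [hg, hm]; try ring
      linarith
    · -- m ≤ t
      have hym : (0:ℝ) < y - m := by linarith
      have ha : (0:ℝ) ≤ (y-t)/(y-m) := div_nonneg (by linarith [ht.2]) hym.le
      have hb : (0:ℝ) ≤ (t-m)/(y-m) := div_nonneg (by linarith) hym.le
      have hab : (y-t)/(y-m) + (t-m)/(y-m) = 1 := by field_simp; ring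
      have hc := hconv.2 hmIcc (Set.right_mem_Icc.mpr hxy.le) ha hb hab
      simp only [smul_eq_mul] at hc
      have harg : (y-t)/(y-m) * m + (t-m)/(y-m) * y = t := by field_simp; try ring
      rw [harg] at hc
      have hc2 : (y - m) * f t ≤ (y - t) * f m + (t - m) * f y := by
        have h5 := mul_le_mul_of_nonneg_left hc hym.le
        have h7 : (y-m) * ((y-t)/(y-m) * f m + (t-m)/(y-m) * f y)
            = (y-t)*f m + (t-m)*f y := by field_simp; try ring
        rw [h7] at h5; linarith
      have hD : 0 ≤ (t - m) * ((y - x) * ((y - t)*f m + (t - m)*f y - (y - m)*f t)) :=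
        mul_nonneg (by linarith) (mul_nonneg hyx.le (by linarith))
      have hgoal : (6 * g m) * ((t - m) * (y - t)) - (y - m) * ((6*t - 4*x - 2*y) * g t)
          = 6 * ((t - m) * ((y - x) * ((y - t)*f m + (t - m)*f y - (y - m)*f t))) := by
        simp only [hg, hm]; try ring
      linarith
  -- integrability
  have hgcont : ContinuousOn g (Set.Icc x y) := by
    simp only [hg]
    exact (continuousOn_const.mul hcont).sub (by fun_prop)
  have hint1 : IntervalIntegrable (fun t => (y - m) * ((6*t - 4*x - 2*y) * g t)) volume x y := by
    apply ContinuousOn.intervalIntegrable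
    rw [Set.uIcc_of_le hxy.le]
    exact continuousOn_const.mul ((by fun_prop : ContinuousOn (fun t : ℝ => 6*t - 4*x - 2*y) (Set.Icc x y)).mul hgcont)
  have hint2 : IntervalIntegrable (fun t => (6 * g m) * ((t - m) * (y - t))) volume x y := by
    apply Continuous.intervalIntegrable; fun_prop
  have hmono := intervalIntegral.integral_mono_on hxy.le hint1 hint2 hpt
  -- RHS integral is zero
  have hR : (∫ t in x..y, (6 * g m) * ((t - m) * (y - t))) = 0 := by
    rw [show (fun t => (6 * g m) * ((t - m) * (y - t)))
        = fun t => (-(6*g m))*t^2 + (6*g m*(y + m))*t + (-(6*g m*(m*y))) from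
      funext fun t => by ring]
    rw [integral_quad, hm]; ring
  -- FTC for the weighted f integral
  have hwf : (∫ t in x..y, (6*t - 4*x - 2*y) * f t)
      = 4*(y-x)*F y + 2*(y-x)*F x - 6*(Φ y - Φ x) := by
    have hderiv : ∀ t ∈ Set.uIcc x y,
        HasDerivAt (fun t => (6*t - 4*x - 2*y) * F t - 6 * Φ t) ((6*t - 4*x - 2*y) * f t) t := by
      intro t ht
      rw [Set.uIcc_of_le hxy.le] at ht
      have h1 : HasDerivAt (fun t : ℝ => 6*t - 4*x - 2*y) 6 t := by
        simpa using (((hasDerivAt_id' t).const_mul 6).sub_const (4*x)).sub_const (2*y)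
      have h2 := (h1.mul (hF t ht)).sub ((hΦ t ht).const_mul 6)
      exact h2.congr_deriv (by ring)
    have hic : IntervalIntegrable (fun t => (6*t - 4*x - 2*y) * f t) volume x y := by
      apply ContinuousOn.intervalIntegrable
      rw [Set.uIcc_of_le hxy.le]
      exact (by fun_prop : ContinuousOn (fun t : ℝ => 6*t - 4*x - 2*y) (Set.Icc x y)).mul hcont
    rw [intervalIntegral.integral_eq_sub_of_hasDerivAt hderiv hic]; ring
  -- the polynomial part
  have hwP : (∫ t in x..y, (6*t - 4*x - 2*y) * ((y - t) * f x + (t - x) * f y))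
      = (y-x)^2 * ((y-x) * f y) := by
    rw [show (fun t => (6*t - 4*x - 2*y) * ((y - t) * f x + (t - x) * f y))
        = fun t => (6*(f y - f x))*t^2 + (6*(f x*y - f y*x) - (4*x+2*y)*(f y - f x))*t
            + (-((4*x+2*y)*(f x*y - f y*x))) from funext fun t => by ring]
    rw [integral_quad]; ring
  -- split the LHS integral
  have hsplit : (∫ t in x..y, (y - m) * ((6*t - 4*x - 2*y) * g t))
      = (y - m) * ((y-x) * (∫ t in x..y, (6*t - 4*x - 2*y) * f t)
          - (∫ t in x..y, (6*t - 4*x - 2*y) * ((y - t) * f x + (t - x) * f y))) := by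
    have ia : IntervalIntegrable (fun t => (6*t - 4*x - 2*y) * f t) volume x y := by
      apply ContinuousOn.intervalIntegrable
      rw [Set.uIcc_of_le hxy.le]
      exact (by fun_prop : ContinuousOn (fun t : ℝ => 6*t - 4*x - 2*y) (Set.Icc x y)).mul hcont
    have ib : IntervalIntegrable (fun t => (6*t - 4*x - 2*y) * ((y - t) * f x + (t - x) * f y)) volume x y := by
      apply Continuous.intervalIntegrable; fun_prop
    rw [mul_sub, ← mul_assoc, ← intervalIntegral.integral_const_mul, ← intervalIntegral.integral_const_mul,
      ← intervalIntegral.integral_sub ((ia.const_mul _)) ((ib.const_mul _))]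
    congr 1; funext t; simp only [hg]; ring
  rw [hsplit, hwf, hwP, hR] at hmono
  have hym : (0:ℝ) < y - m := by linarith
  have h6 : (y-x) * (4*(y-x)*F y + 2*(y-x)*F x - 6*(Φ y - Φ x)) - (y-x)^2 * ((y-x)*f y) ≤ 0 := by
    nlinarith [hmono, hym]
  have key : (4 * F y + 2 * F x) / (y - x) - 6 * (Φ y - Φ x) / (y - x) ^ 2
      = (4*(y-x)*F y + 2*(y-x)*F x - 6*(Φ y - Φ x)) / (y-x)^2 := by
    field_simp
  rw [key, div_le_iff₀ (by positivity : (0:ℝ) < (y-x)^2)]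
  nlinarith [h6, hyx]

lemma key1 (x y : ℝ) (hxy : x < y)
    (f F Φ : ℝ → ℝ)
    (hconv : ConvexOn ℝ (Set.Icc x y) f)
    (hcont : ContinuousOn f (Set.Icc x y))
    (hF : ∀ t ∈ Set.Icc x y, HasDerivAt F (f t) t)
    (hΦ : ∀ t ∈ Set.Icc x y, HasDerivAt Φ (F t) t) :
    ((-2) * F y + (-4) * F x) / (y - x) - (-6) * (Φ y - Φ x) / (y - x) ^ 2 ≤ f x := by
  have hmem : ∀ a : ℝ, a ∈ Set.Icc (-y) (-x) → -a ∈ Set.Icc x y := by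
    intro a ha
    exact ⟨by linarith [ha.2], by linarith [ha.1]⟩
  have hconv' : ConvexOn ℝ (Set.Icc (-y) (-x)) (fun t => f (-t)) := by
    refine ⟨convex_Icc _ _, ?_⟩
    intro a ha b hb p q hp hq hpq
    simp only [smul_eq_mul]
    have := hconv.2 (hmem a ha) (hmem b hb) hp hq hpq
    simp only [smul_eq_mul] at this
    have harg : p * -a + q * -b = -(p*a + q*b) := by ring
    rw [harg] at this
    exact this
  have hcont' : ContinuousOn (fun t => f (-t)) (Set.Icc (-y) (-x)) :=
    hcont.comp continuous_neg.continuousOn hmem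
  have hF' : ∀ t ∈ Set.Icc (-y) (-x), HasDerivAt (fun t => -F (-t)) ((fun t => f (-t)) t) t := by
    intro t ht
    have h1 := ((hF (-t) (hmem t ht)).comp t (hasDerivAt_neg t)).neg
    simpa [Function.comp_def, Pi.neg_def] using h1
  have hΦ' : ∀ t ∈ Set.Icc (-y) (-x), HasDerivAt (fun t => Φ (-t)) ((fun t => -F (-t)) t) t := by
    intro t ht
    have h1 := (hΦ (-t) (hmem t ht)).comp t (hasDerivAt_neg t)
    simpa [Function.comp_def] using h1
  have h := key0 (-y) (-x) (by linarith) (fun t => f (-t)) (fun t => -F (-t)) (fun t => Φ (-t))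
    hconv' hcont' hF' hΦ'
  simp only [neg_neg] at h
  have e1 : -x - -y = y - x := by ring
  rw [e1] at h
  have e2 : ((-2) * F y + (-4) * F x) / (y - x) - (-6) * (Φ y - Φ x) / (y - x) ^ 2
      = (4 * -F x + 2 * -F y) / (y - x) - 6 * (Φ x - Φ y) / (y - x) ^ 2 := by ring
  rw [e2]
  exact h

theorem S2_le_endpoints (x y : ℝ) (hxy : x < y) (α : ℝ)
    (hα : α ∈ Set.Icc (0 : ℝ) 1)
    (f F Φ : ℝ → ℝ)
    (hconv : ConvexOn ℝ (Set.Icc x y) f)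
    (hcont : ContinuousOn f (Set.Icc x y))
    (hF : ∀ t ∈ Set.Icc x y, HasDerivAt F (f t) t)
    (hΦ : ∀ t ∈ Set.Icc x y, HasDerivAt Φ (F t) t) :
    ((4 - 6 * α) * F y + (2 - 6 * α) * F x) / (y - x)
      - (6 - 12 * α) * (Φ y - Φ x) / (y - x) ^ 2
      ≤ α * f x + (1 - α) * f y := by
  have e0 := key0 x y hxy f F Φ hconv hcont hF hΦ
  have e1 := key1 x y hxy f F Φ hconv hcont hF hΦ
  have h0 : 0 ≤ α := hα.1
  have h1 : 0 ≤ 1 - α := by linarith [hα.2]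
  have hid : ((4 - 6 * α) * F y + (2 - 6 * α) * F x) / (y - x)
      - (6 - 12 * α) * (Φ y - Φ x) / (y - x) ^ 2
      = α * (((-2) * F y + (-4) * F x) / (y - x) - (-6) * (Φ y - Φ x) / (y - x) ^ 2)
        + (1 - α) * ((4 * F y + 2 * F x) / (y - x) - 6 * (Φ y - Φ x) / (y - x) ^ 2) := by
    ring
  rw [hid]
  have := add_le_add (mul_le_mul_of_nonneg_left e1 h0) (mul_le_mul_of_nonneg_left e0 h1)
  linarith
end

section
/- For every α ∈ [1/3, 2/3] and every function f : ℝ → ℝ convex and continuous on [x, y] (with F' = f and Φ' = F on [x, y]), one has S²_α f(x,y) ≥ f(αx + (1-α)y). -/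
theorem S2_ge_point (x y : ℝ) (hxy : x < y) (α : ℝ)
    (hα : α ∈ Set.Icc (1 / 3 : ℝ) (2 / 3))
    (f F Φ : ℝ → ℝ)
    (hconv : ConvexOn ℝ (Set.Icc x y) f)
    (hcont : ContinuousOn f (Set.Icc x y))
    (hF : ∀ t ∈ Set.Icc x y, HasDerivAt F (f t) t)
    (hΦ : ∀ t ∈ Set.Icc x y, HasDerivAt Φ (F t) t) :
    ((4 - 6 * α) * F y + (2 - 6 * α) * F x) / (y - x)
      - (6 - 12 * α) * (Φ y - Φ x) / (y - x) ^ 2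
      ≥ f (α * x + (1 - α) * y) := by
  obtain ⟨hα1, hα2⟩ := hα
  set c : ℝ := α * x + (1 - α) * y with hc
  have hh : (0:ℝ) < y - x := by linarith
  have hcx : x < c := by nlinarith
  have hcy : c < y := by nlinarith
  have hcmem : c ∈ Set.Icc x y := ⟨hcx.le, hcy.le⟩
  -- supporting line slope k at c
  set T : Set ℝ := (fun s => (f s - f c) / (s - c)) '' Set.Ioc c y with hT
  have hTne : T.Nonempty := ⟨(f y - f c) / (y - c), y, ⟨hcy, le_refl y⟩, rfl⟩
  have hTbdd : BddBelow T := by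
    refine ⟨(f c - f x) / (c - x), ?_⟩
    rintro r ⟨s, hs, rfl⟩
    exact hconv.slope_mono_adjacent ⟨le_refl x, hxy.le⟩ ⟨(hcx.trans hs.1).le, hs.2⟩ hcx hs.1
  set k : ℝ := sInf T with hk
  have hsupp : ∀ s ∈ Set.Icc x y, f c + k * (s - c) ≤ f s := by
    intro s hs
    rcases lt_trichotomy s c with hsc | hsc | hsc
    · have hlb : (f c - f s) / (c - s) ≤ k := by
        apply le_csInf hTne
        rintro r ⟨t, ht, rfl⟩
        exact hconv.slope_mono_adjacent hs ⟨(hcx.trans ht.1).le, ht.2⟩ hsc ht.1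
      have h1 : 0 < c - s := by linarith
      have := (div_le_iff₀ h1).mp hlb
      nlinarith
    · simp [hsc]
    · have hub : k ≤ (f s - f c) / (s - c) :=
        csInf_le hTbdd ⟨s, ⟨hsc, hs.2⟩, rfl⟩
      have h1 : 0 < s - c := by linarith
      have := (le_div_iff₀ h1).mp hub
      nlinarith
  -- weight W t = A + B t
  set A : ℝ := (4 - 6*α)/(y-x) - (6 - 12*α)*y/(y-x)^2 with hA
  set B : ℝ := (6 - 12*α)/(y-x)^2 with hB
  set p0 : ℝ := A*(f c - k*c) with hp0
  set p1 : ℝ := A*k + B*(f c - k*c) with hp1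
  set p2 : ℝ := B*k with hp2
  set G : ℝ → ℝ := fun t => (A + B*t)*F t - B*Φ t - (p0*t + p1/2*t^2 + p2/3*t^3) with hG
  have hGd : ∀ t ∈ Set.Icc x y,
      HasDerivAt G ((A + B*t)*(f t - (f c + k*(t - c)))) t := by
    intro t ht
    have h1 : HasDerivAt (fun u : ℝ => (A + B*u)*F u) (B*1*F t + (A + B*t)*f t) t :=
      (((hasDerivAt_id t).const_mul B).const_add A).mul (hF t ht)
    have h2 : HasDerivAt (fun u : ℝ => B*Φ u) (B*F t) t := (hΦ t ht).const_mul B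
    have h3 : HasDerivAt (fun u : ℝ => p0*u + p1/2*u^2 + p2/3*u^3)
        (p0*1 + p1/2*(↑2*t^1) + p2/3*(↑3*t^2)) t :=
      (((hasDerivAt_id t).const_mul p0).add ((hasDerivAt_pow 2 t).const_mul (p1/2))).add
        ((hasDerivAt_pow 3 t).const_mul (p2/3))
    have hcomb := (h1.sub h2).sub h3
    have heq : B*1*F t + (A + B*t)*f t - B*F t - (p0*1 + p1/2*(↑2*t^1) + p2/3*(↑3*t^2))
        = (A + B*t)*(f t - (f c + k*(t - c))) := by
      simp only [hp0, hp1, hp2]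
      push_cast
      ring
    exact heq ▸ hcomb
  have hWnn : ∀ t ∈ Set.Icc x y, 0 ≤ A + B*t := by
    intro t ht
    have hrw : A + B*t = ((6*α-2)*(y-t) + (4-6*α)*(t-x))/(y-x)^2 := by
      rw [hA, hB]; field_simp; ring
    rw [hrw]
    apply div_nonneg _ (by positivity)
    have h1 : 0 ≤ (6*α-2)*(y-t) := mul_nonneg (by linarith) (by linarith [ht.2])
    have h2 : 0 ≤ (4-6*α)*(t-x) := mul_nonneg (by linarith) (by linarith [ht.1])
    linarith
  have hint : IntervalIntegrable (fun t => (A + B*t)*(f t - (f c + k*(t - c)))) MeasureTheory.volume x y := by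
    apply ContinuousOn.intervalIntegrable
    rw [Set.uIcc_of_le hxy.le]
    exact (continuousOn_const.add (continuousOn_const.mul continuousOn_id)).mul
      (hcont.sub (continuousOn_const.add (continuousOn_const.mul
        (continuousOn_id.sub continuousOn_const))))
  have key : ∫ t in x..y, (A + B*t)*(f t - (f c + k*(t - c))) = G y - G x :=
    intervalIntegral.integral_eq_sub_of_hasDerivAt
      (fun t ht => hGd t (by rwa [Set.uIcc_of_le hxy.le] at ht)) hint
  have hnn : 0 ≤ ∫ t in x..y, (A + B*t)*(f t - (f c + k*(t - c))) := by
    apply intervalIntegral.integral_nonneg hxy.le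
    intro t ht
    exact mul_nonneg (hWnn t ht) (by linarith [hsupp t ht])
  have hGnn : 0 ≤ G y - G x := key ▸ hnn
  rw [ge_iff_le, ← sub_nonneg]
  have hfin : ((4 - 6 * α) * F y + (2 - 6 * α) * F x) / (y - x)
      - (6 - 12 * α) * (Φ y - Φ x) / (y - x) ^ 2 - f c = G y - G x := by
    rw [hG]
    simp only [hp0, hp1, hp2, hA, hB, hc]
    field_simp
    ring
  rw [hfin]
  exact hGnn
end
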